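/- arXiv:1712.00831 — 12 statements merged into one kernel-verified Lean document; each statement's English description precedes it below -/
import Mathlib

section
/- Let G be a graph on n vertices and let k ≥ 3 and r be integers. Suppose that for every partition of V(G) into k parts U_1, …, U_k, the number of cycles u_1, …, u_k, u_1 with u_i ∈ U_i for all i is at most r. Then the number of (unlabeled) copies of the k-cycle C_k in G is at most (1/2)·k^(k-1)·r. -/
/-!
Count labelled copies of `C_k`, i.e. injective homomorphisms `c : C_k → G`. Each unlabelled copy
yields at least `2k` of them, one for each of the `k` rotations and `k` reflections of `C_k`.
On the other hand, a labelled copy `c` is colourful for exactly `k ^ (n - k)` of the colourings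
`f : V → Fin k`, namely those with `f ∘ c = id`, and for each colouring the colourful labelled
copies are among the cycles counted by `cCount` for the partition into colour classes, so there
are at most `r` of them. Double counting pairs `(c, f)` over all `k ^ n` colourings gives at
most `k ^ k * r` labelled copies.
-/

open SimpleGraph

/-- Number of unlabeled copies of `H` in `G`, i.e. the number of subgraphs of `G`
whose coercion is isomorphic to `H`. -/
noncomputable def copyCount {α β : Type*} (H : SimpleGraph α) (G : SimpleGraph β) : ℕ :=
  Nat.card {G' : G.Subgraph // Nonempty (H ≃g G'.coe)}

/-- `G` contains no cycle of length `m`. -/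
def CycleFree {V : Type*} (G : SimpleGraph V) (m : ℕ) : Prop :=
  ∀ ⦃v : V⦄ (w : G.Walk v v), w.IsCycle → w.length ≠ m

/-- The number of `(U 0, …, U (k-1))`-cycles in `G`. -/
noncomputable def cCount {V : Type*} (G : SimpleGraph V) {k : ℕ} (U : Fin k → Set V) : ℕ :=
  Nat.card {u : Fin k → V // (∀ i, u i ∈ U i) ∧ ∀ i : Fin k, G.Adj (u i) (u ⟨(i.val + 1) % k, Nat.mod_lt _ i.pos⟩)}

/-- The number of `(U 0, …, U (k-1))`-paths in `G`. -/
noncomputable def pCount {V : Type*} (G : SimpleGraph V) {k : ℕ} (U : Fin k → Set V) : ℕ :=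
  Nat.card {u : Fin k → V // (∀ i, u i ∈ U i) ∧
    ∀ (i : ℕ) (h : i + 1 < k), G.Adj (u ⟨i, Nat.lt_of_succ_lt h⟩) (u ⟨i + 1, h⟩)}

/-- The number of edges of `G` between the disjoint sets `X` and `Y`. -/
noncomputable def eCount {V : Type*} (G : SimpleGraph V) (X Y : Set V) : ℕ :=
  Nat.card {p : V × V // p.1 ∈ X ∧ p.2 ∈ Y ∧ G.Adj p.1 p.2}

/-- The neighbourhood of `v` inside the set `Y`. -/
def nbhdIn {V : Type*} (G : SimpleGraph V) (v : V) (Y : Set V) : Set V :=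
  {y ∈ Y | G.Adj v y}

/-- The independence number of a finite graph. -/
noncomputable def indepNum {W : Type*} [Fintype W] (G : SimpleGraph W) : ℕ :=
  sSup {m | ∃ s : Finset W, (∀ a ∈ s, ∀ b ∈ s, ¬ G.Adj a b) ∧ s.card = m}

open Finset Function

lemma card_leftInverse_eq {ι V : Type*} [Fintype ι] [Fintype V] {u : ι → V} (hu : Injective u) :
    Nat.card {f : V → ι // LeftInverse f u} =
      Fintype.card ι ^ (Fintype.card V - Fintype.card ι) := by
  classical
  let S : V → Finset ι := fun v =>
    if h : v ∈ Set.range u then {(Equiv.ofInjective u hu).symm ⟨v, h⟩} else univ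
  have hS : ∀ f : V → ι, LeftInverse f u ↔ f ∈ Fintype.piFinset S := by
    intro f
    rw [Fintype.mem_piFinset]
    refine ⟨fun hf v => ?_, fun hf i => by simpa [S] using hf (u i)⟩
    by_cases hv : v ∈ Set.range u
    · obtain ⟨i, rfl⟩ := hv
      simp [S, hf i]
    · simp only [S, dif_neg hv, mem_univ]
  have hcard : ∀ v, #(S v) = if v ∈ Set.range u then 1 else Fintype.card ι := by
    intro v
    by_cases hv : v ∈ Set.range u
    · simp only [S, dif_pos hv, if_pos hv, card_singleton]
    · simp only [S, dif_neg hv, if_neg hv, card_univ]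
  have hcompl : #{v | v ∉ Set.range u} = Fintype.card V - Fintype.card ι := by
    rw [filter_not, card_sdiff_of_subset (filter_subset _ _), card_univ,
      ← card_univ (α := ι), ← card_image_of_injective univ hu]
    congr 2; ext; simp
  rw [Nat.card_eq_fintype_card, Fintype.card_subtype, filter_congr (fun f _ => hS f),
    filter_mem_eq_inter, univ_inter, Fintype.card_piFinset]
  simp only [hcard, prod_ite, prod_const_one, one_mul, prod_const, hcompl]

namespace SimpleGraph

section Copy

variable {ι V : Type*} {H : SimpleGraph ι} {G : SimpleGraph V}

instance [Finite ι] [Finite V] : Finite (H.Copy G) :=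
  Finite.of_injective _ DFunLike.coe_injective

instance [Finite ι] [Finite V] : Finite (H ≃g G) :=
  Finite.of_injective _ DFunLike.coe_injective

lemma Subgraph.toSubgraph_coeCopy_comp (G' : G.Subgraph) (e : H ≃g G'.coe) :
    (G'.coeCopy.comp e.toCopy).toSubgraph = G' := by
  simp [Copy.toSubgraph, Subgraph.coeCopy, Copy.comp, Subgraph.map_comp]

lemma copyCount_mul_card_iso_le_card_copy [Finite ι] [Finite V] :
    _root_.copyCount H G * Nat.card (H ≃g H) ≤ Nat.card (H.Copy G) := by
  rw [_root_.copyCount, ← Nat.card_prod]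
  refine Nat.card_le_card_of_injective
    (fun p => p.1.1.coeCopy.comp (Iso.toCopy (p.2.trans (Classical.choice p.1.2)))) ?_
  rintro ⟨⟨G₁, h₁⟩, σ₁⟩ ⟨⟨G₂, h₂⟩, σ₂⟩ heq
  obtain rfl : G₁ = G₂ := by
    rw [← G₁.toSubgraph_coeCopy_comp (σ₁.trans (Classical.choice h₁)),
      ← G₂.toSubgraph_coeCopy_comp (σ₂.trans (Classical.choice h₂))]
    exact congrArg Copy.toSubgraph heq
  refine Prod.ext rfl (RelIso.ext fun i => ?_)
  exact (Classical.choice h₁).injective (G₁.coeCopy.injective (congrArg (· i) heq))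

lemma card_copy_mul_pow_eq_sum [Fintype ι] [Fintype V] [DecidableEq V] :
    Nat.card (H.Copy G) * Fintype.card ι ^ (Fintype.card V - Fintype.card ι) =
      ∑ f : V → ι, Nat.card {c : H.Copy G // LeftInverse f c} := by
  classical
  have : Fintype (H.Copy G) := Fintype.ofFinite _
  calc Nat.card (H.Copy G) * Fintype.card ι ^ (Fintype.card V - Fintype.card ι)
      = ∑ c : H.Copy G, #{f : V → ι | LeftInverse f c} := by
        rw [Nat.card_eq_fintype_card, ← card_univ, ← smul_eq_mul, ← sum_const]
        refine sum_congr rfl fun c _ => ?_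
        rw [← card_leftInverse_eq c.injective, Nat.card_eq_fintype_card, Fintype.card_subtype,
          Copy.coe_toHom]
    _ = ∑ f : V → ι, #{c : H.Copy G | LeftInverse f c} :=
        sum_card_bipartiteAbove_eq_sum_card_bipartiteBelow (s := univ) (t := univ)
          (fun (c : H.Copy G) (f : V → ι) => LeftInverse f c)
    _ = ∑ f : V → ι, Nat.card {c : H.Copy G // LeftInverse f c} := by
        simp only [Nat.card_eq_fintype_card, Fintype.card_subtype]

end Copy

section Cycle

variable {k : ℕ}

lemma _root_.Fin.val_one_of_one_lt [NeZero k] (hk : 1 < k) : ((1 : Fin k) : ℕ) = 1 := by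
  rw [Fin.val_one', Nat.mod_eq_of_lt (by omega)]

def cycleGraph.rotate [NeZero k] (a : Fin k) : cycleGraph k ≃g cycleGraph k :=
  ⟨Equiv.addLeft a, by simp [cycleGraph_adj']⟩

def cycleGraph.reflect [NeZero k] (a : Fin k) : cycleGraph k ≃g cycleGraph k :=
  ⟨Equiv.subLeft a, by simp [cycleGraph_adj', or_comm]⟩

lemma two_mul_le_card_iso_cycleGraph (hk : 3 ≤ k) :
    2 * k ≤ Nat.card (cycleGraph k ≃g cycleGraph k) := by
  have : NeZero k := ⟨by omega⟩
  have hinj : Injective (Sum.elim (cycleGraph.rotate (k := k)) cycleGraph.reflect) := by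
    refine Injective.sumElim ?_ ?_ fun a b hab => ?_
    · intro a b hab; simpa [cycleGraph.rotate] using congrArg (· 0) hab
    · intro a b hab; simpa [cycleGraph.reflect] using congrArg (· 0) hab
    · obtain rfl : a = b := by
        simpa [cycleGraph.rotate, cycleGraph.reflect] using congrArg (· 0) hab
      have hab₁ : a + 1 = a - 1 := congrArg (· 1) hab
      have htwo : (1 + 1 : Fin k) = 0 :=
        calc (1 + 1 : Fin k) = (a + 1) - (a - 1) := by abel
          _ = 0 := by rw [hab₁, sub_self]
      have htwo_val := congrArg Fin.val htwo
      rw [Fin.val_add, Fin.val_one_of_one_lt (by omega)] at htwo_val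
      simp [Nat.mod_eq_of_lt (show 2 < k by omega)] at htwo_val
  simpa [two_mul] using Nat.card_le_card_of_injective _ hinj

lemma cycleGraph_adj_succ_mod (hk : 2 ≤ k) (i : Fin k) :
    (cycleGraph k).Adj i ⟨(i + 1) % k, Nat.mod_lt _ i.pos⟩ := by
  have : NeZero k := ⟨by omega⟩
  have hsucc : (⟨(i + 1) % k, Nat.mod_lt _ i.pos⟩ : Fin k) = i + 1 := by
    ext; rw [Fin.val_add, Fin.val_one_of_one_lt hk]
  rw [cycleGraph_adj', hsucc, add_sub_cancel_left, Fin.val_one_of_one_lt hk]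
  exact Or.inr rfl

variable {V : Type*} {G : SimpleGraph V}

lemma card_copy_cycleGraph_leftInverse_le_cCount [Finite V] (hk : 2 ≤ k) (f : V → Fin k) :
    Nat.card {c : (cycleGraph k).Copy G // LeftInverse f c} ≤ cCount G (fun i => f ⁻¹' {i}) :=
  Nat.card_le_card_of_injective
    (fun c => ⟨c.1, fun i => c.2 i, fun i => c.1.toHom.map_adj (cycleGraph_adj_succ_mod hk i)⟩)
    fun _ _ h => Subtype.ext (DFunLike.coe_injective (congrArg Subtype.val h))

lemma card_copy_cycleGraph_le [Fintype V] {r : ℕ} (hk : 2 ≤ k)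
    (h : ∀ f : V → Fin k, cCount G (fun i => f ⁻¹' {i}) ≤ r) :
    Nat.card ((cycleGraph k).Copy G) ≤ k ^ k * r := by
  classical
  by_cases hkV : k ≤ Fintype.card V
  · have hsum := card_copy_mul_pow_eq_sum (H := cycleGraph k) (G := G)
    rw [Fintype.card_fin] at hsum
    refine Nat.le_of_mul_le_mul_right ?_ (pow_pos (by omega : 0 < k) (Fintype.card V - k))
    calc Nat.card ((cycleGraph k).Copy G) * k ^ (Fintype.card V - k)
        = ∑ f : V → Fin k, Nat.card {c : (cycleGraph k).Copy G // LeftInverse f c} := hsum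
      _ ≤ ∑ _f : V → Fin k, r := sum_le_sum fun f _ =>
          (card_copy_cycleGraph_leftInverse_le_cCount hk f).trans (h f)
      _ = k ^ k * r * k ^ (Fintype.card V - k) := by
          rw [sum_const, card_univ, Fintype.card_fun, Fintype.card_fin, smul_eq_mul,
            mul_right_comm, ← pow_add, Nat.add_sub_cancel' hkV]
  · have : IsEmpty ((cycleGraph k).Copy G) :=
      ⟨fun c => hkV (by simpa using Fintype.card_le_of_injective c c.injective)⟩
    simp

end Cycle

end SimpleGraph

theorem stmt0 {V : Type*} [Fintype V] (G : SimpleGraph V) (k r : ℕ) (hk : 3 ≤ k)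
    (h : ∀ U : Fin k → Set V,
      (∀ i j, i ≠ j → Disjoint (U i) (U j)) → (⋃ i, U i) = Set.univ →
      cCount G U ≤ r) :
    2 * _root_.copyCount (cycleGraph k) G ≤ k ^ (k - 1) * r := by
  have hcolouring : ∀ f : V → Fin k, cCount G (fun i => f ⁻¹' {i}) ≤ r := fun f =>
    h _ (fun i j hij => (Set.disjoint_singleton.2 hij).preimage f)
      (Set.iUnion_eq_univ_iff.2 fun v => ⟨f v, rfl⟩)
  have hcopies := copyCount_mul_card_iso_le_card_copy (H := cycleGraph k) (G := G)
  have haut := two_mul_le_card_iso_cycleGraph hk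
  have hlabelled := card_copy_cycleGraph_le (by omega) hcolouring
  refine Nat.le_of_mul_le_mul_right ?_ (by omega : 0 < k)
  calc 2 * _root_.copyCount (cycleGraph k) G * k
      = _root_.copyCount (cycleGraph k) G * (2 * k) := by ring
    _ ≤ _root_.copyCount (cycleGraph k) G * Nat.card (cycleGraph k ≃g cycleGraph k) :=
        Nat.mul_le_mul_left _ haut
    _ ≤ k ^ k * r := hcopies.trans hlabelled
    _ = k ^ (k - 1) * r * k := by
        rw [mul_right_comm, ← pow_succ, Nat.sub_add_cancel (by omega)]
end

section
/- Let J be a non-empty independent set of the cycle C_{2k+1} with vertices 1,…,2k+1 (edges {1,2},…,{2k,2k+1},{2k+1,1}). Then there exists an independent set I of C_{2k+1} containing J with the following property: if i_1,…,i_r are the elements of I in cyclic order, then for every j, the cyclic distance i_{j+1} − i_j (mod 2k+1) is either 2 or 3, and whenever this distance is 3, at least one of i_j, i_{j+1} belongs to J. -/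
open SimpleGraph

/-!
Let `d i` be the number of forward steps from `i` to the next vertex of `J`. Away from `J`,
`d` drops by one per step, so taking every vertex with `d` even and not directly after a vertex
of `J` fills each gap between consecutive vertices `a < b` of `J` with `b - 2, b - 4, …`, stopping
before `a + 1`. Consecutive chosen vertices are then two apart, except once per gap, right after
`a`, where the distance may be three.
-/

namespace ZMod

variable {n : ℕ} {J : Set (ZMod n)} {i : ZMod n}

/-- Junk value `0` when `J` is empty. -/
noncomputable def distToSet (J : Set (ZMod n)) (i : ZMod n) : ℕ :=
  sInf {t : ℕ | i + t ∈ J}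

def fillGaps (J : Set (ZMod n)) : Set (ZMod n) :=
  J ∪ {i | Even (distToSet J i) ∧ i - 1 ∉ J}

lemma even_distToSet_of_mem_fillGaps (hi : i ∈ fillGaps J) (hiJ : i ∉ J) :
    Even (distToSet J i) :=
  (hi.resolve_left hiJ).1

variable [NeZero n]

lemma exists_add_natCast_mem (hJ : J.Nonempty) (i : ZMod n) : ∃ t : ℕ, i + t ∈ J := by
  obtain ⟨j, hj⟩ := hJ
  exact ⟨(j - i).val, by rwa [natCast_zmod_val, add_sub_cancel]⟩

lemma add_distToSet_mem (hJ : J.Nonempty) (i : ZMod n) : i + (distToSet J i : ZMod n) ∈ J :=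
  Nat.sInf_mem (exists_add_natCast_mem hJ i)

lemma distToSet_eq_zero_iff (hJ : J.Nonempty) : distToSet J i = 0 ↔ i ∈ J := by
  refine ⟨fun h => by simpa [h] using add_distToSet_mem hJ i, fun h => ?_⟩
  exact Nat.sInf_eq_zero.mpr (Or.inl (by simpa using h))

lemma distToSet_eq_add_one (hJ : J.Nonempty) (hi : i ∉ J) :
    distToSet J i = distToSet J (i + 1) + 1 := by
  have hpos : distToSet J i ≠ 0 := fun h => hi ((distToSet_eq_zero_iff hJ).mp h)
  apply le_antisymm
  · refine Nat.sInf_le (?_ : i + ((distToSet J (i + 1) + 1 : ℕ) : ZMod n) ∈ J)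
    rw [Nat.cast_succ, ← add_assoc, add_right_comm]
    exact add_distToSet_mem hJ (i + 1)
  · suffices distToSet J (i + 1) ≤ distToSet J i - 1 by omega
    refine Nat.sInf_le (?_ : i + 1 + ((distToSet J i - 1 : ℕ) : ZMod n) ∈ J)
    rw [Nat.cast_sub (Nat.one_le_iff_ne_zero.mpr hpos), Nat.cast_one, add_add_sub_cancel]
    exact add_distToSet_mem hJ i

variable (hJ : J.Nonempty) (hJind : ∀ i ∈ J, i + 1 ∉ J)
include hJ hJind

lemma add_one_notMem_of_mem_fillGaps (hi : i ∈ fillGaps J) : i + 1 ∉ J := by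
  by_cases hiJ : i ∈ J
  · exact hJind i hiJ
  intro h
  have heven := even_distToSet_of_mem_fillGaps hi hiJ
  rw [distToSet_eq_add_one hJ hiJ, (distToSet_eq_zero_iff hJ).mpr h] at heven
  exact Nat.not_even_one heven

lemma add_one_notMem_fillGaps (hi : i ∈ fillGaps J) : i + 1 ∉ fillGaps J := by
  rintro (h | ⟨heven₁, hiJ⟩)
  · exact add_one_notMem_of_mem_fillGaps hJ hJind hi h
  rw [add_sub_cancel_right] at hiJ
  have heven := even_distToSet_of_mem_fillGaps hi hiJ
  rw [distToSet_eq_add_one hJ hiJ, Nat.even_add_one] at heven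
  exact heven heven₁

lemma add_two_mem_or_add_three_mem_fillGaps (hi : i ∈ fillGaps J) :
    i + 2 ∈ fillGaps J ∨ (i + 3 ∈ fillGaps J ∧ (i ∈ J ∨ i + 3 ∈ J)) := by
  have h1 := add_one_notMem_of_mem_fillGaps hJ hJind hi
  by_cases h2 : i + 2 ∈ J
  · exact Or.inl (Or.inl h2)
  by_cases heven₂ : Even (distToSet J (i + 2))
  · exact Or.inl (Or.inr ⟨heven₂, by rwa [← one_add_one_eq_two, ← add_assoc, add_sub_cancel_right]⟩)
  by_cases h3 : i + 3 ∈ J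
  · exact Or.inr ⟨Or.inl h3, Or.inr h3⟩
  have hd2 := distToSet_eq_add_one hJ h2
  rw [add_assoc, two_add_one_eq_three] at hd2
  have heven₃ : Even (distToSet J (i + 3)) := by
    rwa [hd2, Nat.even_add_one, not_not] at heven₂
  refine Or.inr ⟨Or.inr ⟨heven₃, by rwa [← two_add_one_eq_three, ← add_assoc, add_sub_cancel_right]⟩,
    Or.inl ?_⟩
  by_contra hiJ
  have heven := even_distToSet_of_mem_fillGaps hi hiJ
  have hd1 := distToSet_eq_add_one hJ h1
  rw [add_assoc, one_add_one_eq_two] at hd1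
  rw [distToSet_eq_add_one hJ hiJ, hd1, Nat.even_add_one, Nat.even_add_one, not_not] at heven
  exact heven₂ heven

end ZMod

theorem stmt2_general (k : ℕ) (J : Set (ZMod (2 * k + 1))) (hJne : J.Nonempty)
    (hJind : ∀ i ∈ J, i + 1 ∉ J) :
    ∃ I : Set (ZMod (2 * k + 1)), J ⊆ I ∧ (∀ i ∈ I, i + 1 ∉ I) ∧
      ∀ i ∈ I, (i + 2 ∈ I ∨ i + 3 ∈ I) ∧
        ((i + 2 ∉ I ∧ i + 3 ∈ I) → (i ∈ J ∨ i + 3 ∈ J)) := by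
  refine ⟨ZMod.fillGaps J, Set.subset_union_left,
    fun i hi => ZMod.add_one_notMem_fillGaps hJne hJind hi, fun i hi => ?_⟩
  rcases ZMod.add_two_mem_or_add_three_mem_fillGaps hJne hJind hi with h2 | ⟨h3, hJ3⟩
  · exact ⟨Or.inl h2, fun h => absurd h2 h.1⟩
  · exact ⟨Or.inr h3, fun _ => hJ3⟩

theorem stmt2 (k : ℕ) (hk : 2 ≤ k) (J : Set (ZMod (2 * k + 1))) (hJne : J.Nonempty)
    (hJind : ∀ i ∈ J, i + 1 ∉ J) :
    ∃ I : Set (ZMod (2 * k + 1)), J ⊆ I ∧ (∀ i ∈ I, i + 1 ∉ I) ∧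
      ∀ i ∈ I, (i + 2 ∈ I ∨ i + 3 ∈ I) ∧
        ((i + 2 ∉ I ∧ i + 3 ∈ I) → (i ∈ J ∨ i + 3 ∈ J)) :=
  stmt2_general k J hJne hJind
end

section
/- Let s ≥ 2 and λ ≥ 1, let G be an n-vertex graph, and let U_1,…,U_s ⊆ V(G) be pairwise disjoint sets such that e(U_1,U_2) ≤ λ(|U_1|+|U_2|), and for every 1 ≤ i ≤ s−2 and every u_i ∈ U_i we have e(N_{U_{i+1}}(u_i), U_{i+2}) ≤ λ(|N_{U_{i+1}}(u_i)| + |U_{i+2}|). Then the number p(U_1,…,U_s) of paths u_1,…,u_s with u_j ∈ U_j for all j satisfies: p(U_1,…,U_s) ≤ λ^{(s-1)/2} n^{(s-3)/2} (|U_1||U_s| + λn) if s is odd, and p(U_1,…,U_s) ≤ λ^{s/2} n^{s/2 - 1} (|U_1| + |U_2|) if s is even. -/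
open SimpleGraph

/-!
Fixing the first two vertices `u₀ ∈ U 0` and `u₁ ∈ N_{U 1}(u₀)` of a path leaves the paths of the
system `(N_{U 2}(u₁), U 3, …)`, which is two shorter and satisfies the same hypotheses; so the
bound follows by induction on the length in steps of two. Summing the inductive bound over `u₁`
costs one application of the hypothesis on `e(N_{U 1}(u₀), U 2)`, summing over `u₀` turns
`∑ |N_{U 1}(u₀)|` into `e(U 0, U 1) ≤ min(|U 0| |U 1|, λ (|U 0| + |U 1|))`, and disjointness bounds
sums of two or three of the `|U i|` by `n`.
-/

open scoped Classical Function

namespace PathCounting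

variable {V : Type*} (G : SimpleGraph V)

section Counting

lemma eCount_eq_sum_ncard_nbhdIn [Fintype V] (X Y : Set V) :
    eCount G X Y = ∑ x : X, (nbhdIn G x Y).ncard := by
  let e : {p : V × V // p.1 ∈ X ∧ p.2 ∈ Y ∧ G.Adj p.1 p.2} ≃ Σ x : X, nbhdIn G x Y :=
    { toFun := fun p => ⟨⟨p.1.1, p.2.1⟩, p.1.2, p.2.2⟩
      invFun := fun q => ⟨(q.1, q.2), q.1.2, q.2.2⟩
      left_inv := fun _ => rfl
      right_inv := fun _ => rfl }
  simp only [eCount, Nat.card_congr e, Nat.card_sigma, Nat.card_coe_set_eq]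

lemma eCount_le_ncard_mul_ncard [Fintype V] (X Y : Set V) :
    eCount G X Y ≤ X.ncard * Y.ncard := by
  rw [eCount_eq_sum_ncard_nbhdIn, ← Nat.card_coe_set_eq X, Nat.card_eq_fintype_card,
    ← smul_eq_mul, ← Finset.card_univ, ← Finset.sum_const]
  exact Finset.sum_le_sum fun x _ => Set.ncard_le_ncard (Set.sep_subset _ _)

variable {G} in
lemma ncard_add_ncard_le [Fintype V] {X Y : Set V} (h : Disjoint X Y) :
    X.ncard + Y.ncard ≤ Fintype.card V := by
  rw [← Set.ncard_union_eq h, ← Nat.card_eq_fintype_card]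
  exact Set.ncard_le_card _

variable {G} in
lemma ncard_add_ncard_add_ncard_le [Fintype V] {X Y Z : Set V} (hXY : Disjoint X Y)
    (hXZ : Disjoint X Z) (hYZ : Disjoint Y Z) :
    X.ncard + Y.ncard + Z.ncard ≤ Fintype.card V := by
  rw [← Set.ncard_union_eq hXY]
  exact ncard_add_ncard_le (Set.disjoint_union_left.2 ⟨hXZ, hYZ⟩)

end Counting

section Peeling

def IsPathTuple {k : ℕ} (U : Fin k → Set V) (u : Fin k → V) : Prop :=
  (∀ i, u i ∈ U i) ∧
    ∀ (i : ℕ) (h : i + 1 < k), G.Adj (u ⟨i, Nat.lt_of_succ_lt h⟩) (u ⟨i + 1, h⟩)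

lemma pCount_eq_card_isPathTuple {k : ℕ} (U : Fin k → Set V) :
    pCount G U = Nat.card {u // IsPathTuple G U u} := rfl

lemma pCount_fin_two (U : Fin 2 → Set V) : pCount G U = eCount G (U 0) (U 1) := by
  refine Nat.card_congr
    { toFun := fun u => ⟨(u.1 0, u.1 1), u.2.1 0, u.2.1 1, u.2.2 0 one_lt_two⟩
      invFun := fun p => ⟨![p.1.1, p.1.2], fun i => by fin_cases i <;> simp [p.2.1, p.2.2.1],
        fun i h => by
          obtain rfl : i = 0 := by omega
          exact p.2.2.2⟩
      left_inv := fun u => Subtype.ext (funext fun i => by fin_cases i <;> rfl)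
      right_inv := fun _ => rfl }

def peel {k : ℕ} (U : Fin (k + 2) → Set V) (v : V) : Fin (k + 1) → Set V :=
  Fin.cons (nbhdIn G v (U 1)) fun i => U i.succ.succ

lemma peel_subset {k : ℕ} (U : Fin (k + 2) → Set V) (v : V) (i : Fin (k + 1)) :
    peel G U v i ⊆ U i.succ := by
  cases i using Fin.cases with
  | zero => exact Set.sep_subset _ _
  | succ i => exact subset_rfl

def isPathTupleEquivSigmaPeel {k : ℕ} (U : Fin (k + 2) → Set V) :
    {u // IsPathTuple G U u} ≃ Σ v : U 0, {u // IsPathTuple G (peel G U v) u} where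
  toFun u := ⟨⟨u.1 0, u.2.1 0⟩, Fin.tail u.1,
    fun i => by
      cases i using Fin.cases with
      | zero => exact ⟨u.2.1 1, u.2.2 0 (by omega)⟩
      | succ i => exact u.2.1 i.succ.succ,
    fun i h => u.2.2 (i + 1) (by omega)⟩
  invFun q := ⟨Fin.cons q.1.1 q.2.1,
    fun i => by
      cases i using Fin.cases with
      | zero => exact q.1.2
      | succ i => exact peel_subset G U q.1 i (q.2.2.1 i),
    fun i h => by
      rcases i with _ | i
      · exact (q.2.2.1 0).2
      · exact q.2.2.2 i (by omega)⟩
  left_inv u := Subtype.ext (Fin.cons_self_tail u.1)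
  right_inv _ := rfl

lemma pCount_eq_sum_peel [Fintype V] {k : ℕ} (U : Fin (k + 2) → Set V) :
    pCount G U = ∑ v : U 0, pCount G (peel G U v) := by
  simp only [pCount_eq_card_isPathTuple, Nat.card_congr (isPathTupleEquivSigmaPeel G U),
    Nat.card_sigma]

variable {G} in
lemma pairwise_disjoint_peel {k : ℕ} {U : Fin (k + 2) → Set V}
    (h : Pairwise (Disjoint on U)) (v : V) : Pairwise (Disjoint on peel G U v) :=
  fun i j hij => (h (Fin.succ_injective _ |>.ne hij)).mono (peel_subset G U v i)
    (peel_subset G U v j)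

end Peeling

section Sparsity

def SparsePair (lam : ℝ) (X Y : Set V) : Prop :=
  (eCount G X Y : ℝ) ≤ lam * (X.ncard + Y.ncard)

def NbhdSparse (lam : ℝ) {k : ℕ} (U : Fin k → Set V) : Prop :=
  ∀ (i : ℕ) (h : i + 2 < k), ∀ u ∈ U ⟨i, by omega⟩,
    SparsePair G lam (nbhdIn G u (U ⟨i + 1, by omega⟩)) (U ⟨i + 2, h⟩)

structure IsSparseSystem (lam : ℝ) {k : ℕ} (U : Fin (k + 2) → Set V) : Prop where
  pairwise_disjoint : Pairwise (Disjoint on U)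
  sparsePair : SparsePair G lam (U 0) (U 1)
  nbhdSparse : NbhdSparse G lam U

variable {G}

lemma IsSparseSystem.peel {lam : ℝ} {k : ℕ} {U : Fin (k + 3) → Set V}
    (hU : IsSparseSystem G lam U) {v : V} (hv : v ∈ U 0) :
    IsSparseSystem G lam (peel G U v) where
  pairwise_disjoint := pairwise_disjoint_peel hU.pairwise_disjoint v
  sparsePair := hU.nbhdSparse 0 (by omega) v hv
  nbhdSparse i _ u hu := hU.nbhdSparse (i + 1) (by omega) u (peel_subset G U v ⟨i, by omega⟩ hu)

end Sparsity

section Recursion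

lemma pCount_le_of_forall_peel [Fintype V] {k : ℕ} (U : Fin (k + 2) → Set V) (α β : ℝ)
    (h : ∀ v ∈ U 0, (pCount G (peel G U v) : ℝ) ≤ α * (nbhdIn G v (U 1)).ncard + β) :
    (pCount G U : ℝ) ≤ α * eCount G (U 0) (U 1) + β * (U 0).ncard := by
  calc (pCount G U : ℝ) = ∑ v : U 0, (pCount G (peel G U v) : ℝ) := by
        rw [pCount_eq_sum_peel, Nat.cast_sum]
    _ ≤ ∑ v : U 0, (α * (nbhdIn G v (U 1)).ncard + β) := Finset.sum_le_sum fun v _ => h v v.2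
    _ = α * eCount G (U 0) (U 1) + β * (U 0).ncard := by
        rw [Finset.sum_add_distrib, ← Finset.mul_sum, eCount_eq_sum_ncard_nbhdIn, Nat.cast_sum,
          Finset.sum_const, Finset.card_univ, ← Nat.card_eq_fintype_card, Nat.card_coe_set_eq,
          nsmul_eq_mul, mul_comm β]

variable {G} in
lemma pCount_le_of_forall_peel_peel [Fintype V] {lam α β : ℝ} (hα : 0 ≤ α) {k : ℕ}
    {U : Fin (k + 3) → Set V} (hU : NbhdSparse G lam U)
    (h : ∀ v ∈ U 0, ∀ w ∈ nbhdIn G v (U 1),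
      (pCount G (peel G (peel G U v) w) : ℝ) ≤ α * (nbhdIn G w (U 2)).ncard + β) :
    (pCount G U : ℝ) ≤
      (α * lam + β) * eCount G (U 0) (U 1) + α * lam * (U 2).ncard * (U 0).ncard := by
  refine pCount_le_of_forall_peel G U _ _ fun v hv => ?_
  calc (pCount G (peel G U v) : ℝ)
      ≤ α * eCount G (nbhdIn G v (U 1)) (U 2) + β * (nbhdIn G v (U 1)).ncard :=
        pCount_le_of_forall_peel G (peel G U v) α β (h v hv)
    _ ≤ α * (lam * ((nbhdIn G v (U 1)).ncard + (U 2).ncard)) +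
          β * (nbhdIn G v (U 1)).ncard := by
        gcongr
        exact hU 0 (by omega) v hv
    _ = (α * lam + β) * (nbhdIn G v (U 1)).ncard + α * lam * (U 2).ncard := by ring

end Recursion

section Bounds

variable {G} [Fintype V] {lam : ℝ}

lemma pCount_le_even_step (hlam : 0 ≤ lam) {k : ℕ} {U : Fin (k + 4) → Set V}
    (hU : IsSparseSystem G lam U) {K : ℝ} (hK : 0 ≤ K)
    (h : ∀ v ∈ U 0, ∀ w ∈ nbhdIn G v (U 1),
      (pCount G (peel G (peel G U v) w) : ℝ) ≤ K * ((nbhdIn G w (U 2)).ncard + (U 3).ncard)) :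
    (pCount G U : ℝ) ≤ K * lam * Fintype.card V * ((U 0).ncard + (U 1).ncard) := by
  have hpeel := pCount_le_of_forall_peel_peel (β := K * (U 3).ncard) hK hU.nbhdSparse
    fun v hv w hw => (h v hv w hw).trans_eq (by ring)
  have hprod : (eCount G (U 0) (U 1) : ℝ) ≤ (U 0).ncard * (U 1).ncard := by
    exact_mod_cast eCount_le_ncard_mul_ncard G (U 0) (U 1)
  have hsum : ((U 1).ncard + (U 2).ncard + (U 3).ncard : ℝ) ≤ Fintype.card V := by
    have hd := hU.pairwise_disjoint
    exact_mod_cast ncard_add_ncard_add_ncard_le (hd (by simp [Fin.ext_iff, Nat.mod_eq_of_lt]))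
      (hd (by simp [Fin.ext_iff, Nat.mod_eq_of_lt]))
      (hd (by simp [Fin.ext_iff, Nat.mod_eq_of_lt]))
  have hlast : ((U 3).ncard : ℝ) ≤ Fintype.card V := by
    exact_mod_cast (U 3).ncard_le_card.trans_eq Nat.card_eq_fintype_card
  have hKlam : 0 ≤ K * lam := mul_nonneg hK hlam
  -- With `e = e(U 0, U 1)`: `(λ + |U 3|) e + λ |U 0| |U 2|
  --   ≤ λ |U 0| (|U 1| + |U 2| + |U 3|) + λ |U 1| |U 3|`,
  -- bounding `λ e` by `λ |U 0| |U 1|` and `|U 3| e` by `λ |U 3| (|U 0| + |U 1|)`.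
  linarith [mul_le_mul_of_nonneg_left hprod hKlam,
    mul_le_mul_of_nonneg_left hU.sparsePair (mul_nonneg hK (Nat.cast_nonneg (U 3).ncard)),
    mul_le_mul_of_nonneg_left hsum (mul_nonneg hKlam (Nat.cast_nonneg (U 0).ncard)),
    mul_le_mul_of_nonneg_left hlast (mul_nonneg hKlam (Nat.cast_nonneg (U 1).ncard))]

lemma pCount_le_of_even_length (hlam : 0 ≤ lam) (j : ℕ) {U : Fin (2 * j + 2) → Set V}
    (hU : IsSparseSystem G lam U) :
    (pCount G U : ℝ) ≤ lam ^ (j + 1) * Fintype.card V ^ j * ((U 0).ncard + (U 1).ncard) := by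
  induction j with
  | zero =>
    rw [pCount_fin_two]
    simpa [SparsePair] using hU.sparsePair
  | succ j ih =>
    refine (pCount_le_even_step hlam (k := 2 * j) hU (by positivity)
      fun v hv w hw => ih ((hU.peel hv).peel hw)).trans_eq (by ring)

lemma pCount_le_of_length_three (hlam : 0 ≤ lam) {U : Fin 3 → Set V}
    (hU : IsSparseSystem G lam U) :
    (pCount G U : ℝ) ≤ lam * ((U 0).ncard * (U 2).ncard + lam * Fintype.card V) := by
  have hpeel := pCount_le_of_forall_peel G U lam (lam * (U 2).ncard) fun v hv => by
    rw [pCount_fin_two]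
    exact (hU.peel hv).sparsePair.trans_eq (mul_add _ _ _)
  have hsum : ((U 0).ncard + (U 1).ncard : ℝ) ≤ Fintype.card V := by
    exact_mod_cast ncard_add_ncard_le (hU.pairwise_disjoint (by decide : (0 : Fin 3) ≠ 1))
  linarith [mul_le_mul_of_nonneg_left hU.sparsePair hlam,
    mul_le_mul_of_nonneg_left hsum (mul_nonneg hlam hlam)]

lemma pCount_le_odd_step (hlam : 0 ≤ lam) {k : ℕ} {U : Fin (k + 5) → Set V}
    (hU : IsSparseSystem G lam U) {K : ℝ} (hK : 0 ≤ K)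
    (h : ∀ v ∈ U 0, ∀ w ∈ nbhdIn G v (U 1), (pCount G (peel G (peel G U v) w) : ℝ) ≤
      K * ((nbhdIn G w (U 2)).ncard * (U (Fin.last _)).ncard + lam * Fintype.card V)) :
    (pCount G U : ℝ) ≤ K * lam * Fintype.card V *
      ((U 0).ncard * (U (Fin.last _)).ncard + lam * Fintype.card V) := by
  have hpeel := pCount_le_of_forall_peel_peel (α := K * (U (Fin.last _)).ncard)
    (β := K * lam * Fintype.card V) (by positivity) hU.nbhdSparse
    fun v hv w hw => (h v hv w hw).trans_eq (by ring)
  have hprod : (eCount G (U 0) (U 1) : ℝ) ≤ (U 0).ncard * (U 1).ncard := by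
    exact_mod_cast eCount_le_ncard_mul_ncard G (U 0) (U 1)
  have hd := hU.pairwise_disjoint
  have hsum₀₁ : ((U 0).ncard + (U 1).ncard : ℝ) ≤ Fintype.card V := by
    exact_mod_cast ncard_add_ncard_le (hd (by simp))
  have hsum₁₂ : ((U 1).ncard + (U 2).ncard : ℝ) ≤ Fintype.card V := by
    exact_mod_cast ncard_add_ncard_le (hd (by simp [Fin.ext_iff, Nat.mod_eq_of_lt]))
  have hKlam : 0 ≤ K * lam := mul_nonneg hK hlam
  have hN : (0 : ℝ) ≤ Fintype.card V := Nat.cast_nonneg _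
  have hL : (0 : ℝ) ≤ (U (Fin.last _)).ncard := Nat.cast_nonneg _
  have hKlamL : 0 ≤ K * lam * (U (Fin.last _)).ncard := mul_nonneg hKlam hL
  -- With `e = e(U 0, U 1)` and `L` the last set: `(|L| + n) e + |L| |U 0| |U 2|
  --   ≤ |L| |U 0| (|U 1| + |U 2|) + λ n (|U 0| + |U 1|)`,
  -- bounding `|L| e` by `|L| |U 0| |U 1|` and `n e` by `λ n (|U 0| + |U 1|)`.
  linarith [mul_le_mul_of_nonneg_left hprod hKlamL,
    mul_le_mul_of_nonneg_left hU.sparsePair (mul_nonneg hKlam hN),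
    mul_le_mul_of_nonneg_left hsum₁₂ (mul_nonneg hKlamL (Nat.cast_nonneg (U 0).ncard)),
    mul_le_mul_of_nonneg_left hsum₀₁ (mul_nonneg (mul_nonneg hKlam hN) hlam)]

lemma pCount_le_of_odd_length (hlam : 0 ≤ lam) (j : ℕ) {U : Fin (2 * j + 3) → Set V}
    (hU : IsSparseSystem G lam U) :
    (pCount G U : ℝ) ≤ lam ^ (j + 1) * Fintype.card V ^ j *
      ((U 0).ncard * (U (Fin.last _)).ncard + lam * Fintype.card V) := by
  induction j with
  | zero => exact (pCount_le_of_length_three hlam hU).trans_eq (by simp)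
  | succ j ih =>
    refine (pCount_le_odd_step hlam (k := 2 * j) hU (by positivity)
      fun v hv w hw => ih ((hU.peel hv).peel hw)).trans_eq ?_
    rw [show U (Fin.last (2 * j + 4)) = U (Fin.last (2 * (j + 1) + 2)) from rfl]
    ring

end Bounds

end PathCounting

theorem stmt4 {V : Type*} [Fintype V] (n s : ℕ) (hn : Fintype.card V = n) (hs : 2 ≤ s)
    (lam : ℝ) (hlam : 1 ≤ lam) (G : SimpleGraph V) (U : Fin s → Set V)
    (hdisj : ∀ i j, i ≠ j → Disjoint (U i) (U j))
    (h12 : (eCount G (U ⟨0, by omega⟩) (U ⟨1, by omega⟩) : ℝ) ≤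
      lam * ((U ⟨0, by omega⟩).ncard + (U ⟨1, by omega⟩).ncard))
    (hnb : ∀ (i : ℕ) (h : i + 2 < s), ∀ u ∈ U ⟨i, by omega⟩,
      (eCount G (nbhdIn G u (U ⟨i + 1, by omega⟩)) (U ⟨i + 2, h⟩) : ℝ) ≤
        lam * ((nbhdIn G u (U ⟨i + 1, by omega⟩)).ncard + (U ⟨i + 2, h⟩).ncard)) :
    (Odd s → (pCount G U : ℝ) ≤ lam ^ ((s - 1) / 2) * (n : ℝ) ^ ((s - 3) / 2) *
        ((U ⟨0, by omega⟩).ncard * (U ⟨s - 1, by omega⟩).ncard + lam * n)) ∧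
    (Even s → (pCount G U : ℝ) ≤ lam ^ (s / 2) * (n : ℝ) ^ (s / 2 - 1) *
        ((U ⟨0, by omega⟩).ncard + (U ⟨1, by omega⟩).ncard)) := by
  subst hn
  have hlam₀ : 0 ≤ lam := zero_le_one.trans hlam
  refine ⟨fun hodd => ?_, fun heven => ?_⟩
  · obtain ⟨j, rfl⟩ : ∃ j, s = 2 * j + 3 := by
      obtain ⟨m, hm⟩ := hodd
      exact ⟨m - 1, by omega⟩
    rw [show (2 * j + 3 - 1) / 2 = j + 1 by omega, show (2 * j + 3 - 3) / 2 = j by omega]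
    exact PathCounting.pCount_le_of_odd_length hlam₀ j ⟨hdisj, h12, hnb⟩
  · obtain ⟨j, rfl⟩ : ∃ j, s = 2 * j + 2 := by
      obtain ⟨m, hm⟩ := heven
      exact ⟨m - 1, by omega⟩
    rw [show (2 * j + 2) / 2 - 1 = j by omega, show (2 * j + 2) / 2 = j + 1 by omega]
    exact PathCounting.pCount_le_of_even_length hlam₀ j ⟨hdisj, h12, hnb⟩
end

section
/- Let s, ℓ ≥ 2, let G be an n-vertex graph with no cycle of length 2ℓ, let {u_0}, U_1, …, U_s ⊆ V(G) be pairwise disjoint vertex sets, and suppose u_0 is adjacent to every vertex of U_1. Then p(U_1,…,U_s) ≤ (ℓ−1)^{(s−1)/2} n^{(s−3)/2} (|U_1||U_s| + (ℓ−1)n) if s is odd, and p(U_1,…,U_s) ≤ (ℓ−1)^{s/2} n^{s/2−1} (|U_1|+|U_2|) if s is even. -/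
open SimpleGraph

/-!
The engine is a bipartite edge bound: if `u ∉ A ∪ B` is adjacent to every vertex of `A` and `G`
has no cycle of length `2ℓ`, then `e(A, B) ≤ (ℓ - 1)(|A| + |B|)`. Otherwise, deleting vertices of
degree at most `ℓ - 1` one at a time leaves a nonempty core of minimum degree at least `ℓ` on both
sides; there a greedy alternating path of length `2ℓ - 2` runs between two vertices of `A`, and `u`
closes it to a `2ℓ`-cycle.

Counting paths by their first two vertices `a ∈ U₁`, `b ∈ U₂` leaves paths through
`N(b) ∩ U₃, U₄, …, U_s`, a family whose first set is entirely joined to `b`, so the bound follows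
by induction on `s` in steps of two. For even `s` the base is `p(U₁, U₂) = e(U₁, U₂)`; for odd `s`
it is `p(U₁, U₂, U₃) = ∑_{a ∈ U₁} e(N(a) ∩ U₂, U₃)`, where the edge bound is applied once with hub
`a` and once more with hub `u₀`.
-/

open Finset Function

theorem Finset.exists_mem_filter_notMem {α : Type*} [DecidableEq α] {s X : Finset α}
    {p : α → Prop} [DecidablePred p] (h : #(s ∩ X) < #{x ∈ X | p x}) :
    ∃ x ∈ X, p x ∧ x ∉ s := by
  obtain ⟨x, hx, hxs⟩ := exists_mem_notMem_of_card_lt_card h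
  rw [mem_filter] at hx
  exact ⟨x, hx.1, hx.2, fun h => hxs (mem_inter.2 ⟨h, hx.1⟩)⟩

theorem Finset.card_add_card_le_card_univ {α : Type*} [Fintype α] [DecidableEq α]
    {s t : Finset α} (h : Disjoint s t) : #s + #t ≤ Fintype.card α :=
  card_union_of_disjoint h ▸ card_le_univ _

theorem Finset.exists_bipartite_core_of_lt_sum {α β : Type*} [DecidableEq α] [DecidableEq β]
    (r : α → β → Prop) [∀ a b, Decidable (r a b)] (k : ℕ) (A : Finset α) (B : Finset β)
    (h : k * (#A + #B) < ∑ a ∈ A, #(B.bipartiteAbove r a)) :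
    ∃ A' ⊆ A, ∃ B' ⊆ B, A'.Nonempty ∧ (∀ a ∈ A', k < #(B'.bipartiteAbove r a)) ∧
      ∀ b ∈ B', k < #(A'.bipartiteBelow r b) := by
  by_cases hA : ∃ a ∈ A, #(B.bipartiteAbove r a) ≤ k
  · obtain ⟨a, ha, hdeg⟩ := hA
    have hsum := add_sum_erase A (fun a => #(B.bipartiteAbove r a)) ha
    have hcard := card_erase_add_one ha
    obtain ⟨A', hA', B', hB', hcore⟩ :=
      exists_bipartite_core_of_lt_sum r k (A.erase a) B (by nlinarith)
    exact ⟨A', hA'.trans (erase_subset a A), B', hB', hcore⟩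
  by_cases hB : ∃ b ∈ B, #(A.bipartiteBelow r b) ≤ k
  · obtain ⟨b, hb, hdeg⟩ := hB
    have hsum := add_sum_erase B (fun b => #(A.bipartiteBelow r b)) hb
    have hcard := card_erase_add_one hb
    rw [sum_card_bipartiteAbove_eq_sum_card_bipartiteBelow] at h
    obtain ⟨A', hA', B', hB', hcore⟩ := exists_bipartite_core_of_lt_sum r k A (B.erase b)
      (by rw [sum_card_bipartiteAbove_eq_sum_card_bipartiteBelow]; nlinarith)
    exact ⟨A', hA', B', hB'.trans (erase_subset b B), hcore⟩
  push Not at hA hB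
  refine ⟨A, subset_rfl, B, subset_rfl, ?_, hA, hB⟩
  contrapose! h
  simp [h]
termination_by #A + #B
decreasing_by all_goals omega

namespace SimpleGraph

variable {V : Type*} {G : SimpleGraph V} {k l : ℕ}

theorem Walk.IsPath.not_cycleFree {a c u : V} {p : G.Walk a c} (hp : p.IsPath)
    (hlen : 0 < p.length) (hu : u ∉ p.support) (hua : G.Adj u a) (huc : G.Adj u c) :
    ¬ CycleFree G (p.length + 2) := by
  intro hfree
  refine hfree (.cons huc.symm (.cons hua p)) ?_ (by simp)
  rw [Walk.cons_isCycle_iff]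
  refine ⟨hp.cons hu, ?_⟩
  have hac : a ≠ c := by
    rintro rfl
    have := Walk.length_eq_zero_iff.2 (Walk.isPath_iff_nil.1 hp)
    omega
  simp only [Walk.edges_cons, List.mem_cons, Sym2.eq_swap (a := c), Sym2.eq_iff, not_or]
  exact ⟨by grind, fun he => hu (p.fst_mem_support_of_mem_edges he)⟩

section EdgeBound

variable [DecidableEq V] [DecidableRel G.Adj]

theorem exists_isPath_alternating {A B : Finset V} (hAB : Disjoint A B)
    (hA : ∀ a ∈ A, k < #{x ∈ B | G.Adj a x}) (hB : ∀ b ∈ B, k < #{x ∈ A | G.Adj x b})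
    {c : V} (hc : c ∈ A) {m : ℕ} (hm : m ≤ k) :
    ∃ a ∈ A, ∃ p : G.Walk a c, p.IsPath ∧ p.length = 2 * m ∧ p.support.toFinset ⊆ A ∪ B ∧
      #(p.support.toFinset ∩ A) = m + 1 ∧ #(p.support.toFinset ∩ B) = m := by
  induction m with
  | zero =>
    refine ⟨c, hc, .nil, .nil, rfl, by simp [hc], by simp [hc], ?_⟩
    simp [Finset.disjoint_left.1 hAB hc]
  | succ m ih =>
    obtain ⟨a, ha, p, hp, hlen, hsupp, hcardA, hcardB⟩ := ih (by omega)
    set s := p.support.toFinset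
    obtain ⟨b, hb, hab, hbs⟩ := exists_mem_filter_notMem (s := s) (p := (G.Adj a ·))
      (by rw [hcardB]; have := hA a ha; omega)
    obtain ⟨a', ha', ha'b, ha's⟩ := exists_mem_filter_notMem (s := insert b s) (p := (G.Adj · b))
      (by rw [insert_inter_of_notMem (Finset.disjoint_right.1 hAB hb), hcardA]
          have := hB b hb; omega)
    have hsupp' :
        (Walk.cons ha'b (.cons hab.symm p)).support.toFinset = insert a' (insert b s) := by
      simp [s]
    refine ⟨a', ha', .cons ha'b (.cons hab.symm p), ?_, by simp [hlen]; ring, ?_, ?_, ?_⟩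
    · exact (hp.cons (by simpa [s] using hbs)).cons (by simpa [s] using ha's)
    · rw [hsupp']
      exact insert_subset (mem_union_left _ ha') (insert_subset (mem_union_right _ hb) hsupp)
    · rw [hsupp', insert_inter_of_mem ha', insert_inter_of_notMem (Finset.disjoint_right.1 hAB hb),
        card_insert_of_notMem (fun h => ha's (mem_insert_of_mem (mem_inter.1 h).1)), hcardA]
    · rw [hsupp', insert_inter_of_notMem (Finset.disjoint_left.1 hAB ha'), insert_inter_of_mem hb,
        card_insert_of_notMem (fun h => hbs (mem_inter.1 h).1), hcardB]

theorem sum_card_filter_adj_le (hl : 2 ≤ l) (hfree : CycleFree G (2 * l))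
    {A B : Finset V} (hAB : Disjoint A B) {u : V} (huA : u ∉ A) (huB : u ∉ B)
    (hu : ∀ a ∈ A, G.Adj u a) :
    ∑ a ∈ A, #{b ∈ B | G.Adj a b} ≤ (l - 1) * (#A + #B) := by
  by_contra! h
  obtain ⟨A', hA', B', hB', ⟨c, hc⟩, hdegA, hdegB⟩ :=
    exists_bipartite_core_of_lt_sum G.Adj (l - 1) A B h
  obtain ⟨a, ha, p, hp, hlen, hsupp, -⟩ :=
    exists_isPath_alternating (hAB.mono hA' hB') hdegA hdegB hc le_rfl
  have hup : u ∉ p.support := fun h => by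
    rcases mem_union.1 (hsupp (List.mem_toFinset.2 h)) with h | h
    exacts [huA (hA' h), huB (hB' h)]
  refine hp.not_cycleFree (by omega) hup (hu a (hA' ha)) (hu c (hA' hc)) ?_
  rwa [hlen, show 2 * (l - 1) + 2 = 2 * l by omega]

end EdgeBound

section PathCount

variable (G) in
def IsAdjChain (u : Fin k → V) : Prop :=
  ∀ (i : ℕ) (h : i + 1 < k), G.Adj (u ⟨i, Nat.lt_of_succ_lt h⟩) (u ⟨i + 1, h⟩)

variable (G) in
open Classical in
noncomputable def pathFinset (U : Fin k → Finset V) : Finset (Fin k → V) :=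
  {u ∈ Fintype.piFinset U | G.IsAdjChain u}

theorem mem_pathFinset {U : Fin k → Finset V} {u : Fin k → V} :
    u ∈ G.pathFinset U ↔ (∀ i, u i ∈ U i) ∧ G.IsAdjChain u := by
  simp [pathFinset]

variable (G) in
theorem pCount_coe_eq_card_pathFinset (U : Fin k → Finset V) :
    pCount G (fun i => (U i : Set V)) = #(G.pathFinset U) :=
  Nat.subtype_card _ fun _ => by simp [mem_pathFinset, IsAdjChain]

theorem isAdjChain_cons {a : V} {w : Fin (k + 1) → V} :
    G.IsAdjChain (Fin.cons a w : Fin (k + 2) → V) ↔ G.Adj a (w 0) ∧ G.IsAdjChain w := by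
  have hsucc (i : ℕ) (hi : i < k + 1) :
      (Fin.cons a w : Fin (k + 2) → V) ⟨i + 1, by omega⟩ = w ⟨i, hi⟩ :=
    Fin.cons_succ (α := fun _ => V) a w ⟨i, hi⟩
  constructor
  · intro h
    refine ⟨by simpa [hsucc] using h 0 (by omega), fun i hi => ?_⟩
    rw [← hsucc i (by omega), ← hsucc (i + 1) hi]
    exact h (i + 1) (by omega)
  · rintro ⟨h0, h⟩ (_ | i) hi
    · simpa [hsucc] using h0
    · rw [hsucc i (by omega), hsucc (i + 1) (by omega)]
      exact h i (by omega)

theorem card_pathFinset_one (U : Fin 1 → Finset V) : #(G.pathFinset U) = #(U 0) := by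
  refine card_nbij' (fun u => u 0) (fun x _ => x) ?_ ?_ ?_ ?_
  · intro u hu
    exact (mem_pathFinset.1 hu).1 0
  · intro x hx
    simpa [mem_pathFinset, IsAdjChain, Fin.forall_fin_one] using hx
  · rintro u -
    funext i
    rw [Fin.fin_one_eq_zero i]
  · rintro x -
    rfl

variable [DecidableRel G.Adj]

variable (G) in
def neighborTail (a : V) (U : Fin (k + 2) → Finset V) : Fin (k + 1) → Finset V :=
  Fin.cons {x ∈ U 1 | G.Adj a x} (Fin.tail (Fin.tail U))

@[simp]
theorem neighborTail_zero {a : V} {U : Fin (k + 2) → Finset V} :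
    G.neighborTail a U 0 = {x ∈ U 1 | G.Adj a x} :=
  Fin.cons_zero _ _

@[simp]
theorem neighborTail_succ {a : V} {U : Fin (k + 2) → Finset V} (i : Fin k) :
    G.neighborTail a U i.succ = U i.succ.succ :=
  Fin.cons_succ _ _ _

@[simp]
theorem neighborTail_one {a : V} {U : Fin (k + 3) → Finset V} : G.neighborTail a U 1 = U 2 :=
  rfl

theorem adj_of_mem_neighborTail_zero {a x : V} {U : Fin (k + 2) → Finset V}
    (hx : x ∈ G.neighborTail a U 0) : G.Adj a x := by
  rw [neighborTail_zero, mem_filter] at hx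
  exact hx.2

theorem neighborTail_subset {a : V} {U : Fin (k + 2) → Finset V} (i : Fin (k + 1)) :
    G.neighborTail a U i ⊆ U i.succ := by
  cases i using Fin.cases with
  | zero => simp
  | succ i => simp

theorem pairwise_disjoint_neighborTail {a : V} {U : Fin (k + 2) → Finset V}
    (hU : Pairwise (Disjoint on U)) : Pairwise (Disjoint on G.neighborTail a U) :=
  fun i j hij => (hU (Fin.succ_injective _ |>.ne hij)).mono
    (neighborTail_subset i) (neighborTail_subset j)

theorem notMem_neighborTail {a : V} {U : Fin (k + 2) → Finset V} (hU : Pairwise (Disjoint on U))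
    (ha : a ∈ U 0) (i : Fin (k + 1)) : a ∉ G.neighborTail a U i :=
  fun h => Finset.disjoint_left.1 (hU (Fin.succ_ne_zero i).symm) ha (neighborTail_subset i h)

theorem cons_mem_pathFinset {a : V} {w : Fin (k + 1) → V} {U : Fin (k + 2) → Finset V} :
    Fin.cons a w ∈ G.pathFinset U ↔ a ∈ U 0 ∧ w ∈ G.pathFinset (G.neighborTail a U) := by
  simp only [mem_pathFinset, isAdjChain_cons, Fin.forall_fin_succ, Fin.cons_zero, Fin.cons_succ,
    neighborTail_zero, neighborTail_succ, mem_filter]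
  tauto

theorem card_pathFinset_eq_sum (U : Fin (k + 2) → Finset V) :
    #(G.pathFinset U) = ∑ a ∈ U 0, #(G.pathFinset (G.neighborTail a U)) := by
  rw [← card_sigma]
  symm
  refine card_nbij' (fun x => Fin.cons x.1 x.2) (fun u => ⟨u 0, Fin.tail u⟩) ?_ ?_ ?_ ?_
  · rintro ⟨a, w⟩ h
    simpa [cons_mem_pathFinset] using h
  · intro u hu
    rw [mem_coe, ← Fin.cons_self_tail u, cons_mem_pathFinset] at hu
    simpa using hu
  · rintro ⟨a, w⟩ -
    simp
  · rintro u -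
    simp

theorem card_pathFinset_two (U : Fin 2 → Finset V) :
    #(G.pathFinset U) = ∑ a ∈ U 0, #{b ∈ U 1 | G.Adj a b} := by
  simp [card_pathFinset_eq_sum, card_pathFinset_one]

theorem card_pathFinset_eq_sum_sum (U : Fin (k + 3) → Finset V) :
    #(G.pathFinset U) = ∑ a ∈ U 0, ∑ b ∈ U 1 with G.Adj a b,
      #(G.pathFinset (G.neighborTail b (G.neighborTail a U))) := by
  simp only [card_pathFinset_eq_sum (U := U), card_pathFinset_eq_sum (U := G.neighborTail _ U),
    neighborTail_zero]

end PathCount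

variable [DecidableEq V] [DecidableRel G.Adj] [Fintype V]

theorem sum_sum_card_filter_adj_le (hl : 2 ≤ l) (hfree : CycleFree G (2 * l))
    {U : Fin (k + 3) → Finset V} (hU : Pairwise (Disjoint on U)) {u : V} (hu : ∀ i, u ∉ U i)
    (hadj : ∀ a ∈ U 0, G.Adj u a) :
    ∑ a ∈ U 0, ∑ b ∈ U 1 with G.Adj a b, #{x ∈ U 2 | G.Adj b x} ≤
      (l - 1) * (#(U 0) * #(U 2) + (l - 1) * Fintype.card V) := by
  have h01 : Disjoint (U 0) (U 1) := hU (by simp)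
  have h02 : Disjoint (U 0) (U 2) := hU (by simp [Fin.ext_iff, Nat.mod_eq_of_lt])
  have h12 : Disjoint (U 1) (U 2) := hU (by simp [Fin.ext_iff, Nat.mod_eq_of_lt])
  calc ∑ a ∈ U 0, ∑ b ∈ U 1 with G.Adj a b, #{x ∈ U 2 | G.Adj b x}
      ≤ ∑ a ∈ U 0, (l - 1) * (#{b ∈ U 1 | G.Adj a b} + #(U 2)) := by
        refine sum_le_sum fun a ha => sum_card_filter_adj_le hl hfree
          (h12.mono_left (filter_subset _ _)) (fun h => Finset.disjoint_left.1 h01 ha ?_)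
          (Finset.disjoint_left.1 h02 ha) (fun b hb => (mem_filter.1 hb).2)
        exact (mem_filter.1 h).1
    _ = (l - 1) * (∑ a ∈ U 0, #{b ∈ U 1 | G.Adj a b} + #(U 0) * #(U 2)) := by
        rw [← mul_sum, sum_add_distrib, sum_const, smul_eq_mul]
    _ ≤ (l - 1) * ((l - 1) * (#(U 0) + #(U 1)) + #(U 0) * #(U 2)) := by
        gcongr
        exact sum_card_filter_adj_le hl hfree h01 (hu 0) (hu 1) hadj
    _ ≤ (l - 1) * (#(U 0) * #(U 2) + (l - 1) * Fintype.card V) := by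
        rw [add_comm]
        gcongr
        exact card_add_card_le_card_univ h01

theorem card_pathFinset_le_of_even (hl : 2 ≤ l) (hfree : CycleFree G (2 * l)) (m : ℕ)
    {U : Fin (2 * m + 2) → Finset V} (hU : Pairwise (Disjoint on U)) {u : V}
    (hu : ∀ i, u ∉ U i) (hadj : ∀ a ∈ U 0, G.Adj u a) :
    #(G.pathFinset U) ≤ (l - 1) ^ (m + 1) * Fintype.card V ^ m * (#(U 0) + #(U 1)) := by
  induction m generalizing u with
  | zero =>
    rw [card_pathFinset_two]
    simpa using sum_card_filter_adj_le hl hfree (hU zero_ne_one) (hu 0) (hu 1) hadj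
  | succ m ih =>
    set n := Fintype.card V
    have hW : ∀ a ∈ U 0, ∀ b ∈ U 1, G.Adj a b →
        #(G.pathFinset (G.neighborTail b (G.neighborTail a U))) ≤
          (l - 1) ^ (m + 1) * n ^ m * n := by
      intro a ha b hb hab
      have hT := pairwise_disjoint_neighborTail (G := G) (a := a) hU
      have hbT : b ∈ G.neighborTail a U 0 := by simp [hb, hab]
      refine (ih (pairwise_disjoint_neighborTail hT) (notMem_neighborTail hT hbT)
        fun _ => adj_of_mem_neighborTail_zero).trans ?_
      gcongr
      exact card_add_card_le_card_univ (pairwise_disjoint_neighborTail hT zero_ne_one)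
    calc #(G.pathFinset U)
        = ∑ a ∈ U 0, ∑ b ∈ U 1 with G.Adj a b,
            #(G.pathFinset (G.neighborTail b (G.neighborTail a U))) :=
          card_pathFinset_eq_sum_sum (k := 2 * m + 1) U
      _ ≤ ∑ a ∈ U 0, ∑ b ∈ U 1 with G.Adj a b, (l - 1) ^ (m + 1) * n ^ m * n := by
          gcongr with a ha b hb
          rw [mem_filter] at hb
          exact hW a ha b hb.1 hb.2
      _ = (l - 1) ^ (m + 1) * n ^ (m + 1) * ∑ a ∈ U 0, #{b ∈ U 1 | G.Adj a b} := by
          simp only [sum_const, smul_eq_mul, mul_sum]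
          exact sum_congr rfl fun a _ => by ring
      _ ≤ (l - 1) ^ (m + 1) * n ^ (m + 1) * ((l - 1) * (#(U 0) + #(U 1))) := by
          gcongr
          exact sum_card_filter_adj_le hl hfree (hU zero_ne_one) (hu 0) (hu 1) hadj
      _ = (l - 1) ^ (m + 1 + 1) * n ^ (m + 1) * (#(U 0) + #(U 1)) := by ring

theorem card_pathFinset_le_of_odd (hl : 2 ≤ l) (hfree : CycleFree G (2 * l)) (m : ℕ)
    {U : Fin (2 * m + 3) → Finset V} (hU : Pairwise (Disjoint on U)) {u : V}
    (hu : ∀ i, u ∉ U i) (hadj : ∀ a ∈ U 0, G.Adj u a) :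
    #(G.pathFinset U) ≤ (l - 1) ^ (m + 1) * Fintype.card V ^ m *
      (#(U 0) * #(U (Fin.last _)) + (l - 1) * Fintype.card V) := by
  induction m generalizing u with
  | zero =>
    rw [card_pathFinset_eq_sum_sum (k := 0)]
    simpa [card_pathFinset_one] using sum_sum_card_filter_adj_le hl hfree hU hu hadj
  | succ m ih =>
    set n := Fintype.card V
    set c := (l - 1) ^ (m + 1) * n ^ m
    set z := #(U (Fin.last _))
    have hW : ∀ a ∈ U 0, ∀ b ∈ U 1, G.Adj a b →
        #(G.pathFinset (G.neighborTail b (G.neighborTail a U))) ≤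
          c * (#{x ∈ U 2 | G.Adj b x} * z + (l - 1) * n) := by
      intro a ha b hb hab
      have hT := pairwise_disjoint_neighborTail (G := G) (a := a) hU
      have hbT : b ∈ G.neighborTail a U 0 := by simp [hb, hab]
      -- the restricted family starts with `{x ∈ U 2 | G.Adj b x}` and ends with `U (Fin.last _)`,
      -- both definitionally
      exact ih (pairwise_disjoint_neighborTail hT) (notMem_neighborTail hT hbT)
        fun _ => adj_of_mem_neighborTail_zero
    have hU2 : #(U 2) ≤ n := card_le_univ _
    have hU01z : z + (#(U 0) + #(U 1)) ≤ n := by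
      rw [← card_union_of_disjoint (hU zero_ne_one)]
      refine card_add_card_le_card_univ (disjoint_union_right.2 ⟨hU ?_, hU ?_⟩) <;>
        simp [Fin.ext_iff]
    calc #(G.pathFinset U)
        = ∑ a ∈ U 0, ∑ b ∈ U 1 with G.Adj a b,
            #(G.pathFinset (G.neighborTail b (G.neighborTail a U))) :=
          card_pathFinset_eq_sum_sum (k := 2 * m + 2) U
      _ ≤ ∑ a ∈ U 0, ∑ b ∈ U 1 with G.Adj a b, c * (#{x ∈ U 2 | G.Adj b x} * z + (l - 1) * n) := by
          gcongr with a ha b hb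
          rw [mem_filter] at hb
          exact hW a ha b hb.1 hb.2
      _ = c * z * ∑ a ∈ U 0, ∑ b ∈ U 1 with G.Adj a b, #{x ∈ U 2 | G.Adj b x} +
            c * (l - 1) * n * ∑ a ∈ U 0, #{b ∈ U 1 | G.Adj a b} := by
          rw [mul_sum, mul_sum, ← sum_add_distrib]
          refine sum_congr rfl fun a _ => ?_
          rw [card_eq_sum_ones {b ∈ U 1 | G.Adj a b}, mul_sum, mul_sum, ← sum_add_distrib]
          exact sum_congr rfl fun b _ => by ring
      _ ≤ c * z * ((l - 1) * (#(U 0) * #(U 2) + (l - 1) * n)) +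
            c * (l - 1) * n * ((l - 1) * (#(U 0) + #(U 1))) := by
          gcongr
          · exact sum_sum_card_filter_adj_le hl hfree hU hu hadj
          · exact sum_card_filter_adj_le hl hfree (hU zero_ne_one) (hu 0) (hu 1) hadj
      _ = c * (l - 1) * (#(U 0) * z * #(U 2) + (l - 1) * n * (z + (#(U 0) + #(U 1)))) := by ring
      _ ≤ c * (l - 1) * (#(U 0) * z * n + (l - 1) * n * n) := by gcongr
      _ = (l - 1) ^ (m + 1 + 1) * n ^ (m + 1) * (#(U 0) * z + (l - 1) * n) := by ring

end SimpleGraph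

theorem stmt6 {V : Type*} [Fintype V] (n s l : ℕ) (hn : Fintype.card V = n)
    (hs : 2 ≤ s) (hl : 2 ≤ l)
    (G : SimpleGraph V) (hfree : CycleFree G (2 * l))
    (u0 : V) (U : Fin s → Set V)
    (hdisj : ∀ i j, i ≠ j → Disjoint (U i) (U j))
    (hu0 : ∀ i, u0 ∉ U i)
    (hadj : ∀ u ∈ U ⟨0, by omega⟩, G.Adj u0 u) :
    (Odd s → pCount G U ≤ (l - 1) ^ ((s - 1) / 2) * n ^ ((s - 3) / 2) *
        ((U ⟨0, by omega⟩).ncard * (U ⟨s - 1, by omega⟩).ncard + (l - 1) * n)) ∧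
    (Even s → pCount G U ≤ (l - 1) ^ (s / 2) * n ^ (s / 2 - 1) *
        ((U ⟨0, by omega⟩).ncard + (U ⟨1, by omega⟩).ncard)) := by
  classical
  obtain ⟨F, rfl⟩ : ∃ F : Fin s → Finset V, U = fun i => (F i : Set V) :=
    ⟨fun i => (U i).toFinset, by simp⟩
  have hF : Pairwise (Disjoint on F) := fun i j hij => Finset.disjoint_coe.1 (hdisj i j hij)
  subst hn
  simp only [Set.ncard_coe_finset, G.pCount_coe_eq_card_pathFinset]
  refine ⟨fun hodd => ?_, fun heven => ?_⟩
  · obtain ⟨m, rfl⟩ : ∃ m, s = 2 * m + 3 := ⟨(s - 3) / 2, by obtain ⟨j, hj⟩ := hodd; omega⟩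
    convert G.card_pathFinset_le_of_odd hl hfree m hF hu0 hadj using 4 <;> first | omega | rfl
  · obtain ⟨m, rfl⟩ : ∃ m, s = 2 * m + 2 := ⟨s / 2 - 1, by obtain ⟨j, hj⟩ := heven; omega⟩
    convert G.card_pathFinset_le_of_even hl hfree m hF hu0 hadj using 4 <;> first | omega | rfl
end

section
/- Let ℓ ≥ 2 and let G be an n-vertex graph with no cycle of length 2ℓ. Then every vertex v of G is the endpoint of at most 4(ℓ−1)n paths of length 2. -/
/-!
Let `X` be the neighbourhood of `v`. A path `v, x, y` is an ordered edge `(x, y)` of the graph `H`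
on `V ∖ {v}` formed by the edges of `G` that meet `X`. So if there are more than `4(ℓ-1)n` such
paths, `H` has a nonempty vertex set inducing minimum degree above `2(ℓ-1)`, and a longest path
there closes, through the farthest neighbour of its endpoint, into a cycle of length `c ≥ 2ℓ`.
Every edge of that cycle meets `X`; a counting argument on `ZMod c` then gives two vertices of `X`
at distance exactly `2(ℓ-1)` along it, which together with `v` span a cycle of length `2ℓ` in `G`.
-/

open SimpleGraph

open Finset Function

theorem ZMod.exists_and_add_two_mul {c : ℕ} [NeZero c] (χ : ZMod c → Prop)
    (hχ : ∀ i, χ i ∨ χ (i + 1)) (k : ℕ) : ∃ i, χ i ∧ χ (i + (2 * k : ℕ)) := by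
  classical
  by_contra! h
  set S : Finset (ZMod c) := {i | χ i}
  have hSc : ∀ i ∈ Sᶜ, i + 1 ∈ S := by
    simpa [S] using fun i hi => (hχ i).resolve_left hi
  -- `· + 2k` maps `S` into `Sᶜ` and `· + 1` maps `Sᶜ` into `S`, so both are bijections
  have hcard : #S ≤ #Sᶜ := card_le_card_of_injOn (· + (2 * k : ℕ))
    (by intro i; simpa [S] using h i) (add_left_injective _).injOn
  have himg : Sᶜ.image (· + 1) = S :=
    eq_of_subset_of_card_le (image_subset_iff.2 hSc)
      (by rw [card_image_of_injective _ (add_left_injective _)]; exact hcard)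
  have hshift : ∀ i, χ i → ¬ χ (i + 1) := by
    intro i hi hi1
    obtain ⟨j, hj, hji⟩ := mem_image.1 (himg.symm ▸ (by simpa [S] using hi1 : i + 1 ∈ S))
    exact (by simpa [S] using hj : ¬ χ j) (add_right_cancel hji ▸ hi)
  have hstep : ∀ (m : ℕ) i, χ i → χ (i + (2 * m : ℕ)) := by
    intro m
    induction m with
    | zero => simp
    | succ m ih =>
      intro i hi
      have := (hχ _).resolve_left (hshift _ (ih i hi))
      convert this using 1
      push_cast
      ring
  obtain ⟨i, hi⟩ : ∃ i, χ i := (hχ 0).elim (⟨0, ·⟩) (⟨0 + 1, ·⟩)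
  exact h i hi (hstep k i hi)

namespace SimpleGraph

variable {V : Type*} {G : SimpleGraph V}

theorem exists_walk_of_adj_succ (f : ℕ → V) (m : ℕ)
    (hf : ∀ j < m, G.Adj (f j) (f (j + 1))) :
    ∃ w : G.Walk (f 0) (f m), w.length = m ∧ w.support = (List.range (m + 1)).map f := by
  induction m generalizing f with
  | zero => exact ⟨.nil, rfl, rfl⟩
  | succ m ih =>
    obtain ⟨w, hlen, hsupp⟩ := ih (fun j => f (j + 1)) fun j hj => hf (j + 1) (by omega)
    refine ⟨.cons (hf 0 m.succ_pos) w, by simp [hlen], ?_⟩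
    simp [hsupp, List.range_succ_eq_map, Function.comp_def]

theorem exists_isCycle_of_injective_zmod {c : ℕ} {f : ZMod c → V} (hf : Injective f)
    (hadj : ∀ i, G.Adj (f i) (f (i + 1))) {v : V} (hv : ∀ i, f i ≠ v) {i : ZMod c} {m : ℕ}
    (hm : 0 < m) (hmc : m < c) (hvi : G.Adj v (f i)) (hvim : G.Adj v (f (i + m))) :
    ∃ (u : V) (C : G.Walk u u), C.IsCycle ∧ C.length = m + 2 := by
  set g : ℕ → V := fun s => f (i + s)
  have hg : Set.InjOn g (Set.Iio c) := by
    intro s hs s' hs' h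
    have := congrArg ZMod.val (add_left_cancel (hf h))
    rwa [ZMod.val_natCast_of_lt hs, ZMod.val_natCast_of_lt hs'] at this
  obtain ⟨p, hlen, hsupp⟩ := exists_walk_of_adj_succ g m fun j _ => by
    simpa [g, add_assoc] using hadj (i + j)
  have hp : p.IsPath := by
    rw [Walk.isPath_def, hsupp]
    exact List.nodup_range.map_on fun s hs s' hs' h =>
      hg (Set.mem_Iio.2 (by rw [List.mem_range] at hs; omega))
        (Set.mem_Iio.2 (by rw [List.mem_range] at hs'; omega)) h
  have hvp : v ∉ p.support := by simp [hsupp, g, hv]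
  have hg0 : g 0 = f i := by simp [g]
  refine ⟨v, .cons (hg0 ▸ hvi) (p.concat hvim.symm), ?_, by simp [hlen]⟩
  rw [Walk.cons_isCycle_iff, Walk.edges_concat]
  refine ⟨hp.concat hvp _, ?_⟩
  simp only [List.concat_eq_append, List.mem_append, List.mem_singleton, Sym2.eq_swap, Sym2.eq_iff]
  rintro (h | h)
  · exact hvp (Walk.fst_mem_support_of_mem_edges p h)
  · obtain ⟨-, h⟩ | ⟨-, h⟩ := h
    · exact hm.ne (hg (Set.mem_Iio.2 (by omega)) (Set.mem_Iio.2 hmc) h)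
    · exact hv i (hg0 ▸ h)

section Degeneracy

variable [DecidableEq V] (G) [DecidableRel G.Adj]

theorem card_filter_adj_product_le_erase (s : Finset V) (a : V) :
    #{p ∈ s ×ˢ s | G.Adj p.1 p.2} ≤
      #{p ∈ s.erase a ×ˢ s.erase a | G.Adj p.1 p.2} + 2 * #{b ∈ s | G.Adj a b} := by
  set N : Finset V := {b ∈ s | G.Adj a b}
  calc #{p ∈ s ×ˢ s | G.Adj p.1 p.2}
      ≤ #({p ∈ s.erase a ×ˢ s.erase a | G.Adj p.1 p.2} ∪ ({a} ×ˢ N ∪ N ×ˢ {a})) := by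
        refine card_le_card fun p hp => ?_
        simp only [mem_filter, mem_product, mem_union, mem_erase, mem_singleton, N] at hp ⊢
        by_cases h1 : p.1 = a <;> by_cases h2 : p.2 = a <;> simp_all [G.adj_comm]
    _ ≤ #{p ∈ s.erase a ×ˢ s.erase a | G.Adj p.1 p.2} + (#N + #N) := by
        grw [card_union_le, card_union_le]
        simp
    _ = _ := by ring

theorem exists_subset_forall_lt_card_filter_adj {d : ℕ} {s : Finset V}
    (hs : 2 * d * #s < #{p ∈ s ×ˢ s | G.Adj p.1 p.2}) :
    ∃ t ⊆ s, t.Nonempty ∧ ∀ a ∈ t, d < #{b ∈ t | G.Adj a b} := by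
  induction s using Finset.strongInduction with
  | H s ih =>
    by_cases hmin : ∀ a ∈ s, d < #{b ∈ s | G.Adj a b}
    · refine ⟨s, subset_rfl, nonempty_iff_ne_empty.2 ?_, hmin⟩
      rintro rfl
      simp at hs
    obtain ⟨a, ha, hda⟩ := not_forall₂.1 hmin
    have hs' : 2 * d * #(s.erase a) < #{p ∈ s.erase a ×ˢ s.erase a | G.Adj p.1 p.2} := by
      have := card_filter_adj_product_le_erase G s a
      rw [card_erase_of_mem ha, Nat.mul_sub, mul_one]
      have : 1 ≤ #s := card_pos.2 ⟨a, ha⟩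
      have : 2 * d ≤ 2 * d * #s := Nat.le_mul_of_pos_right _ this
      omega
    obtain ⟨t, hts, ht, hdeg⟩ := ih _ (erase_ssubset ha) hs'
    exact ⟨t, hts.trans (erase_subset a s), ht, hdeg⟩

end Degeneracy

theorem Walk.IsPath.exists_injective_zmod_of_adj_getVert {a b : V} {w : G.Walk a b}
    (hw : w.IsPath) {j : ℕ} (hj : j < w.length) (hadj : G.Adj b (w.getVert j)) :
    ∃ f : ZMod (w.length - j + 1) → V, Injective f ∧ ∀ i, G.Adj (f i) (f (i + 1)) := by
  refine ⟨fun i => w.getVert (j + i.val), fun i i' h => ZMod.val_injective _ ?_, fun i => ?_⟩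
  · have := hw.getVert_injOn (show j + i.val ≤ w.length by have := ZMod.val_lt i; omega)
      (show j + i'.val ≤ w.length by have := ZMod.val_lt i'; omega) h
    omega
  · have hval : (i + 1).val = (i.val + 1) % (w.length - j + 1) := by
      rw [ZMod.val_add, ZMod.val_one_eq_one_mod, Nat.add_mod_mod]
    have := ZMod.val_lt i
    simp only [hval]
    rcases Nat.lt_or_ge (i.val + 1) (w.length - j + 1) with hi | hi
    · rw [Nat.mod_eq_of_lt hi, ← add_assoc]
      exact w.adj_getVert_succ (by omega)
    · rw [show i.val + 1 = w.length - j + 1 by omega, Nat.mod_self, add_zero,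
        w.getVert_of_length_le (by omega)]
      exact hadj

theorem exists_isPath_forall_adj_mem_support [Finite V] {t : Set V} (ht : t.Nonempty) :
    ∃ (a b : V) (w : G.Walk a b), w.IsPath ∧ b ∈ t ∧
      ∀ z ∈ t, G.Adj b z → z ∈ w.support := by
  have := Fintype.ofFinite V
  by_contra! h
  have hlong : ∀ n, ∃ (a b : V) (w : G.Walk a b), w.IsPath ∧ b ∈ t ∧ w.length = n := by
    intro n
    induction n with
    | zero => exact ⟨_, _, .nil, .nil, ht.some_mem, rfl⟩
    | succ n ih =>
      obtain ⟨a, b, w, hw, hb, hlen⟩ := ih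
      obtain ⟨z, hz, hbz, hzw⟩ := h a b w hw hb
      exact ⟨a, z, w.concat hbz, hw.concat hzw hbz, hz, by simp [hlen]⟩
  obtain ⟨a, b, w, hw, -, hlen⟩ := hlong (Fintype.card V)
  exact (hlen ▸ hw.length_lt).false

theorem exists_injective_zmod_of_forall_lt_card_filter_adj [Finite V] [DecidableRel G.Adj]
    {d : ℕ} {t : Finset V} (ht : t.Nonempty) (hdeg : ∀ a ∈ t, d < #{b ∈ t | G.Adj a b}) :
    ∃ c, d + 2 ≤ c ∧ ∃ f : ZMod c → V, Injective f ∧ ∀ i, G.Adj (f i) (f (i + 1)) := by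
  classical
  obtain ⟨a, b, w, hw, hb, hnbr⟩ :=
    exists_isPath_forall_adj_mem_support (G := G) (t := ↑t) ht
  have hex : ∃ i, G.Adj b (w.getVert i) := by
    obtain ⟨z, hz⟩ := card_pos.1 (Nat.zero_lt_of_lt (hdeg b hb))
    rw [mem_filter] at hz
    obtain ⟨i, rfl, -⟩ := Walk.mem_support_iff_exists_getVert.1 (hnbr z hz.1 hz.2)
    exact ⟨i, hz.2⟩
  set j := Nat.find hex
  have hj : j < w.length := by
    by_contra! h
    have := Nat.find_spec hex
    rw [w.getVert_of_length_le h] at this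
    exact this.ne rfl
  -- every neighbour of `b` in `t` lies on `w` at a position in `[j, w.length)`
  have hcard : #{z ∈ t | G.Adj b z} ≤ w.length - j := by
    refine (card_le_card fun z hz => ?_).trans ((card_image_le (f := w.getVert)).trans
      (Nat.card_Ico j w.length).le)
    rw [mem_filter] at hz
    obtain ⟨i, rfl, hi⟩ := Walk.mem_support_iff_exists_getVert.1 (hnbr _ hz.1 hz.2)
    refine mem_image.2 ⟨i, mem_Ico.2 ⟨Nat.find_min' hex hz.2, lt_of_le_of_ne hi ?_⟩, rfl⟩
    rintro rfl
    exact hz.2.ne (w.getVert_length).symm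
  have := hdeg b hb
  exact ⟨_, by omega, hw.exists_injective_zmod_of_adj_getVert hj (Nat.find_spec hex)⟩

end SimpleGraph

theorem stmt7 {V : Type*} [Fintype V] (n l : ℕ) (hn : Fintype.card V = n) (hl : 2 ≤ l)
    (G : SimpleGraph V) (hfree : CycleFree G (2 * l)) (v : V) :
    Nat.card {p : V × V // G.Adj v p.1 ∧ G.Adj p.1 p.2 ∧ p.2 ≠ v} ≤ 4 * (l - 1) * n := by
  classical
  by_contra! hcon
  let H : SimpleGraph V :=
    { Adj a b := G.Adj a b ∧ a ≠ v ∧ b ≠ v ∧ (G.Adj v a ∨ G.Adj v b)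
      symm := ⟨fun a b h => ⟨h.1.symm, h.2.2.1, h.2.1, h.2.2.2.symm⟩⟩
      loopless := ⟨fun a h => h.1.ne rfl⟩ }
  have hdense :
      2 * (2 * (l - 1)) * #(univ : Finset V) < #{p ∈ univ ×ˢ univ | H.Adj p.1 p.2} := by
    calc 2 * (2 * (l - 1)) * #(univ : Finset V) = 4 * (l - 1) * n := by rw [card_univ, hn]; ring
      _ < Nat.card {p : V × V // G.Adj v p.1 ∧ G.Adj p.1 p.2 ∧ p.2 ≠ v} := hcon
      _ ≤ _ := by
        rw [Nat.card_eq_fintype_card, Fintype.card_subtype]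
        refine card_le_card fun p hp => ?_
        simp only [mem_filter, mem_univ, mem_product, true_and] at hp ⊢
        exact ⟨hp.2.1, hp.1.ne', hp.2.2, .inl hp.1⟩
  obtain ⟨t, -, ht, hdeg⟩ := H.exists_subset_forall_lt_card_filter_adj hdense
  obtain ⟨c, hc, f, hf, hadj⟩ := exists_injective_zmod_of_forall_lt_card_filter_adj ht hdeg
  have : NeZero c := ⟨by omega⟩
  obtain ⟨i, hi, hi'⟩ := ZMod.exists_and_add_two_mul (fun i => G.Adj v (f i))
    (fun i => (hadj i).2.2.2) (l - 1)
  obtain ⟨u, C, hC, hlen⟩ := exists_isCycle_of_injective_zmod hf (fun i => (hadj i).1)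
    (fun i => (hadj i).2.1) (by omega) (by omega) hi hi'
  exact hfree C hC (by omega)
end

section
/- For every ℓ ≥ 2, the maximum number of copies of C_3 (triangles) in an n-vertex C_{2ℓ}-free graph is at most ((2ℓ−3)/3) · ex(n, C_{2ℓ}), where ex(n, C_{2ℓ}) is the maximum number of edges in an n-vertex C_{2ℓ}-free graph. -/
open SimpleGraph

/-!
Counting each triangle at each of its three vertices gives `3 t(G) = ∑ᵥ e(N(v))`. A path of
length `2ℓ - 2` inside `N(v)`, closed up through `v`, would be a cycle of length `2ℓ`, so by the
Erdős–Gallai theorem `2 e(N(v)) ≤ (2ℓ - 3) deg v`; summing over `v` gives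
`3 t(G) ≤ (2ℓ - 3) e(G) ≤ (2ℓ - 3) ex(n, C_{2ℓ})`.

Erdős–Gallai (no path of length `k + 1` inside `s` implies `2 e(s) ≤ k |s|`) goes by induction on
`s`. Either some vertex has at most `k / 2` neighbours in `s` and can be deleted, or every degree
exceeds `k / 2`; then the neighbourhoods of the two ends of a longest path `L` overlap after a shift
by one, which closes `L` into a cycle through all its vertices. An edge leaving `L` would extend
this cycle to a longer path, so `L` spans a union of components, carrying at most
`|L| (|L| - 1) / 2 ≤ k |L| / 2` edges, and is split off.
-/

open Finset

namespace List

variable {α : Type*}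

theorem exists_cons_perm_isChain_of_cyclic {R : α → α → Prop} {C : List α} (hC : C.IsChain R)
    (hclose : ∀ x ∈ C.getLast?, ∀ y ∈ C.head?, R x y) {z : α} (hz : z ∈ C) :
    ∃ l, (z :: l).Perm C ∧ (z :: l).IsChain R := by
  obtain ⟨A, B, rfl⟩ := append_of_mem hz
  refine ⟨B ++ A, perm_append_comm (l₁ := z :: B), ?_⟩
  refine hC.right_of_append.append hC.left_of_append fun x hx y hy => hclose x ?_ y ?_
  · simpa using hx
  · cases A <;> simp_all

theorem exists_cons_perm_isChain_of_split {R : α → α → Prop} [Std.Symm R] {L₁ L₂ : List α}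
    {a b : α} (hL : (L₁ ++ b :: a :: L₂).IsChain R)
    (hx : ∀ x ∈ (L₁ ++ b :: a :: L₂).head?, R x a)
    (hy : ∀ y ∈ (L₁ ++ b :: a :: L₂).getLast?, R y b) {z : α} (hz : z ∈ L₁ ++ b :: a :: L₂) :
    ∃ l, (z :: l).Perm (L₁ ++ b :: a :: L₂) ∧ (z :: l).IsChain R := by
  rw [show L₁ ++ b :: a :: L₂ = (L₁ ++ [b]) ++ (a :: L₂) by simp] at hL hx hy hz ⊢
  have hperm : ((L₁ ++ [b]) ++ (a :: L₂).reverse).Perm ((L₁ ++ [b]) ++ (a :: L₂)) :=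
    (reverse_perm _).append_left _
  -- the cycle `x ⋯ b y ⋯ a`
  have hC : ((L₁ ++ [b]) ++ (a :: L₂).reverse).IsChain R := by
    refine hL.left_of_append.append ?_ fun b' hb' y hy' => ?_
    · exact isChain_reverse.2 (hL.right_of_append.imp fun _ _ h => Std.Symm.symm _ _ h)
    · obtain rfl : b = b' := by simpa using hb'
      exact Std.Symm.symm _ _ (hy y (by simpa [getLast?_cons] using hy'))
  have hclose : ∀ y ∈ ((L₁ ++ [b]) ++ (a :: L₂).reverse).getLast?,
      ∀ x ∈ ((L₁ ++ [b]) ++ (a :: L₂).reverse).head?, R y x := by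
    intro a' ha' x hx'
    obtain rfl : a = a' := by simpa [getLast?_cons] using ha'
    exact Std.Symm.symm _ _ (hx x (by cases L₁ <;> simp_all))
  obtain ⟨l, hl, hchain⟩ := exists_cons_perm_isChain_of_cyclic hC hclose (hperm.mem_iff.2 hz)
  exact ⟨l, hl.trans hperm, hchain⟩

theorem exists_eq_append_cons_cons_of_le_card [DecidableEq α] (L : List α) (hL : L ≠ [])
    (X Y : Finset α) (hX : ∀ a ∈ X, a ∈ L.tail) (hY : ∀ b ∈ Y, b ∈ L.dropLast)
    (hcard : L.length ≤ #X + #Y) :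
    ∃ L₁ b a L₂, L = L₁ ++ b :: a :: L₂ ∧ a ∈ X ∧ b ∈ Y := by
  induction L generalizing X Y with
  | nil => exact absurd rfl hL
  | cons u T ih =>
    cases T with
    | nil =>
      rw [eq_empty_of_forall_notMem (s := X) (by simpa using hX),
        eq_empty_of_forall_notMem (s := Y) (by simpa using hY)] at hcard
      simp at hcard
    | cons v rest =>
      by_cases huv : v ∈ X ∧ u ∈ Y
      · exact ⟨[], u, v, rest, rfl, huv⟩
      have hcard' : (v :: rest).length ≤ #(X.erase v) + #(Y.erase u) := by
        have := pred_card_le_card_erase (s := X) (a := v)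
        have := pred_card_le_card_erase (s := Y) (a := u)
        rcases not_and_or.1 huv with h | h <;> rw [erase_eq_of_notMem h] <;>
          simp only [length_cons] at hcard ⊢ <;> omega
      obtain ⟨L₁, b, a, L₂, hsplit, ha, hb⟩ := ih (cons_ne_nil _ _) (X.erase v) (Y.erase u)
        (fun a ha => by
          obtain ⟨hav, haX⟩ := Finset.mem_erase.1 ha
          simpa [hav] using hX a haX)
        (fun b hb => by
          obtain ⟨hbu, hbY⟩ := Finset.mem_erase.1 hb
          simpa [hbu] using hY b hbY) hcard'
      exact ⟨u :: L₁, b, a, L₂, by rw [hsplit, cons_append], Finset.mem_of_mem_erase ha,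
        Finset.mem_of_mem_erase hb⟩

end List

namespace SimpleGraph

variable {V : Type*} (G : SimpleGraph V)

def IsPathIn (s : Finset V) (L : List V) : Prop :=
  L.IsChain G.Adj ∧ L.Nodup ∧ ∀ x ∈ L, x ∈ s

theorem exists_isPath_support_eq {L : List V} (hne : L ≠ []) (hc : L.IsChain G.Adj)
    (hn : L.Nodup) : ∃ (a b : V) (p : G.Walk a b), p.IsPath ∧ p.support = L :=
  ⟨_, _, Walk.ofSupport L hne hc, by rw [Walk.isPath_def, Walk.support_ofSupport]; exact hn,
    Walk.support_ofSupport hne hc⟩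

theorem exists_isPathIn_maximal {s : Finset V} {k : ℕ} (hs : s.Nonempty)
    (hlong : ∀ L, G.IsPathIn s L → L.length ≤ k) :
    ∃ L, G.IsPathIn s L ∧ L ≠ [] ∧ ∀ L', G.IsPathIn s L' → L'.length ≤ L.length := by
  set lengths := {n | ∃ L, G.IsPathIn s L ∧ L.length = n}
  obtain ⟨v, hv⟩ := hs
  have hsingle : 1 ∈ lengths := ⟨[v], by simp [IsPathIn, hv], rfl⟩
  have hbdd : BddAbove lengths := ⟨k, by rintro _ ⟨L, hL, rfl⟩; exact hlong L hL⟩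
  obtain ⟨L, hL, hlen⟩ := Nat.sSup_mem ⟨1, hsingle⟩ hbdd
  refine ⟨L, hL, ?_, fun L' hL' => hlen ▸ le_csSup hbdd ⟨L', hL', rfl⟩⟩
  rintro rfl
  simpa [← hlen] using le_csSup hbdd hsingle

namespace IsPathIn

variable {G} {s : Finset V} {L : List V}

theorem reverse (hL : G.IsPathIn s L) : G.IsPathIn s L.reverse :=
  ⟨List.isChain_reverse.2 (hL.1.imp fun _ _ h => h.symm), List.nodup_reverse.2 hL.2.1,
    fun x hx => hL.2.2 x (List.mem_reverse.1 hx)⟩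

theorem mem_of_adj_head (hL : G.IsPathIn s L)
    (hmax : ∀ L', G.IsPathIn s L' → L'.length ≤ L.length) :
    ∀ x ∈ L.head?, ∀ w ∈ s, G.Adj x w → w ∈ L := by
  intro x hx w hw hxw
  by_contra hwL
  have hchain : (w :: L).IsChain G.Adj :=
    hL.1.cons fun y hy => Option.mem_unique hx hy ▸ hxw.symm
  have := hmax (w :: L) ⟨hchain, List.nodup_cons.2 ⟨hwL, hL.2.1⟩, by simpa [hw] using hL.2.2⟩
  simp at this

theorem mem_of_adj_getLast (hL : G.IsPathIn s L)
    (hmax : ∀ L', G.IsPathIn s L' → L'.length ≤ L.length) :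
    ∀ y ∈ L.getLast?, ∀ w ∈ s, G.Adj y w → w ∈ L := by
  intro y hy w hw hyw
  rw [← List.head?_reverse] at hy
  simpa using hL.reverse.mem_of_adj_head (by simpa using hmax) y hy w hw hyw

end IsPathIn

variable [DecidableEq V] [DecidableRel G.Adj]

theorem exists_isPathIn_closed {s : Finset V} {k : ℕ} (hs : s.Nonempty)
    (hlong : ∀ L, G.IsPathIn s L → L.length ≤ k + 1)
    (hdeg : ∀ v ∈ s, k < 2 * #{w ∈ s | G.Adj v w}) :
    ∃ L, G.IsPathIn s L ∧ L ≠ [] ∧ ∀ z ∈ L, ∀ w ∈ s, G.Adj z w → w ∈ L := by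
  obtain ⟨L, hL, hne, hmax⟩ := G.exists_isPathIn_maximal hs hlong
  refine ⟨L, hL, hne, fun z hz w hw hzw => ?_⟩
  by_contra hwL
  obtain ⟨x, hx⟩ : ∃ x, L.head? = some x := ⟨_, List.head?_eq_some_head hne⟩
  obtain ⟨y, hy⟩ : ∃ y, L.getLast? = some y := ⟨_, List.getLast?_eq_some_getLast hne⟩
  have hxs : x ∈ s := hL.2.2 x (List.mem_of_head? hx)
  have hys : y ∈ s := hL.2.2 y (List.mem_of_getLast? hy)
  obtain ⟨L₁, b, a, L₂, rfl, ha, hb⟩ := L.exists_eq_append_cons_cons_of_le_card hne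
    {w ∈ s | G.Adj x w} {w ∈ s | G.Adj y w}
    (fun a ha => by
      rw [mem_filter] at ha
      have haL := hL.mem_of_adj_head hmax x hx a ha.1 ha.2
      cases L <;> simp_all [ha.2.ne'])
    (fun b hb => by
      rw [mem_filter] at hb
      have hbL := hL.mem_of_adj_getLast hmax y hy b hb.1 hb.2
      rw [← List.dropLast_append_getLast? y hy] at hbL
      simpa [hb.2.ne'] using hbL)
    (by have := hdeg x hxs; have := hdeg y hys; have := hlong _ hL; omega)
  rw [mem_filter] at ha hb
  -- `L` closes into a cycle through `x ~ a` and `y ~ b`; started at `z`, it extends by `w`.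
  have : Std.Symm G.Adj := G.symm
  obtain ⟨l, hperm, hchain⟩ := List.exists_cons_perm_isChain_of_split hL.1
    (fun x' hx' => Option.mem_unique hx hx' ▸ ha.2) (fun y' hy' => Option.mem_unique hy hy' ▸ hb.2)
    hz
  have hlonger := hmax (w :: z :: l) ⟨hchain.cons fun _ h => Option.mem_unique rfl h ▸ hzw.symm,
    List.nodup_cons.2 ⟨fun h => hwL (hperm.mem_iff.1 h), hperm.nodup_iff.2 hL.2.1⟩,
    fun v hv => ?_⟩
  · simp [← hperm.length_eq] at hlonger
  · rcases List.mem_cons.1 hv with rfl | hv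
    exacts [hw, hL.2.2 v (hperm.mem_iff.1 hv)]

variable [Fintype V]

/-! The edges of `G` inside `s` are counted as the `2`-cliques of `G` contained in `s`. -/

theorem card_edges_le_card_edges_erase_add_degree (s : Finset V) (v : V) :
    #{e ∈ G.cliqueFinset 2 | e ⊆ s} ≤
      #{e ∈ G.cliqueFinset 2 | e ⊆ s.erase v} + #{w ∈ s | G.Adj v w} := by
  refine (card_le_card fun e he => ?_).trans
    ((card_union_le _ _).trans
      (Nat.add_le_add_left (card_image_le (f := fun w => ({v, w} : Finset V))) _))
  simp only [mem_filter, mem_cliqueFinset_iff] at he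
  obtain ⟨⟨hclique, hcard⟩, hes⟩ := he
  obtain ⟨a, b, hab, rfl⟩ := card_eq_two.1 hcard
  have hadj : G.Adj a b := hclique (by simp) (by simp) hab
  simp only [insert_subset_iff, singleton_subset_iff] at hes
  by_cases hv : v = a ∨ v = b
  · refine mem_union_right _ (mem_image.2 ?_)
    rcases hv with rfl | rfl
    · exact ⟨b, by simp [hes.2, hadj], rfl⟩
    · exact ⟨a, by simp [hes.1, hadj.symm], pair_comm _ _⟩
  · rw [not_or] at hv
    refine mem_union_left _ (mem_filter.2 ⟨?_, ?_⟩)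
    · exact mem_cliqueFinset_iff.2 ⟨hclique, hcard⟩
    · simp [insert_subset_iff, hes, Ne.symm hv.1, Ne.symm hv.2]

theorem card_edges_le_add_of_closed {s A : Finset V}
    (hA : ∀ z ∈ A, ∀ w ∈ s, G.Adj z w → w ∈ A) :
    #{e ∈ G.cliqueFinset 2 | e ⊆ s} ≤
      #{e ∈ G.cliqueFinset 2 | e ⊆ A} + #{e ∈ G.cliqueFinset 2 | e ⊆ s \ A} := by
  refine (card_le_card fun e he => ?_).trans (card_union_le _ _)
  simp only [mem_filter, mem_cliqueFinset_iff] at he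
  obtain ⟨⟨hclique, hcard⟩, hes⟩ := he
  obtain ⟨a, b, hab, rfl⟩ := card_eq_two.1 hcard
  have hadj : G.Adj a b := hclique (by simp) (by simp) hab
  simp only [insert_subset_iff, singleton_subset_iff] at hes
  simp only [mem_union, mem_filter, mem_cliqueFinset_iff, insert_subset_iff,
    singleton_subset_iff, mem_sdiff]
  by_cases ha : a ∈ A
  · exact Or.inl ⟨⟨hclique, hcard⟩, ha, hA a ha b hes.2 hadj⟩
  by_cases hb : b ∈ A
  · exact absurd (hA b hb a hes.1 hadj.symm) ha
  · exact Or.inr ⟨⟨hclique, hcard⟩, ⟨hes.1, ha⟩, hes.2, hb⟩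

theorem two_mul_card_edges_le (s : Finset V) :
    2 * #{e ∈ G.cliqueFinset 2 | e ⊆ s} ≤ #s * (#s - 1) := by
  have hsub : {e ∈ G.cliqueFinset 2 | e ⊆ s} ⊆ s.powersetCard 2 := fun e he => by
    simp only [mem_filter, mem_cliqueFinset_iff] at he
    exact mem_powersetCard.2 ⟨he.2, he.1.2⟩
  calc 2 * #{e ∈ G.cliqueFinset 2 | e ⊆ s} ≤ 2 * (#s).choose 2 := by
        rw [← card_powersetCard]; exact Nat.mul_le_mul_left _ (card_le_card hsub)
    _ = #s * (#s - 1) := by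
        rw [Nat.choose_two_right, Nat.mul_div_cancel' (Nat.even_mul_pred_self _).two_dvd]

theorem two_mul_card_edges_le_of_isPathIn (k : ℕ) (s : Finset V)
    (hlong : ∀ L, G.IsPathIn s L → L.length ≤ k + 1) :
    2 * #{e ∈ G.cliqueFinset 2 | e ⊆ s} ≤ k * #s := by
  induction s using Finset.strongInduction with
  | _ s ih =>
  by_cases hlow : ∃ v ∈ s, 2 * #{w ∈ s | G.Adj v w} ≤ k
  · obtain ⟨v, hv, hdeg⟩ := hlow
    have herase := ih (s.erase v) (erase_ssubset hv) fun L hL =>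
      hlong L ⟨hL.1, hL.2.1, fun x hx => mem_of_mem_erase (hL.2.2 x hx)⟩
    have hk : k * (#s - 1) + k = k * #s := by
      rw [← Nat.mul_succ, Nat.succ_eq_add_one, Nat.sub_add_cancel (card_pos.2 ⟨v, hv⟩)]
    have := G.card_edges_le_card_edges_erase_add_degree s v
    rw [card_erase_of_mem hv] at herase
    omega
  rcases s.eq_empty_or_nonempty with rfl | hs
  · simpa using G.two_mul_card_edges_le ∅
  rw [not_exists] at hlow
  obtain ⟨L, hL, hne, hclosed⟩ := G.exists_isPathIn_closed hs hlong
    fun v hv => Nat.lt_of_not_le fun h => hlow v ⟨hv, h⟩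
  set S := L.toFinset
  have hSs : S ⊆ s := fun x hx => hL.2.2 x (List.mem_toFinset.1 hx)
  have hScard : #S ≤ k + 1 := (List.toFinset_card_of_nodup hL.2.1).trans_le (hlong L hL)
  have hrest := ih (s \ S) (sdiff_ssubset hSs (by simpa [S] using hne)) fun L' hL' =>
    hlong L' ⟨hL'.1, hL'.2.1, fun x hx => (mem_sdiff.1 (hL'.2.2 x hx)).1⟩
  have hsplit := G.card_edges_le_add_of_closed (s := s) (A := S) fun z hz w hw hzw =>
    List.mem_toFinset.2 (hclosed z (List.mem_toFinset.1 hz) w hw hzw)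
  have hS := G.two_mul_card_edges_le S
  have hSk : #S * (#S - 1) ≤ k * #S := by
    rw [mul_comm]; exact Nat.mul_le_mul_right _ (by omega)
  calc 2 * #{e ∈ G.cliqueFinset 2 | e ⊆ s}
      ≤ 2 * #{e ∈ G.cliqueFinset 2 | e ⊆ S} + 2 * #{e ∈ G.cliqueFinset 2 | e ⊆ s \ S} := by
        omega
    _ ≤ k * #S + k * #(s \ S) := Nat.add_le_add (hS.trans hSk) hrest
    _ = k * #s := by rw [← mul_add, add_comm, card_sdiff_add_card_eq_card hSs]

theorem two_mul_card_edges_le_of_isPath (k : ℕ) (s : Finset V)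
    (hpath : ∀ ⦃a b : V⦄ (p : G.Walk a b), p.IsPath → (∀ x ∈ p.support, x ∈ s) →
      p.length ≠ k + 1) :
    2 * #{e ∈ G.cliqueFinset 2 | e ⊆ s} ≤ k * #s := by
  refine G.two_mul_card_edges_le_of_isPathIn k s fun L hL => Nat.le_of_not_lt fun hlt => ?_
  have hlen : (L.take (k + 2)).length = k + 2 := by simp; omega
  obtain ⟨a, b, p, hp, hsupp⟩ := G.exists_isPath_support_eq
    (by rw [← List.length_pos_iff, hlen]; omega) (hL.1.take _) (hL.2.1.sublist (L.take_sublist _))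
  refine hpath p hp (fun x hx => hL.2.2 x (L.take_subset _ (hsupp ▸ hx))) ?_
  have := p.length_support
  rw [hsupp, hlen] at this
  omega

theorem card_cliqueFinset_succ_filter_mem (n : ℕ) (v : V) :
    #{t ∈ G.cliqueFinset (n + 1) | v ∈ t} = #{t ∈ G.cliqueFinset n | t ⊆ G.neighborFinset v} := by
  refine card_nbij' (·.erase v) (insert v) (fun t ht => ?_) (fun t ht => ?_)
    (fun t ht => ?_) (fun t ht => ?_)
  · simp only [mem_coe, mem_filter, mem_cliqueFinset_iff] at ht ⊢
    refine ⟨ht.1.erase_of_mem ht.2, fun w hw => ?_⟩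
    obtain ⟨hwv, hwt⟩ := mem_erase.1 hw
    exact (mem_neighborFinset _ _ _).2 (ht.1.isClique ht.2 hwt hwv.symm)
  · simp only [mem_coe, mem_filter, mem_cliqueFinset_iff] at ht ⊢
    exact ⟨ht.1.insert fun w hw => (mem_neighborFinset _ _ _).1 (ht.2 hw), mem_insert_self _ _⟩
  · simp only [mem_coe, mem_filter] at ht
    exact insert_erase ht.2
  · simp only [mem_coe, mem_filter] at ht
    exact erase_insert fun hv => G.irrefl ((mem_neighborFinset _ _ _).1 (ht.2 hv))

theorem sum_card_cliqueFinset_filter_mem (n : ℕ) :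
    ∑ v, #{t ∈ G.cliqueFinset n | v ∈ t} = n * #(G.cliqueFinset n) := by
  have := sum_card_bipartiteAbove_eq_sum_card_bipartiteBelow (s := univ) (t := G.cliqueFinset n)
    (r := fun v t => v ∈ t)
  simp only [bipartiteAbove, bipartiteBelow, filter_mem_eq_inter, univ_inter] at this
  rw [this, sum_congr rfl fun t ht => (mem_cliqueFinset_iff.1 ht).card_eq, sum_const, smul_eq_mul,
    mul_comm]

theorem three_mul_card_cliqueFinset_three_eq_sum :
    3 * #(G.cliqueFinset 3) = ∑ v, #{t ∈ G.cliqueFinset 2 | t ⊆ G.neighborFinset v} := by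
  simp only [← sum_card_cliqueFinset_filter_mem, card_cliqueFinset_succ_filter_mem]

end SimpleGraph

open SimpleGraph

theorem CycleFree.length_add_two_ne {V : Type*} {G : SimpleGraph V} {m : ℕ} (hG : CycleFree G m)
    {v a b : V} (p : G.Walk a b) (hp : p.IsPath) (hpos : 0 < p.length)
    (hN : ∀ x ∈ p.support, G.Adj v x) : p.length + 2 ≠ m := by
  have hv : v ∉ p.support := fun h => G.irrefl (hN v h)
  have hab : a ≠ b := by
    rintro rfl
    exact hpos.ne' (Walk.length_eq_zero_iff.2 (Walk.isPath_iff_nil.1 hp))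
  have hcycle :
      (Walk.cons (hN a p.start_mem_support) (p.concat (hN b p.end_mem_support).symm)).IsCycle := by
    refine (Walk.cons_isCycle_iff _ _).2 ⟨hp.concat hv _, fun he => ?_⟩
    rw [Walk.edges_concat, List.concat_eq_append, List.mem_append, List.mem_singleton] at he
    rcases he with he | he
    · exact hv (p.fst_mem_support_of_mem_edges he)
    · rw [Sym2.eq_iff] at he
      rcases he with ⟨rfl, -⟩ | ⟨-, rfl⟩
      exacts [hv p.end_mem_support, hab rfl]
  simpa using hG _ hcycle

theorem SimpleGraph.three_mul_card_cliqueFinset_three_le {V : Type*} [Fintype V] [DecidableEq V]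
    (G : SimpleGraph V) [DecidableRel G.Adj] {l : ℕ} (hl : 2 ≤ l) (hG : CycleFree G (2 * l)) :
    3 * #(G.cliqueFinset 3) ≤ (2 * l - 3) * #G.edgeFinset := by
  have hN : ∀ v,
      2 * #{t ∈ G.cliqueFinset 2 | t ⊆ G.neighborFinset v} ≤ (2 * l - 3) * G.degree v :=
    fun v => G.two_mul_card_edges_le_of_isPath _ _ fun a b p hp hsupp hlen =>
      hG.length_add_two_ne p hp (by omega) (fun x hx => (mem_neighborFinset _ _ _).1 (hsupp x hx))
        (by omega)
  refine Nat.le_of_mul_le_mul_left ?_ two_pos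
  calc 2 * (3 * #(G.cliqueFinset 3))
      = ∑ v, 2 * #{t ∈ G.cliqueFinset 2 | t ⊆ G.neighborFinset v} := by
        rw [three_mul_card_cliqueFinset_three_eq_sum, mul_sum]
    _ ≤ ∑ v, (2 * l - 3) * G.degree v := sum_le_sum fun v _ => hN v
    _ = 2 * ((2 * l - 3) * #G.edgeFinset) := by
        rw [← mul_sum, sum_degrees_eq_twice_card_edges, mul_left_comm]

namespace SimpleGraph.Subgraph

variable {V : Type*} {G : SimpleGraph V} {G' : G.Subgraph}

theorem adj_iff_of_coe_eq_top (h : G'.coe = ⊤) {a b : V} :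
    G'.Adj a b ↔ a ∈ G'.verts ∧ b ∈ G'.verts ∧ a ≠ b := by
  refine ⟨fun hab => ⟨G'.edge_vert hab, G'.edge_vert hab.symm, (G'.adj_sub hab).ne⟩, ?_⟩
  rintro ⟨ha, hb, hne⟩
  show G'.coe.Adj ⟨a, ha⟩ ⟨b, hb⟩
  rw [h]
  exact fun h' => hne (congrArg Subtype.val h')

theorem nonempty_iso_coe_iff {α : Type*} [Finite α] [Finite V] :
    Nonempty (completeGraph α ≃g G'.coe) ↔ G'.coe = ⊤ ∧ Nat.card α = Nat.card G'.verts := by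
  refine ⟨fun ⟨e⟩ => ⟨eq_top_of_isIndContained_top e.isIndContained', Nat.card_congr e.toEquiv⟩,
    fun ⟨h, hcard⟩ => ?_⟩
  obtain ⟨e⟩ := Finite.card_eq.1 hcard
  exact ⟨⟨e, by intro a b; rw [h]; simp [e.injective.ne_iff]⟩⟩

theorem coe_induce_top_eq_top {s : Set V} (hs : G.IsClique s) :
    ((⊤ : G.Subgraph).induce s).coe = ⊤ := by
  ext ⟨a, ha⟩ ⟨b, hb⟩
  simp only [coe_adj, induce_adj, Subgraph.top_adj, SimpleGraph.top_adj, ne_eq, Subtype.mk.injEq]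
  exact ⟨fun h => h.2.2.ne, fun h => ⟨ha, hb, hs ha hb h⟩⟩

end SimpleGraph.Subgraph

theorem copyCount_completeGraph {α V : Type*} [Fintype α] [Fintype V] [DecidableEq V]
    (G : SimpleGraph V) [DecidableRel G.Adj] :
    _root_.copyCount (completeGraph α) G = #(G.cliqueFinset (Fintype.card α)) := by
  rw [_root_.copyCount, ← Nat.card_eq_finsetCard]
  symm
  refine Nat.card_eq_of_bijective (fun t => ⟨(⊤ : G.Subgraph).induce t, ?_⟩) ⟨?_, ?_⟩
  · refine Subgraph.nonempty_iso_coe_iff.2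
      ⟨Subgraph.coe_induce_top_eq_top (mem_cliqueFinset_iff.1 t.2).isClique, ?_⟩
    rw [Subgraph.induce_verts, Nat.card_eq_fintype_card, Nat.card_coe_set_eq, Set.ncard_coe_finset,
      (mem_cliqueFinset_iff.1 t.2).card_eq]
  · intro t₁ t₂ h
    exact Subtype.ext (coe_injective (congrArg (fun G' => G'.1.verts) h))
  · classical
    rintro ⟨G', hG'⟩
    obtain ⟨htop, hcard⟩ := Subgraph.nonempty_iso_coe_iff.1 hG'
    have hadj := fun a b => Subgraph.adj_iff_of_coe_eq_top htop (a := a) (b := b)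
    refine ⟨⟨G'.verts.toFinset, mem_cliqueFinset_iff.2 ⟨fun a ha b hb hab => ?_, ?_⟩⟩, ?_⟩
    · exact G'.adj_sub ((hadj a b).2 ⟨by simpa using ha, by simpa using hb, hab⟩)
    · rw [← Nat.card_eq_card_toFinset, ← hcard, Nat.card_eq_fintype_card]
    · refine Subtype.ext (Subgraph.ext (by simp) ?_)
      ext a b
      simp only [Subgraph.induce_adj, Set.coe_toFinset, Subgraph.top_adj, hadj]
      exact and_congr_right fun ha => and_congr_right fun hb =>
        ⟨Adj.ne, fun hab => G'.adj_sub ((hadj a b).2 ⟨ha, hb, hab⟩)⟩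

theorem stmt8 (l n : ℕ) (hl : 2 ≤ l) (G : SimpleGraph (Fin n))
    (hfree : CycleFree G (2 * l)) :
    3 * _root_.copyCount (cycleGraph 3) G ≤ (2 * l - 3) *
      sSup {m | ∃ H : SimpleGraph (Fin n), CycleFree H (2 * l) ∧ m = Nat.card H.edgeSet} := by
  classical
  have hbdd :
      BddAbove {m | ∃ H : SimpleGraph (Fin n), CycleFree H (2 * l) ∧ m = Nat.card H.edgeSet} :=
    ⟨Nat.card (Sym2 (Fin n)), by
      rintro _ ⟨H, -, rfl⟩
      exact Nat.card_le_card_of_injective _ Subtype.val_injective⟩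
  calc 3 * _root_.copyCount (cycleGraph 3) G = 3 * #(G.cliqueFinset 3) := by
        rw [cycleGraph_three_eq_top, copyCount_completeGraph, Fintype.card_fin]
    _ ≤ (2 * l - 3) * Nat.card G.edgeSet := by
        rw [Nat.card_eq_fintype_card, ← edgeFinset_card]
        exact G.three_mul_card_cliqueFinset_three_le hl hfree
    _ ≤ _ := Nat.mul_le_mul_left _ (le_csSup hbdd ⟨G, hfree, rfl⟩)
end

section
/- Let ℓ ≥ 2, let G be an n-vertex graph, and let X, Y ⊆ V(G) be disjoint sets such that the bipartite graph between X and Y contains no cycle of length 2ℓ. Suppose ℓ = 2 and d > n^{1/2}. Then the set Y' of vertices in Y having at least d neighbours in X satisfies |Y'| ≤ 2n/(d − n^{1/2}). -/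
open SimpleGraph

/-!
Let `e` be the number of edges between `X` and the high-degree set `Y'`. Since the bipartite graph
is `C₄`-free, two vertices of `X` have at most one common neighbour in `Y'`, so the sets of ordered
pairs of distinct neighbours of the vertices of `X` are pairwise disjoint subsets of `Y' × Y'`:
`∑ₓ deg(x)² ≤ |Y'|² + e`. Cauchy–Schwarz gives `e² ≤ n (|Y'|² + e)`, hence `e ≤ n + √n |Y'|`,
while `e ≥ d |Y'|` by the degree condition; so `(d - √n) |Y'| ≤ n`.
-/

open Finset

theorem Finset.sq_card_eq_card_offDiag_add_card {β : Type*} (u : Finset β) :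
    #u ^ 2 = #u.offDiag + #u := by
  have : #u ≤ #u * #u := Nat.le_mul_self _
  rw [offDiag_card, sq]; omega

theorem Real.le_add_sqrt_mul_of_sq_le {N m e : ℝ} (hN : 0 ≤ N) (hm : 0 ≤ m)
    (h : e ^ 2 ≤ N * (m ^ 2 + e)) : e ≤ N + √N * m := by
  have hs : √N ^ 2 = N := Real.sq_sqrt hN
  by_contra! he
  have hsm : 0 ≤ √N * m := mul_nonneg (Real.sqrt_nonneg N) hm
  nlinarith [mul_le_mul_of_nonneg_left he.le hsm]

namespace Finset

variable {α β : Type*} [DecidableEq β] {s : Finset α} {t : Finset β} {r : α → β → Prop}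
  [∀ a b, Decidable (r a b)]

theorem sum_card_offDiag_bipartiteAbove_le
    (h : (s : Set α).Pairwise fun a₁ a₂ => #{b ∈ t | r a₁ b ∧ r a₂ b} ≤ 1) :
    ∑ a ∈ s, #(t.bipartiteAbove r a).offDiag ≤ #t.offDiag := by
  have hdisj : (s : Set α).PairwiseDisjoint fun a => (t.bipartiteAbove r a).offDiag := by
    intro a₁ ha₁ a₂ ha₂ hne
    refine disjoint_left.mpr fun p hp₁ hp₂ => ?_
    simp only [mem_offDiag, mem_bipartiteAbove] at hp₁ hp₂
    exact hp₁.2.2 <| card_le_one.mp (h ha₁ ha₂ hne) _ (by simp [hp₁.1, hp₂.1.2])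
      _ (by simp [hp₁.2.1, hp₂.2.1])
  rw [← card_biUnion hdisj]
  exact card_le_card <| biUnion_subset.mpr fun a _ => offDiag_mono <| filter_subset _ _

theorem sq_sum_card_bipartiteAbove_le
    (h : (s : Set α).Pairwise fun a₁ a₂ => #{b ∈ t | r a₁ b ∧ r a₂ b} ≤ 1) :
    (∑ a ∈ s, #(t.bipartiteAbove r a)) ^ 2 ≤
      #s * (#t ^ 2 + ∑ a ∈ s, #(t.bipartiteAbove r a)) := by
  have hsq : ∑ a ∈ s, #(t.bipartiteAbove r a) ^ 2 ≤ #t ^ 2 + ∑ a ∈ s, #(t.bipartiteAbove r a) := by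
    simp only [sq_card_eq_card_offDiag_add_card, sum_add_distrib]
    have := sum_card_offDiag_bipartiteAbove_le h
    omega
  exact sq_sum_le_card_mul_sum_sq.trans (Nat.mul_le_mul_left _ hsq)

theorem sum_card_bipartiteAbove_le_add_sqrt_mul
    (h : (s : Set α).Pairwise fun a₁ a₂ => #{b ∈ t | r a₁ b ∧ r a₂ b} ≤ 1) :
    (∑ a ∈ s, #(t.bipartiteAbove r a) : ℝ) ≤ #s + √(#s : ℝ) * #t := by
  apply Real.le_add_sqrt_mul_of_sq_le (Nat.cast_nonneg _) (Nat.cast_nonneg _)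
  exact_mod_cast sq_sum_card_bipartiteAbove_le h

theorem card_le_div_of_le_card_bipartiteBelow
    (h : (s : Set α).Pairwise fun a₁ a₂ => #{b ∈ t | r a₁ b ∧ r a₂ b} ≤ 1)
    {N d : ℝ} (hs : #s ≤ N) (hd : √N < d) (hdeg : ∀ b ∈ t, d ≤ #(s.bipartiteBelow r b)) :
    (#t : ℝ) ≤ N / (d - √N) := by
  have hlower : d * #t ≤ ∑ b ∈ t, (#(s.bipartiteBelow r b) : ℝ) := by
    simpa [mul_comm] using card_nsmul_le_sum t _ d hdeg
  have hupper : ∑ b ∈ t, (#(s.bipartiteBelow r b) : ℝ) ≤ N + √N * #t := by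
    calc ∑ b ∈ t, (#(s.bipartiteBelow r b) : ℝ) = ∑ a ∈ s, (#(t.bipartiteAbove r a) : ℝ) := by
          exact_mod_cast (sum_card_bipartiteAbove_eq_sum_card_bipartiteBelow r).symm
      _ ≤ #s + √(#s : ℝ) * #t := sum_card_bipartiteAbove_le_add_sqrt_mul h
      _ ≤ N + √N * #t := by gcongr
  rw [le_div_iff₀ (sub_pos.mpr hd)]
  linarith

end Finset

theorem stmt9_general {V : Type*} [Fintype V] (n : ℕ) (hn : Fintype.card V = n)
    (G : SimpleGraph V) (X Y : Set V)
    (hC4 : ¬ ∃ x₁ x₂ y₁ y₂, x₁ ∈ X ∧ x₂ ∈ X ∧ y₁ ∈ Y ∧ y₂ ∈ Y ∧ x₁ ≠ x₂ ∧ y₁ ≠ y₂ ∧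
      G.Adj x₁ y₁ ∧ G.Adj x₁ y₂ ∧ G.Adj x₂ y₁ ∧ G.Adj x₂ y₂)
    (d : ℝ) (hd : Real.sqrt n < d) :
    (({y ∈ Y | d ≤ ((nbhdIn G y X).ncard : ℝ)}).ncard : ℝ) ≤
      2 * n / (d - Real.sqrt n) := by
  classical
  set Y' := {y ∈ Y | d ≤ ((nbhdIn G y X).ncard : ℝ)}
  have hnbhd (y : V) : (nbhdIn G y X).ncard = #(X.toFinset.bipartiteBelow G.Adj y) := by
    rw [← Set.ncard_coe_finset, coe_bipartiteBelow]
    simp [nbhdIn, adj_comm]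
  have hcodeg : (X.toFinset : Set V).Pairwise
      fun x₁ x₂ => #{y ∈ Y'.toFinset | G.Adj x₁ y ∧ G.Adj x₂ y} ≤ 1 := by
    intro x₁ hx₁ x₂ hx₂ hne
    refine card_le_one.mpr fun y₁ hy₁ y₂ hy₂ => by_contra fun hy => hC4 ?_
    simp only [Y', mem_filter, Set.mem_toFinset, Set.mem_ofPred_eq, Set.coe_toFinset]
      at hx₁ hx₂ hy₁ hy₂
    exact ⟨x₁, x₂, y₁, y₂, hx₁, hx₂, hy₁.1.1, hy₂.1.1, hne, hy, hy₁.2.1, hy₂.2.1, hy₁.2.2, hy₂.2.2⟩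
  have hX : (#X.toFinset : ℝ) ≤ n := by
    rw [← hn]; exact_mod_cast card_le_univ _
  have hY' := card_le_div_of_le_card_bipartiteBelow hcodeg hX hd fun y hy => by
    rw [← hnbhd]; exact (Set.mem_toFinset.mp hy).2
  rw [Set.ncard_eq_toFinset_card']
  refine hY'.trans (div_le_div_of_nonneg_right ?_ (sub_pos.mpr hd).le)
  linarith [(Nat.cast_nonneg n : (0 : ℝ) ≤ n)]

theorem stmt9 {V : Type*} [Fintype V] (n : ℕ) (hn : Fintype.card V = n)
    (G : SimpleGraph V) (X Y : Set V) (hXY : Disjoint X Y)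
    (hC4 : ¬ ∃ x₁ x₂ y₁ y₂, x₁ ∈ X ∧ x₂ ∈ X ∧ y₁ ∈ Y ∧ y₂ ∈ Y ∧ x₁ ≠ x₂ ∧ y₁ ≠ y₂ ∧
      G.Adj x₁ y₁ ∧ G.Adj x₁ y₂ ∧ G.Adj x₂ y₁ ∧ G.Adj x₂ y₂)
    (d : ℝ) (hd : Real.sqrt n < d) :
    (({y ∈ Y | d ≤ ((nbhdIn G y X).ncard : ℝ)}).ncard : ℝ) ≤
      2 * n / (d - Real.sqrt n) :=
  stmt9_general n hn G X Y hC4 d hd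
end

section
/- For every k ≥ 2 there is a constant c_k > 0 such that for every ℓ ≥ 3 with ℓ ≠ 4 and ℓ ≠ k, and every sufficiently large n, there exists an n-vertex graph with no cycle of length ℓ containing at least c_k · n^{⌊k/2⌋} copies of the cycle C_k. -/
open SimpleGraph

/-!
The graph is the blowup of `C_k` along its odd classes: vertices `0, …, k - 1` represent the
classes and every further vertex joins one of the `⌊k/2⌋` odd classes, so each odd class has
about `n / k` vertices, and choosing one vertex per class gives `≳ (n / 2k) ^ ⌊k/2⌋` copies
of `C_k`.

A cycle of length `ℓ` projects to a closed walk in `C_k`, and since even classes are single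
vertices the walk can revisit an even class only after a multiple of `ℓ` steps. If the walk turns
back at an odd class, the three surrounding (even) positions lie among the two neighbours of that
class, which forces `ℓ ∣ 4`; if it never turns back, it winds around `C_k` and `ℓ = k`.
-/

theorem even_or_even_of_cycleGraph_adj {k : ℕ} {u v : Fin k} (h : (cycleGraph k).Adj u v) :
    Even (u : ℕ) ∨ Even (v : ℕ) := by
  rcases k with _ | _ | m
  · exact u.elim0
  · exact absurd h cycleGraph_one_adj
  have succ_even : ∀ x : Fin (m + 2), Even (x : ℕ) ∨ Even ((x + 1 : Fin (m + 2)) : ℕ) := by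
    intro x
    rw [Fin.val_add_one]
    split_ifs
    · exact Or.inr Even.zero
    · rw [Nat.even_add_one]
      exact em _
  rcases cycleGraph_adj.mp h with h | h <;> rw [sub_eq_iff_eq_add'] at h
  · exact h ▸ (succ_even v).symm
  · exact h ▸ succ_even u

theorem eq_or_eq_or_eq_of_cycleGraph_adj {k : ℕ} {x y₁ y₂ y₃ : Fin k}
    (h₁ : (cycleGraph k).Adj x y₁) (h₂ : (cycleGraph k).Adj x y₂)
    (h₃ : (cycleGraph k).Adj x y₃) : y₁ = y₂ ∨ y₂ = y₃ ∨ y₁ = y₃ := by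
  rcases k with _ | _ | m
  · exact x.elim0
  · exact absurd h₁ cycleGraph_one_adj
  simp only [← mem_neighborSet, cycleGraph_neighborSet, Set.mem_insert_iff,
    Set.mem_singleton_iff] at h₁ h₂ h₃
  rcases h₁ with rfl | rfl <;> rcases h₂ with rfl | rfl <;> rcases h₃ with rfl | rfl <;> simp

theorem dvd_four_of_backtrack {k L : ℕ} {a : ℕ → Fin k}
    (hadj : ∀ i, (cycleGraph k).Adj (a i) (a (i + 1)))
    (hrep : ∀ i j, a i = a (i + j) → Even (a i : ℕ) → L ∣ j)
    {j : ℕ} (hj : a (j + 3) = a (j + 1)) : L ∣ 4 := by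
  have dvd_four_of_dvd_two : L ∣ 2 → L ∣ 4 := fun h => h.trans (by norm_num)
  by_cases hx : Even (a (j + 1) : ℕ)
  · exact dvd_four_of_dvd_two (hrep (j + 1) 2 hj.symm hx)
  have even_of_adj : ∀ i, (cycleGraph k).Adj (a (j + 1)) (a i) → Even (a i : ℕ) :=
    fun i h => (even_or_even_of_cycleGraph_adj h).resolve_left hx
  have h₀ : (cycleGraph k).Adj (a (j + 1)) (a j) := (hadj j).symm
  have h₂ : (cycleGraph k).Adj (a (j + 1)) (a (j + 2)) := hadj (j + 1)
  have h₄ : (cycleGraph k).Adj (a (j + 1)) (a (j + 4)) := hj ▸ hadj (j + 3)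
  rcases eq_or_eq_or_eq_of_cycleGraph_adj h₀ h₂ h₄ with h | h | h
  · exact dvd_four_of_dvd_two (hrep j 2 h (even_of_adj _ h₀))
  · exact dvd_four_of_dvd_two (hrep (j + 2) 2 h (even_of_adj _ h₂))
  · exact hrep j 4 h (even_of_adj _ h₀)

open scoped Fin.CommRing in
theorem exists_forall_eq_add_mul_of_not_backtrack {m : ℕ} {a : ℕ → Fin (m + 2)}
    (hadj : ∀ i, (cycleGraph (m + 2)).Adj (a i) (a (i + 1))) (hturn : ∀ j, a (j + 2) ≠ a j) :
    ∃ e : Fin (m + 2), e * e = 1 ∧ ∀ i : ℕ, a i = a 0 + i * e := by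
  have step : ∀ i, a (i + 1) - a i = 1 ∨ a (i + 1) - a i = -1 := fun i => by
    have h : a (i + 1) = a i - 1 ∨ a (i + 1) = a i + 1 := by
      simpa only [← mem_neighborSet, cycleGraph_neighborSet, Set.mem_insert_iff,
        Set.mem_singleton_iff] using hadj i
    rcases h with h | h <;> rw [h] <;> simp
  set e := a 1 - a 0
  have he : e = 1 ∨ e = -1 := step 0
  have hconst : ∀ i, a (i + 1) - a i = e := by
    intro i
    induction i with
    | zero => rfl
    | succ i ih =>
      have h : a (i + 2) - a (i + 1) = e ∨ a (i + 2) - a (i + 1) = -e := by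
        rcases step (i + 1) with h | h <;> rcases he with he | he <;> rw [h, he] <;> simp
      refine h.resolve_right fun h => hturn i ?_
      linear_combination h + ih
  refine ⟨e, by rcases he with h | h <;> rw [h] <;> ring, fun i => ?_⟩
  induction i with
  | zero => simp
  | succ i ih => push_cast; linear_combination hconst i + ih

open scoped Fin.CommRing in
theorem eq_of_not_backtrack {k L : ℕ} {a : ℕ → Fin k}
    (hadj : ∀ i, (cycleGraph k).Adj (a i) (a (i + 1))) (hper : ∀ i, a (i + L) = a i)
    (hrep : ∀ i j, a i = a (i + j) → Even (a i : ℕ) → L ∣ j)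
    (hturn : ∀ j, a (j + 2) ≠ a j) : L = k := by
  rcases k with _ | _ | m
  · exact (a 0).elim0
  · exact absurd (hadj 0) cycleGraph_one_adj
  obtain ⟨e, he_sq, hform⟩ := exists_forall_eq_add_mul_of_not_backtrack hadj hturn
  have hk_dvd : m + 2 ∣ L := by
    have hLe : (L : Fin (m + 2)) * e = 0 := by
      have h := hper 0
      rw [zero_add, hform L] at h
      linear_combination h
    rw [← Fin.natCast_eq_zero]
    linear_combination e * hLe - (L : Fin (m + 2)) * he_sq
  have hrepeat : ∀ i, a i = a (i + (m + 2)) := fun i => by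
    rw [hform i, hform (i + (m + 2)), Nat.cast_add, Fin.natCast_self, add_zero]
  have hdvd_k : L ∣ m + 2 := by
    rcases even_or_even_of_cycleGraph_adj (hadj 0) with h | h
    · exact hrep 0 (m + 2) (hrepeat 0) h
    · exact hrep 1 (m + 2) (hrepeat 1) h
  exact Nat.dvd_antisymm hdvd_k hk_dvd

theorem dvd_four_or_eq_of_periodic {k L : ℕ} {a : ℕ → Fin k}
    (hadj : ∀ i, (cycleGraph k).Adj (a i) (a (i + 1))) (hper : ∀ i, a (i + L) = a i)
    (hrep : ∀ i j, a i = a (i + j) → Even (a i : ℕ) → L ∣ j) : L ∣ 4 ∨ L = k := by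
  by_cases hturn : ∃ j, a (j + 3) = a (j + 1)
  · obtain ⟨j, hj⟩ := hturn
    exact Or.inl (dvd_four_of_backtrack hadj hrep hj)
  · push Not at hturn
    refine Or.inr (eq_of_not_backtrack (a := fun i => a (i + 1)) (fun i => hadj (i + 1))
      (fun i => ?_) (fun i j h => hrep (i + 1) j ?_) hturn)
    · rw [Nat.add_right_comm, hper]
    · rwa [Nat.add_right_comm]

theorem SimpleGraph.Walk.adj_getVert_mod {V : Type*} {G : SimpleGraph V} {v : V}
    (w : G.Walk v v) (hw : 0 < w.length) (i : ℕ) :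
    G.Adj (w.getVert (i % w.length)) (w.getVert ((i + 1) % w.length)) := by
  have h := w.adj_getVert_succ (Nat.mod_lt i hw)
  rw [← Nat.mod_add_mod]
  obtain hlt | heq : i % w.length + 1 < w.length ∨ i % w.length + 1 = w.length :=
    Nat.lt_or_eq_of_le (Nat.mod_lt i hw)
  · rwa [Nat.mod_eq_of_lt hlt]
  · rw [heq, Nat.mod_self, Walk.getVert_zero]
    rwa [heq, Walk.getVert_length] at h

theorem SimpleGraph.Walk.IsCycle.dvd_of_getVert_mod_eq {V : Type*} {G : SimpleGraph V} {v : V}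
    {w : G.Walk v v} (hw : w.IsCycle) {i j : ℕ}
    (h : w.getVert (i % w.length) = w.getVert ((i + j) % w.length)) : w.length ∣ j := by
  have hpos : 0 < w.length := by have := hw.three_le_length; omega
  have hmod : i % w.length = (i + j) % w.length :=
    hw.getVert_injOn' (Nat.le_sub_one_of_lt (Nat.mod_lt _ hpos))
      (Nat.le_sub_one_of_lt (Nat.mod_lt _ hpos)) h
  simpa using (Nat.modEq_iff_dvd' (Nat.le_add_right i j)).mp hmod

theorem cycleFree_comap_cycleGraph {V : Type*} {k : ℕ} (f : V → Fin k)
    (hf : ∀ ⦃x y⦄, f x = f y → Even (f x : ℕ) → x = y) {l : ℕ} (hl3 : 3 ≤ l)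
    (hl4 : l ≠ 4) (hlk : l ≠ k) : CycleFree ((cycleGraph k).comap f) l := by
  intro v w hw hlen
  have hpos : 0 < w.length := by omega
  rcases dvd_four_or_eq_of_periodic (a := fun i => f (w.getVert (i % w.length)))
    (w.adj_getVert_mod hpos) (fun i => by simp only [Nat.add_mod_right])
    (fun i j h he => hw.dvd_of_getVert_mod_eq (hf h he)) with h | h
  · have h3 : w.length = 3 := by have := Nat.le_of_dvd (by norm_num) h; omega
    rw [h3] at h
    norm_num at h
  · exact hlk (hlen ▸ h)

theorem card_sections_le_copyCount_comap {α V : Type*} [Finite V] (H : SimpleGraph α)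
    (f : V → α) :
    Nat.card {s : α → V // ∀ a, f (s a) = a} ≤ _root_.copyCount H (H.comap f) := by
  let toCopy (s : {s : α → V // ∀ a, f (s a) = a}) : Copy H (H.comap f) :=
    ⟨⟨s.1, fun {a b} h => by simpa only [comap_adj, s.2] using h⟩,
      Function.LeftInverse.injective s.2⟩
  refine Nat.card_le_card_of_injective
    (fun s => ⟨(toCopy s).toSubgraph, ⟨(toCopy s).isoToSubgraph⟩⟩) fun s t hst => ?_
  have hrange : Set.range s.1 = Set.range t.1 := by
    simpa [toCopy] using congrArg (fun G' => G'.1.verts) hst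
  ext1
  funext a
  obtain ⟨b, hb⟩ : s.1 a ∈ Set.range t.1 := hrange ▸ Set.mem_range_self a
  obtain rfl : b = a := by rw [← t.2 b, hb, s.2 a]
  exact hb.symm

namespace CycleBlowup

variable {k : ℕ} (hk : 2 ≤ k) {n : ℕ}

def part (x : Fin n) : Fin k :=
  if h : (x : ℕ) < k then ⟨x, h⟩
  else ⟨2 * ((x - k) % (k / 2)) + 1, by
    have := Nat.mod_lt (x - k) (show 0 < k / 2 by omega)
    omega⟩

theorem val_part_of_even {x : Fin n} (h : Even (part hk x : ℕ)) : (part hk x : ℕ) = x := by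
  unfold part at h ⊢
  split_ifs at h ⊢ with hx
  · rfl
  · rw [Nat.even_add_one] at h
    exact absurd (even_two_mul _) h

theorem eq_of_part_eq_of_even ⦃x y : Fin n⦄ (h : part hk x = part hk y)
    (he : Even (part hk x : ℕ)) : x = y :=
  Fin.ext <| (val_part_of_even hk he).symm.trans <|
    (congrArg Fin.val h).trans (val_part_of_even hk (h ▸ he))

def oddVertex (j : Fin (k / 2)) (t : Fin ((n - k) / (k / 2))) : Fin n :=
  ⟨k + t * (k / 2) + j, by
    have ht := Nat.mul_le_mul_right (k / 2) t.isLt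
    have hdiv := Nat.div_mul_le_self (n - k) (k / 2)
    rw [Nat.succ_mul] at ht
    omega⟩

theorem part_oddVertex (j : Fin (k / 2)) (t : Fin ((n - k) / (k / 2))) :
    part hk (oddVertex j t) = ⟨2 * j + 1, by omega⟩ := by
  rw [part, dif_neg (by simp only [oddVertex]; omega), Fin.mk.injEq]
  simp only [oddVertex, Nat.add_assoc, Nat.add_sub_cancel_left, Nat.mul_add_mod_self_right]
  rw [Nat.mod_eq_of_lt j.isLt]

theorem oddVertex_injective (j : Fin (k / 2)) :
    Function.Injective (oddVertex (n := n) j) := fun t t' h => by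
  have : k + t * (k / 2) + j = k + t' * (k / 2) + j := congrArg Fin.val h
  exact Fin.ext (Nat.eq_of_mul_eq_mul_right (by omega : 0 < k / 2) (by omega))

def transversal (hn : k ≤ n) (c : Fin (k / 2) → Fin ((n - k) / (k / 2))) (i : Fin k) : Fin n :=
  if h : (i : ℕ) % 2 = 1 then oddVertex ⟨i / 2, by omega⟩ (c ⟨i / 2, by omega⟩)
  else ⟨i, by omega⟩

theorem part_transversal (hn : k ≤ n) (c : Fin (k / 2) → Fin ((n - k) / (k / 2))) (i : Fin k) :
    part hk (transversal hn c i) = i := by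
  unfold transversal
  split_ifs with hi
  · rw [part_oddVertex, Fin.ext_iff]
    simp only
    omega
  · rw [part, dif_pos i.isLt]

theorem transversal_injective (hn : k ≤ n) : Function.Injective (transversal hn) := by
  intro c c' h
  funext j
  have hj : 2 * (j : ℕ) + 1 < k := by omega
  have := congrFun h ⟨2 * j + 1, hj⟩
  simp only [transversal, Nat.mul_add_mod_self_left,
    show (2 * j + 1) / 2 = (j : ℕ) by omega, Fin.eta] at this
  exact oddVertex_injective j this

theorem pow_le_card_sections (hn : k ≤ n) :
    ((n - k) / (k / 2)) ^ (k / 2) ≤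
      Nat.card {s : Fin k → Fin n // ∀ i, part hk (s i) = i} := by
  calc ((n - k) / (k / 2)) ^ (k / 2) = Nat.card (Fin (k / 2) → Fin ((n - k) / (k / 2))) := by
        simp
    _ ≤ _ := Nat.card_le_card_of_injective
        (fun c => ⟨transversal hn c, part_transversal hk hn c⟩)
        fun c c' h => transversal_injective hn (congrArg Subtype.val h)

end CycleBlowup

theorem le_two_mul_mul_sub_div_half {k n : ℕ} (hk : 2 ≤ k) (hn : 2 * k ≤ n) :
    n ≤ 2 * k * ((n - k) / (k / 2)) := by
  have hs : 0 < k / 2 := by omega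
  have hM : 0 < (n - k) / (k / 2) := Nat.div_pos (by omega) hs
  have hdiv := Nat.div_add_mod (n - k) (k / 2)
  have hmod := Nat.mod_lt (n - k) hs
  have hsM := Nat.le_mul_of_pos_right (k / 2) hM
  have hkM := Nat.le_mul_of_pos_right k hM
  have h2s := Nat.mul_le_mul_right ((n - k) / (k / 2)) (show 2 * (k / 2) ≤ k by omega)
  rw [Nat.mul_assoc] at h2s ⊢
  omega

open CycleBlowup in
theorem stmt10 (k : ℕ) (hk : 2 ≤ k) :
    ∃ c : ℝ, 0 < c ∧ ∀ l : ℕ, 3 ≤ l → l ≠ 4 → l ≠ k →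
      ∃ N : ℕ, ∀ n ≥ N, ∃ G : SimpleGraph (Fin n),
        CycleFree G l ∧ c * (n : ℝ) ^ (k / 2) ≤ _root_.copyCount (cycleGraph k) G := by
  refine ⟨(1 / (2 * k : ℝ)) ^ (k / 2), by positivity,
    fun l hl3 hl4 hlk => ⟨2 * k, fun n hn => ?_⟩⟩
  refine ⟨(cycleGraph k).comap (part hk),
    cycleFree_comap_cycleGraph _ (eq_of_part_eq_of_even hk) hl3 hl4 hlk, ?_⟩
  set M := (n - k) / (k / 2)
  have hcount : M ^ (k / 2) ≤ _root_.copyCount (cycleGraph k) ((cycleGraph k).comap (part hk)) :=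
    (pow_le_card_sections hk (by omega)).trans (card_sections_le_copyCount_comap _ _)
  have hnM : (n : ℝ) ≤ 2 * k * M := by exact_mod_cast le_two_mul_mul_sub_div_half hk hn
  calc (1 / (2 * k : ℝ)) ^ (k / 2) * (n : ℝ) ^ (k / 2) = (n / (2 * k : ℝ)) ^ (k / 2) := by
        rw [← mul_pow, one_div_mul_eq_div]
    _ ≤ (M : ℝ) ^ (k / 2) := by
        gcongr
        rw [div_le_iff₀ (by positivity)]
        linarith
    _ ≤ _ := by exact_mod_cast hcount
end

section
/- For every k ≥ 2 there is a constant c_k > 0 such that for every ℓ ≥ 3 with ℓ ≠ 4 and every sufficiently large n, there exists an n-vertex graph with no cycle of length ℓ containing at least c_k · n^{⌈(k+1)/2⌉} copies of the path P_k with k edges. -/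
open SimpleGraph

/-! Blow up every even position of the path `0 – 1 – ⋯ – k` into a blob of about `n / (k + 1)`
vertices and keep the odd positions as single vertices. Picking one vertex in each of the
`⌈(k + 1) / 2⌉` blobs gives a copy of `P_k`. Edges only join consecutive positions, so on a
cycle the vertex of largest position has its two (distinct) neighbours one position lower;
hence its own position is odd, the vertices two steps away on either side share the odd
position two lower and so coincide, and the cycle has length 4. -/

section Height

variable {V : Type*} {G : SimpleGraph V}

theorem length_eq_four_of_isCycle_of_height_le (h : V → ℕ)
    (hadj : ∀ u v, G.Adj u v → h u + 1 = h v ∨ h v + 1 = h u)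
    (hodd : ∀ u v, h u = h v → Odd (h u) → u = v)
    {v : V} {c : G.Walk v v} (hc : c.IsCycle) (hmax : ∀ u ∈ c.support, h u ≤ h v) :
    c.length = 4 := by
  set L := c.length
  have hL : 3 ≤ L := hc.three_le_length
  have hinj : ∀ i j, 1 ≤ i → i ≤ L → 1 ≤ j → j ≤ L → c.getVert i = c.getVert j → i = j :=
    fun i j hi hi' hj hj' hij => hc.getVert_injOn ⟨hi, hi'⟩ ⟨hj, hj'⟩ hij
  have hstep : ∀ i j, i + 1 = j → j ≤ L →
      h (c.getVert i) + 1 = h (c.getVert j) ∨ h (c.getVert j) + 1 = h (c.getVert i) := by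
    rintro i _ rfl hi
    exact hadj _ _ (c.adj_getVert_succ hi)
  have hle : ∀ i, h (c.getVert i) ≤ h v := fun i => hmax _ (c.getVert_mem_support i)
  have hfirst : c.getVert 0 = v := c.getVert_zero
  have hlast : c.getVert L = v := c.getVert_length
  have h1 : h (c.getVert 1) + 1 = h v := by
    have := hstep 0 1 rfl (by omega); have := hle 1; rw [hfirst] at *; omega
  have h1' : h (c.getVert (L - 1)) + 1 = h v := by
    have := hstep (L - 1) L (by omega) le_rfl; have := hle (L - 1)
    rw [hlast] at *; omega
  have hv : Odd (h v) := by
    by_contra hv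
    have := hinj 1 (L - 1) le_rfl (by omega) (by omega) (by omega) <| hodd _ _
      (by omega) (by rw [Nat.odd_iff]; rw [Nat.not_odd_iff] at hv; omega)
    omega
  have hv_top : ∀ i, 1 ≤ i → i < L → h (c.getVert i) ≠ h v := fun i hi hi' hiv =>
    absurd (hinj i L hi hi'.le (by omega) le_rfl (by rw [hlast]; exact hodd _ _ hiv (hiv ▸ hv)))
      (by omega)
  have h2 : h (c.getVert 2) + 2 = h v := by
    have := hstep 1 2 rfl (by omega); have := hv_top 2 (by omega) (by omega); omega
  have h2' : h (c.getVert (L - 2)) + 2 = h v := by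
    have := hstep (L - 2) (L - 1) (by omega) (by omega)
    have := hv_top (L - 2) (by omega) (by omega); omega
  have := hinj 2 (L - 2) (by omega) (by omega) (by omega) (by omega) <| hodd _ _ (by omega)
    (by obtain ⟨r, hr⟩ := hv; exact ⟨r - 1, by omega⟩)
  omega

theorem cycleFree_of_height (h : V → ℕ)
    (hadj : ∀ u v, G.Adj u v → h u + 1 = h v ∨ h v + 1 = h u)
    (hodd : ∀ u v, h u = h v → Odd (h u) → u = v) {l : ℕ} (hl : l ≠ 4) :
    CycleFree G l := by
  classical
  intro v w hw hwl
  obtain ⟨u, hu, hmax⟩ := w.support.toFinset.exists_max_image h ⟨v, by simp⟩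
  rw [List.mem_toFinset] at hu
  refine hl (hwl ▸ ?_)
  rw [← w.length_rotate u hu]
  exact length_eq_four_of_isCycle_of_height_le h hadj hodd (hw.rotate hu)
    fun x hx => hmax x (by simpa [w.mem_support_rotate_iff] using hx)

end Height

theorem card_le_copyCount {ι α β : Type*} [Finite β] {H : SimpleGraph α} {G : SimpleGraph β}
    (F : ι → H.Copy G) (hF : Function.Injective fun i => Set.range (F i)) :
    Nat.card ι ≤ _root_.copyCount H G := by
  refine Nat.card_le_card_of_injective (fun i => ⟨(F i).toSubgraph, ⟨(F i).isoToSubgraph⟩⟩) ?_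
  intro i j hij
  apply hF
  simpa [Set.image_univ] using congrArg (fun G' => G'.1.verts) hij

theorem prod_card_fiber_le_copyCount {V : Type*} [Finite V] {G : SimpleGraph V} (h : V → ℕ)
    (hadj : ∀ u v, h u + 1 = h v → G.Adj u v) (k : ℕ) :
    ∏ p ∈ Finset.range (k + 1), Nat.card {v // h v = p} ≤ _root_.copyCount (pathGraph (k + 1)) G := by
  rw [← Fin.prod_univ_eq_prod_range (fun p => Nat.card {v // h v = p}), ← Nat.card_pi]
  let F : (∀ p : Fin (k + 1), {v // h v = p}) → (pathGraph (k + 1)).Copy G := fun c =>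
    ⟨⟨fun p => c p, fun {p q} hpq => by
      rcases pathGraph_adj.mp hpq with hpq | hpq
      · exact hadj _ _ (by rw [(c p).2, (c q).2, hpq])
      · exact (hadj _ _ (by rw [(c p).2, (c q).2, hpq])).symm⟩,
      fun p q hpq => Fin.ext <| by simpa [(c p).2, (c q).2] using congrArg h hpq⟩
  refine card_le_copyCount F fun c c' hcc' => funext fun p => Subtype.ext ?_
  have hcc' : Set.range (F c) = Set.range (F c') := hcc'
  obtain ⟨q, hq⟩ : (c p : V) ∈ Set.range (F c') := hcc' ▸ ⟨p, rfl⟩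
  change (c' q : V) = c p at hq
  have hqp : q = p := Fin.ext <| by simpa [(c p).2, (c' q).2] using congrArg h hq
  rw [← hq, hqp]

theorem pow_le_prod_range_of_le_two_mul {a : ℕ → ℕ} {m t k : ℕ} (htk : 2 * t ≤ k + 2)
    (hpos : ∀ p ≤ k, 0 < a p) (heven : ∀ j < t, m ≤ a (2 * j)) :
    m ^ t ≤ ∏ p ∈ Finset.range (k + 1), a p := calc
  m ^ t = m ^ (Finset.range t).card := by rw [Finset.card_range]
  _ ≤ ∏ j ∈ Finset.range t, a (2 * j) :=
    Finset.pow_card_le_prod _ _ _ fun j hj => heven j (Finset.mem_range.mp hj)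
  _ = ∏ p ∈ (Finset.range t).image (2 * ·), a p :=
    (Finset.prod_image fun i _ j _ hij => by simpa using hij).symm
  _ ≤ ∏ p ∈ Finset.range (k + 1), a p := by
    refine Finset.prod_le_prod_of_subset_of_one_le' ?_ fun p hp _ =>
      hpos p (Nat.lt_succ_iff.mp (Finset.mem_range.mp hp))
    intro p hp
    simp only [Finset.mem_image, Finset.mem_range] at hp ⊢
    omega

/-- Vertices `x < s` sit at the odd positions `2x + 1` of the path; every other vertex is sent
to one of the `t` even positions `0, 2, …, 2t - 2` according to its residue mod `t`. -/
def blowupPos (s t x : ℕ) : ℕ := if x < s then 2 * x + 1 else 2 * ((x - s) % t)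

def pathBlowup (n s t : ℕ) : SimpleGraph (Fin n) :=
  (hasse ℕ).comap fun x => blowupPos s t x

theorem pathBlowup_adj {n s t : ℕ} {x y : Fin n} :
    (pathBlowup n s t).Adj x y ↔
      blowupPos s t x + 1 = blowupPos s t y ∨ blowupPos s t y + 1 = blowupPos s t x := by
  simp [pathBlowup, hasse_adj]

theorem eq_of_blowupPos_eq_of_odd {s t x y : ℕ} (h : blowupPos s t x = blowupPos s t y)
    (hodd : Odd (blowupPos s t x)) : x = y := by
  rw [Nat.odd_iff] at hodd
  unfold blowupPos at h hodd
  split_ifs at h hodd <;> omega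

theorem card_blowupPos_fiber_odd_pos {n s t j : ℕ} (hj : j < s) (hn : s ≤ n) :
    0 < Nat.card {x : Fin n // blowupPos s t x = 2 * j + 1} :=
  Nat.card_pos_iff.mpr ⟨⟨⟨⟨j, by omega⟩, by simp [blowupPos, hj]⟩⟩, inferInstance⟩

theorem blowupPos_add_add_mul {s t j : ℕ} (hj : j < t) (i : ℕ) :
    blowupPos s t (s + j + t * i) = 2 * j := by
  rw [blowupPos, if_neg (by omega), add_assoc, Nat.add_sub_cancel_left,
    Nat.add_mul_mod_self_left, Nat.mod_eq_of_lt hj]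

theorem le_card_blowupPos_fiber_even {n s t m j : ℕ} (hj : j < t) (hn : s + t * m ≤ n) :
    m ≤ Nat.card {x : Fin n // blowupPos s t x = 2 * j} := by
  have hlt : ∀ i < m, s + j + t * i < n := fun i hi => by
    have : t * (i + 1) ≤ t * m := Nat.mul_le_mul_left t hi
    rw [mul_add, mul_one] at this
    omega
  let blob : Fin m → {x : Fin n // blowupPos s t x = 2 * j} := fun i =>
    ⟨⟨s + j + t * i, hlt i i.2⟩, blowupPos_add_add_mul hj i⟩
  simpa using Nat.card_le_card_of_injective blob fun i i' hii' => Fin.ext <|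
    Nat.eq_of_mul_eq_mul_left (Nat.zero_lt_of_lt hj) (by simpa [blob] using congrArg (·.1.1) hii')

theorem le_two_mul_mul_sub_div {n s t : ℕ} (ht : 0 < t) (hn : s + t ≤ n) :
    n ≤ 2 * (s + t) * ((n - s) / t) := by
  have hlt : n - s < t * ((n - s) / t + 1) := Nat.lt_mul_div_succ (n - s) ht
  have hpos : 0 < (n - s) / t := Nat.div_pos (by omega) ht
  have : t * ((n - s) / t) ≤ (s + t) * ((n - s) / t) := Nat.mul_le_mul_right _ (by omega)
  have : s + t ≤ (s + t) * ((n - s) / t) := Nat.le_mul_of_pos_right _ hpos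
  rw [mul_add_one] at hlt
  rw [mul_assoc]
  omega

theorem pow_le_copyCount_pathBlowup {k m n : ℕ} (hm : 0 < m)
    (hn : (k + 1) / 2 + (k + 2) / 2 * m ≤ n) :
    m ^ ((k + 2) / 2) ≤
      _root_.copyCount (pathGraph (k + 1)) (pathBlowup n ((k + 1) / 2) ((k + 2) / 2)) := by
  set s := (k + 1) / 2
  set t := (k + 2) / 2
  have hfiber : ∀ p ≤ k, 0 < Nat.card {x : Fin n // blowupPos s t x = p} := by
    intro p hp
    obtain ⟨j, rfl | rfl⟩ := Nat.even_or_odd' p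
    · exact hm.trans_le (le_card_blowupPos_fiber_even (by omega) hn)
    · exact card_blowupPos_fiber_odd_pos (by omega) (le_of_add_le_left hn)
  calc m ^ t ≤ ∏ p ∈ Finset.range (k + 1), Nat.card {x : Fin n // blowupPos s t x = p} :=
        pow_le_prod_range_of_le_two_mul (by omega) hfiber
          fun j hj => le_card_blowupPos_fiber_even hj hn
    _ ≤ _ := prod_card_fiber_le_copyCount _ (fun _ _ h => pathBlowup_adj.mpr (.inl h)) k

theorem stmt11_general (k : ℕ) :
    ∃ c : ℝ, 0 < c ∧ ∀ l : ℕ, 3 ≤ l → l ≠ 4 →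
      ∃ N : ℕ, ∀ n ≥ N, ∃ G : SimpleGraph (Fin n),
        CycleFree G l ∧ c * (n : ℝ) ^ ((k + 2) / 2) ≤ _root_.copyCount (pathGraph (k + 1)) G := by
  set s := (k + 1) / 2
  set t := (k + 2) / 2
  refine ⟨(1 / (2 * (k + 1) : ℝ)) ^ t, by positivity, fun l _ hl => ⟨k + 1, fun n hn => ?_⟩⟩
  set m := (n - s) / t
  have ht : 0 < t := by omega
  have hm : 0 < m := Nat.div_pos (by omega) ht
  have hsm : s + t * m ≤ n := by have : t * m ≤ n - s := Nat.mul_div_le (n - s) t; omega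
  have hnm : n ≤ 2 * (k + 1) * m := by
    simpa [show s + t = k + 1 by omega] using le_two_mul_mul_sub_div ht (by omega : s + t ≤ n)
  refine ⟨pathBlowup n s t, cycleFree_of_height _ (fun _ _ => pathBlowup_adj.mp)
    (fun _ _ h hodd => Fin.ext (eq_of_blowupPos_eq_of_odd h hodd)) hl, ?_⟩
  calc (1 / (2 * (k + 1) : ℝ)) ^ t * (n : ℝ) ^ t = ((n : ℝ) / (2 * (k + 1))) ^ t := by
        rw [← mul_pow, one_div_mul_eq_div]
    _ ≤ (m : ℝ) ^ t := by
        gcongr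
        rw [div_le_iff₀ (by positivity)]
        exact_mod_cast (by linarith : n ≤ m * (2 * (k + 1)))
    _ ≤ _ := by exact_mod_cast pow_le_copyCount_pathBlowup hm hsm

theorem stmt11 (k : ℕ) (hk : 2 ≤ k) :
    ∃ c : ℝ, 0 < c ∧ ∀ l : ℕ, 3 ≤ l → l ≠ 4 →
      ∃ N : ℕ, ∀ n ≥ N, ∃ G : SimpleGraph (Fin n),
        CycleFree G l ∧ c * (n : ℝ) ^ ((k + 2) / 2) ≤ _root_.copyCount (pathGraph (k + 1)) G :=
  stmt11_general k
end

section
/- Let T and H be graphs on t and h vertices respectively, with independence numbers α(T) and α(H), and suppose h − α(H) − 1 ≥ t − α(T). Then for every n ≥ h − α(H) − 1 + α(T), there is an n-vertex H-free graph containing at least Ω_t((h−α(H))^{t−α(T)} n^{α(T)}) copies of T. Concretely: there is a constant c_t > 0 depending only on t such that the number of copies of T is at least c_t (h−α(H))^{t−α(T)} n^{α(T)}. -/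
open SimpleGraph

/-!
Let `K` be a set of `m < h - α(H)` vertices of `Fin n`, and join every vertex of `K` to every other
vertex. In a copy of `H` the vertices mapped outside `K` form an independent set, so at most
`α(H) + m < h` vertices fit: the graph is `H`-free. Conversely, mapping a maximum independent set
`S` of `T` injectively outside `K` and the rest of `T` injectively into `K` always gives a copy of
`T`, so there are at least `m^(t - α(T)) (n - m)^α(T)` (falling powers) labelled copies, hence
`1 / t!` as many unlabelled ones. Choosing `m ≈ min (h - α(H), n / 2)` (but at least `t - α(T)`)
makes both falling powers comparable to `(h - α(H))^(t - α(T))` and `n^α(T)`.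
-/

open Finset
open scoped Nat

theorem indepNum_eq_simpleGraph_indepNum {W : Type*} [Fintype W] (G : SimpleGraph W) :
    _root_.indepNum G = G.indepNum := by
  unfold _root_.indepNum SimpleGraph.indepNum
  congr 1
  ext m
  exact exists_congr fun s ↦ ⟨fun ⟨hs, hm⟩ ↦ ⟨fun a ha b hb _ ↦ hs a ha b hb, hm⟩,
    fun ⟨hs, hm⟩ ↦ ⟨fun a ha b hb hab ↦ hs ha hb hab.ne hab, hm⟩⟩

theorem copyCount_eq_simpleGraph_copyCount {α β : Type*} [Fintype β] (H : SimpleGraph α)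
    (G : SimpleGraph β) : _root_.copyCount H G = G.copyCount H := by
  classical
  rw [_root_.copyCount, SimpleGraph.copyCount, Nat.card_eq_fintype_card, Fintype.card_subtype]

theorem Nat.pow_le_mul_descFactorial {x c m k : ℕ} (hk : k ≤ m) (hx : x ≤ c * (m + 1)) :
    x ^ k ≤ (c * (k + 1)) ^ k * m.descFactorial k := by
  have hfactor : x ≤ c * (k + 1) * (m + 1 - k) := by
    obtain ⟨d, rfl⟩ := Nat.exists_eq_add_of_le hk
    rw [show k + d + 1 - k = d + 1 by omega, mul_assoc]
    exact hx.trans (Nat.mul_le_mul_left c (by nlinarith))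
  calc x ^ k ≤ (c * (k + 1) * (m + 1 - k)) ^ k := Nat.pow_le_pow_left hfactor k
    _ = (c * (k + 1)) ^ k * (m + 1 - k) ^ k := mul_pow ..
    _ ≤ (c * (k + 1)) ^ k * m.descFactorial k :=
      Nat.mul_le_mul_left _ (m.pow_sub_le_descFactorial k)

theorem exists_lt_pow_mul_pow_le_descFactorial_mul_descFactorial {a b k n : ℕ} (hab : a < b)
    (hbn : b + k ≤ n + 1) :
    ∃ m < b, b ^ a * n ^ k ≤
      (2 * (a + k + 1) ^ 2) ^ (a + k) * (m.descFactorial a * (n - m).descFactorial k) := by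
  refine ⟨max a (min (b - 1) (n / 2)), by omega, ?_⟩
  set m := max a (min (b - 1) (n / 2))
  have hb : b ≤ 2 * (m + 1) := by omega
  have hn : n ≤ 2 * (a + k + 1) * (n - m + 1) := by
    -- if `m > n / 2` then `m = a`, so `n` itself is small
    rcases (by omega : n ≤ 2 * (n - m + 1) ∨ n ≤ 2 * (a + k + 1)) with h | h
    · exact h.trans (Nat.mul_le_mul_right _ (by omega))
    · exact h.trans (Nat.le_mul_of_pos_right _ (by omega))
  have hD₁ : 2 * (a + 1) ≤ 2 * (a + k + 1) ^ 2 := by nlinarith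
  have hD₂ : 2 * (a + k + 1) * (k + 1) ≤ 2 * (a + k + 1) ^ 2 := by nlinarith
  calc b ^ a * n ^ k
      ≤ ((2 * (a + 1)) ^ a * m.descFactorial a) *
          ((2 * (a + k + 1) * (k + 1)) ^ k * (n - m).descFactorial k) :=
        Nat.mul_le_mul (Nat.pow_le_mul_descFactorial (by omega) hb)
          (Nat.pow_le_mul_descFactorial (by omega) hn)
    _ ≤ ((2 * (a + k + 1) ^ 2) ^ a * m.descFactorial a) *
          ((2 * (a + k + 1) ^ 2) ^ k * (n - m).descFactorial k) := by gcongr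
    _ = (2 * (a + k + 1) ^ 2) ^ (a + k) * (m.descFactorial a * (n - m).descFactorial k) := by
        ring

namespace SimpleGraph

variable {V W β γ : Type*}

theorem indepNum_le_card [Fintype V] (G : SimpleGraph V) :
    G.indepNum ≤ Fintype.card V := by
  obtain ⟨s, hs⟩ := G.exists_isNIndepSet_indepNum
  exact hs.card_eq ▸ s.card_le_univ

theorem Copy.range_eq_toSubgraph_verts {H : SimpleGraph W} {G : SimpleGraph V} (f : Copy H G) :
    Set.range f = f.toSubgraph.verts := by
  simp [Set.image_univ]

theorem labelledCopyCount_le_factorial_mul_copyCount [Fintype V] [Fintype W]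
    (G : SimpleGraph V) (H : SimpleGraph W) :
    G.labelledCopyCount H ≤ (Fintype.card W)! * G.copyCount H := by
  classical
  rw [copyCount_eq_card_image_copyToSubgraph, labelledCopyCount, ← Finset.card_univ]
  refine card_le_mul_card_image _ _ fun S hS ↦ ?_
  obtain ⟨f₀, -, rfl⟩ := Finset.mem_image.1 hS
  let labelling (f : {f : Copy H G // f.toSubgraph = f₀.toSubgraph}) :
      W ≃ f₀.toSubgraph.verts :=
    (Equiv.ofInjective f.1 f.1.injective).trans
      (Equiv.setCongr (by rw [f.1.range_eq_toSubgraph_verts, f.2]))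
  have h_inj : Function.Injective labelling := fun f f' h ↦
    Subtype.ext <| Copy.ext fun w ↦ congrArg Subtype.val (Equiv.congr_fun h w)
  rw [← Fintype.card_subtype]
  calc Fintype.card {f : Copy H G // f.toSubgraph = f₀.toSubgraph}
      ≤ Fintype.card (W ≃ f₀.toSubgraph.verts) := Fintype.card_le_of_injective _ h_inj
    _ = (Fintype.card W)! := Fintype.card_equiv (labelling ⟨f₀, rfl⟩)

def completeSplitGraph (K : Set V) : SimpleGraph V :=
  fromRel fun v w ↦ v ∈ K ∨ w ∈ K

@[simp]
theorem completeSplitGraph_adj {K : Set V} {v w : V} :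
    (completeSplitGraph K).Adj v w ↔ v ≠ w ∧ (v ∈ K ∨ w ∈ K) := by
  simp [completeSplitGraph, or_comm]

theorem card_le_card_add_indepNum_of_copy [Fintype γ] [Fintype V] {H : SimpleGraph γ}
    {K : Finset V} (f : Copy H (completeSplitGraph (K : Set V))) :
    Fintype.card γ ≤ #K + H.indepNum := by
  classical
  set outside : Finset γ := {c | f c ∉ K}
  have h_indep : H.IsIndepSet outside := by
    intro a ha b hb _ hab
    have ha : f a ∉ K := by simpa [outside] using ha
    have hb : f b ∉ K := by simpa [outside] using hb
    simpa [ha, hb] using f.toHom.map_adj hab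
  have h_inside : #outsideᶜ ≤ #K :=
    Finset.card_le_card_of_injOn f (by intro c hc; simpa [outside] using hc)
      f.injective.injOn
  have := h_indep.card_le_indepNum
  have := Finset.card_add_card_compl outside
  omega

theorem free_completeSplitGraph [Fintype γ] [Fintype V] {H : SimpleGraph γ} {K : Finset V}
    (hK : #K + H.indepNum < Fintype.card γ) : H.Free (completeSplitGraph (K : Set V)) :=
  fun ⟨f⟩ ↦ (card_le_card_add_indepNum_of_copy f).not_gt hK

section splitEmbedding

variable (S : Set β) (K : Set V) [DecidablePred (· ∈ S)] [DecidablePred (· ∈ K)]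

def splitEmbedding (e : (S ↪ ↥Kᶜ) × (↥Sᶜ ↪ K)) : β ↪ V :=
  (Equiv.Set.sumCompl S).symm.toEmbedding.trans <|
    (e.1.sumMap e.2).trans <|
      (Equiv.sumComm _ _).toEmbedding.trans (Equiv.Set.sumCompl K).toEmbedding

variable {S K}

theorem splitEmbedding_of_mem (e : (S ↪ ↥Kᶜ) × (↥Sᶜ ↪ K)) {b : β} (hb : b ∈ S) :
    splitEmbedding S K e b = e.1 ⟨b, hb⟩ := by
  simp [splitEmbedding, Equiv.Set.sumCompl_symm_apply_of_mem hb]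

theorem splitEmbedding_of_notMem (e : (S ↪ ↥Kᶜ) × (↥Sᶜ ↪ K)) {b : β} (hb : b ∉ S) :
    splitEmbedding S K e b = e.2 ⟨b, hb⟩ := by
  simp [splitEmbedding, Equiv.Set.sumCompl_symm_apply_of_notMem hb]

theorem splitEmbedding_injective : Function.Injective (splitEmbedding S K) := by
  intro e e' h
  ext ⟨b, hb⟩
  · simpa [splitEmbedding_of_mem _ hb] using DFunLike.congr_fun h b
  · simpa [splitEmbedding_of_notMem _ hb] using DFunLike.congr_fun h b

theorem splitEmbedding_map_adj {T : SimpleGraph β} (hS : T.IsIndepSet S)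
    (e : (S ↪ ↥Kᶜ) × (↥Sᶜ ↪ K)) {a b : β} (hab : T.Adj a b) :
    (completeSplitGraph K).Adj (splitEmbedding S K e a) (splitEmbedding S K e b) := by
  have mem_of_notMem {c : β} (hc : c ∉ S) : splitEmbedding S K e c ∈ K := by
    simp [splitEmbedding_of_notMem _ hc]
  refine completeSplitGraph_adj.2 ⟨(splitEmbedding S K e).injective.ne hab.ne, ?_⟩
  by_cases ha : a ∈ S
  · exact .inr (mem_of_notMem fun hb ↦ hS ha hb hab.ne hab)
  · exact .inl (mem_of_notMem ha)

end splitEmbedding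

theorem descFactorial_mul_descFactorial_le_labelledCopyCount [Fintype β] [Fintype V]
    {T : SimpleGraph β} {S : Finset β} (hS : T.IsIndepSet S) (K : Finset V) :
    (#K).descFactorial (Fintype.card β - #S) * (Fintype.card V - #K).descFactorial #S ≤
      (completeSplitGraph (K : Set V)).labelledCopyCount T := by
  classical
  let toCopy (e : ((S : Set β) ↪ ↥(K : Set V)ᶜ) × (↥(S : Set β)ᶜ ↪ (K : Set V))) :
      Copy T (completeSplitGraph (K : Set V)) :=
    ⟨⟨splitEmbedding _ _ e, splitEmbedding_map_adj hS e⟩, (splitEmbedding _ _ e).injective⟩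
  have h_inj : Function.Injective toCopy := fun e e' h ↦
    splitEmbedding_injective (DFunLike.coe_injective (congrArg DFunLike.coe h :))
  unfold labelledCopyCount
  convert Fintype.card_le_of_injective toCopy h_inj using 1
  simp [Fintype.card_embedding_eq, filter_notMem_eq_sdiff, card_univ_sdiff, mul_comm]

end SimpleGraph

theorem stmt12 (t : ℕ) :
    ∃ c : ℝ, 0 < c ∧
      ∀ (β γ : Type) (_ : Fintype β) (_ : Fintype γ)
        (T : SimpleGraph β) (H : SimpleGraph γ) (h : ℕ),
        Fintype.card β = t → Fintype.card γ = h →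
        (t : ℤ) - _root_.indepNum T ≤ (h : ℤ) - _root_.indepNum H - 1 →
        ∀ n : ℕ, h - _root_.indepNum H - 1 + _root_.indepNum T ≤ n →
          ∃ G : SimpleGraph (Fin n),
            (¬ ∃ f : H →g G, Function.Injective f) ∧
            c * ((h - _root_.indepNum H : ℕ) : ℝ) ^ (t - _root_.indepNum T) * (n : ℝ) ^ (_root_.indepNum T) ≤
              _root_.copyCount T G := by
  refine ⟨((2 * (t + 1) ^ 2) ^ t * t ! : ℝ)⁻¹, by positivity, ?_⟩
  intro β γ _ _ T H h hβ hγ hαH n hn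
  simp only [indepNum_eq_simpleGraph_indepNum, copyCount_eq_simpleGraph_copyCount] at hαH hn ⊢
  obtain ⟨S, hS⟩ := T.exists_isNIndepSet_indepNum
  have hαT := hβ ▸ T.indepNum_le_card
  obtain ⟨m, hmb, hbound⟩ := exists_lt_pow_mul_pow_le_descFactorial_mul_descFactorial
    (a := t - T.indepNum) (b := h - H.indepNum) (k := T.indepNum) (n := n) (by omega) (by omega)
  rw [Nat.sub_add_cancel hαT] at hbound
  let K : Finset (Fin n) := univ.map (Fin.castLEEmb (by omega : m ≤ n))
  have hK : #K = m := by simp [K]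
  refine ⟨completeSplitGraph K, fun ⟨f, hf⟩ ↦ free_completeSplitGraph (by omega) ⟨f, hf⟩, ?_⟩
  have h_labelled := descFactorial_mul_descFactorial_le_labelledCopyCount hS.isIndepSet K
  have h_unlabelled :=
    labelledCopyCount_le_factorial_mul_copyCount (completeSplitGraph (K : Set (Fin n))) T
  rw [hK, hS.card_eq, hβ, Fintype.card_fin] at h_labelled
  rw [hβ] at h_unlabelled
  have h_count := hbound.trans (Nat.mul_le_mul_left _ (h_labelled.trans h_unlabelled))
  rw [mul_assoc, inv_mul_le_iff₀ (by positivity)]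
  exact_mod_cast h_count.trans_eq (mul_assoc ..).symm
end

section
/- Let q be a prime power, let F be the field with q elements, and let G be the graph on vertex set F² \ {(0,0)} with (a,b) adjacent to (c,d) if and only if ac + bd = 1 (ignoring loops). Then G contains no cycle of length 4. -/
open SimpleGraph

/-- The Erdős–Rényi polarity graph: vertices are the nonzero points of `F²`,
with `(a,b)` adjacent to `(c,d)` iff `a*c + b*d = 1` (loops removed). -/
def polarityGraph (F : Type*) [Field F] : SimpleGraph {p : F × F // p ≠ 0} where
  Adj u v := u ≠ v ∧ u.1.1 * v.1.1 + u.1.2 * v.1.2 = 1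
  symm := by
    constructor
    rintro u v ⟨h1, h2⟩
    exact ⟨h1.symm, by linear_combination h2⟩
  loopless := ⟨fun u h => h.1 rfl⟩

/-! A 4-cycle `v a b c` makes `a ≠ c` two common neighbours of `v ≠ b`. In the polarity graph a
common neighbour `x` of `u ≠ w` solves the linear system `u ⬝ x = w ⬝ x = 1`, which has at most
one solution. -/

theorem cycleFree_four_of_commonNeighbors_subsingleton {V : Type*} (G : SimpleGraph V)
    (h : Pairwise fun u w => (G.commonNeighbors u w).Subsingleton) :
    CycleFree G 4 := by
  rintro v (_ | ⟨hva, _ | ⟨hab, _ | ⟨hbc, _ | ⟨hcv, _ | ⟨_, _⟩⟩⟩⟩⟩) hcyc hlen <;>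
    simp only [Walk.length_cons, Walk.length_nil] at hlen <;> try omega
  have hnodup := hcyc.support_nodup
  simp only [Walk.support_cons, Walk.support_nil, List.tail_cons, List.nodup_cons,
    List.mem_cons, List.not_mem_nil, or_false, not_or] at hnodup
  obtain ⟨⟨-, hac, -⟩, ⟨-, hbv⟩, -⟩ := hnodup
  exact hac (h (Ne.symm hbv) (G.mem_commonNeighbors.2 ⟨hva, hab.symm⟩)
    (G.mem_commonNeighbors.2 ⟨hcv.symm, hbc⟩))

theorem eq_of_dot_eq_one_of_ne {F : Type*} [Field F] {a c x y : F × F} (hac : a ≠ c)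
    (hax : a.1 * x.1 + a.2 * x.2 = 1) (hcx : c.1 * x.1 + c.2 * x.2 = 1)
    (hay : a.1 * y.1 + a.2 * y.2 = 1) (hcy : c.1 * y.1 + c.2 * y.2 = 1) :
    x = y := by
  -- a vanishing determinant makes `a` and `c` proportional,
  -- and `a ⬝ x = c ⬝ x = 1` forces the factor to be 1
  have hdet : a.1 * c.2 - a.2 * c.1 ≠ 0 := by
    intro hdet
    refine hac (Prod.ext ?_ ?_)
    · linear_combination c.1 * hax - a.1 * hcx + x.2 * hdet
    · linear_combination c.2 * hax - a.2 * hcx - x.1 * hdet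
  refine Prod.ext (mul_left_cancel₀ hdet ?_) (mul_left_cancel₀ hdet ?_)
  · linear_combination c.2 * hax - a.2 * hcx - c.2 * hay + a.2 * hcy
  · linear_combination a.1 * hcx - c.1 * hax - a.1 * hcy + c.1 * hay

theorem polarityGraph_commonNeighbors_subsingleton (F : Type*) [Field F] :
    Pairwise fun u w => ((polarityGraph F).commonNeighbors u w).Subsingleton := by
  intro u w huw x hx y hy
  rw [mem_commonNeighbors] at hx hy
  exact Subtype.ext <|
    eq_of_dot_eq_one_of_ne (Subtype.coe_injective.ne huw) hx.1.2 hx.2.2 hy.1.2 hy.2.2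

theorem stmt13_general (F : Type) [Field F] :
    CycleFree (polarityGraph F) 4 :=
  cycleFree_four_of_commonNeighbors_subsingleton _ (polarityGraph_commonNeighbors_subsingleton F)

theorem stmt13 (q : ℕ) (hq : IsPrimePow q) (F : Type) [Field F] [Fintype F]
    (hF : Fintype.card F = q) :
    CycleFree (polarityGraph F) 4 :=
  stmt13_general F
end

section
/- For every ℓ ≥ 3, ex(n, C_3, C_{2ℓ}) = Ω(ex_bip(n, {C_4, C_6, …, C_{2ℓ}})): more precisely, for every n there is a 3n-vertex graph with no cycle of length 2ℓ containing at least (1/2)·z(n) triangles, where z(n) is the maximum number of edges in an n×n bipartite graph with no cycle of length 2t for any 2 ≤ t ≤ ℓ. -/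
open SimpleGraph

/-- The maximum number of edges in an `n × n` bipartite graph containing no cycle of
length `2t` for any `2 ≤ t ≤ l`. -/
noncomputable def zBip (n l : ℕ) : ℕ :=
  sSup {m | ∃ H : SimpleGraph (Fin n ⊕ Fin n),
    (∀ a b, ¬ H.Adj (Sum.inl a) (Sum.inl b)) ∧
    (∀ a b, ¬ H.Adj (Sum.inr a) (Sum.inr b)) ∧
    (∀ t, 2 ≤ t → t ≤ l → CycleFree H (2 * t)) ∧
    m = Nat.card H.edgeSet}


/-! Let `H` be an extremal `n × n` bipartite graph with no `C₄, …, C₂ₗ`, and let `G` be obtained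
by replacing every left vertex `a` by two adjacent twins, each inheriting the neighbours of `a`.
An edge `ab` of `H` gives the triangle formed by the twins of `a` and `b`, and different edges give
different triangles, so `G` has at least `z(n)` triangles.

Since `H` is bipartite, it has no cycle of length at most `2ℓ`. A cycle of `G` of length at most
`2ℓ` that contains no pair of twins would project onto such a cycle of `H`, so it contains a pair of
twins. Cutting the cycle at the two twins and closing one arc through one twin gives a shorter cycle
that misses the other twin. By induction on the length, every cycle of length at most `2ℓ` contains
the twin of each of its doubled vertices. So both arcs have length at most `2`, and the cycle has
length at most `4 < 2ℓ`. -/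

open Set

lemma Fin.val_eq_succ_or_of_sub_val_eq_one {m : ℕ} {i j : Fin m} (h : (j - i).val = 1) :
    j.val = i.val + 1 ∨ (i.val + 1 = m ∧ j.val = 0) := by
  rcases le_or_gt i j with hij | hij
  · rw [Fin.coe_sub_iff_le.2 hij] at h; omega
  · rw [Fin.coe_sub_iff_lt.2 hij] at h; omega

namespace SimpleGraph

variable {V γ : Type*}

/-- Cycles as vertex sequences, so that cutting a cycle and closing up an arc is index
arithmetic. -/
structure IsCycleSeq (G : SimpleGraph V) (m : ℕ) (c : ℕ → V) : Prop where
  three_le : 3 ≤ m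
  injOn : InjOn c (Iio m)
  adj : ∀ i < m, G.Adj (c i) (c (i + 1))
  closed : c m = c 0

lemma Walk.IsCycle.isCycleSeq {G : SimpleGraph V} {u : V} {w : G.Walk u u} (hw : w.IsCycle) :
    IsCycleSeq G w.length w.getVert where
  three_le := hw.three_le_length
  injOn i hi j hj h := hw.getVert_injOn' (by simp only [mem_Iio] at hi; simp; omega)
    (by simp only [mem_Iio] at hj; simp; omega) h
  adj _ hi := w.adj_getVert_succ hi
  closed := by rw [Walk.getVert_length, Walk.getVert_zero]

namespace IsCycleSeq

variable {G : SimpleGraph V} {m : ℕ} {c : ℕ → V}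

lemma adj_of_sub_val_eq_one (hc : IsCycleSeq G m c) {i j : Fin m} (h : (j - i).val = 1) :
    G.Adj (c i) (c j) := by
  rcases Fin.val_eq_succ_or_of_sub_val_eq_one h with h | ⟨hi, hj⟩
  · rw [h]
    exact hc.adj i i.2
  · rw [hj, ← hc.closed]
    simpa only [hi] using hc.adj i i.2

def toCopy (hc : IsCycleSeq G m c) : Copy (cycleGraph m) G where
  toHom := ⟨fun i => c i, fun h => (cycleGraph_adj'.1 h).elim
    (fun h => (hc.adj_of_sub_val_eq_one h).symm) hc.adj_of_sub_val_eq_one⟩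
  injective' _ _ h := Fin.ext (hc.injOn (Fin.is_lt _) (Fin.is_lt _) h)

lemma exists_isCycle (hc : IsCycleSeq G m c) :
    ∃ (u : V) (w : G.Walk u u), w.IsCycle ∧ w.length = m :=
  (cycleGraph_isContained_iff hc.three_le).1 hc.toCopy.isContained

end IsCycleSeq

def blowup (H : SimpleGraph γ) (p : V → γ) : SimpleGraph V where
  Adj x y := x ≠ y ∧ (p x = p y ∨ H.Adj (p x) (p y))
  symm := ⟨fun _ _ h => ⟨h.1.symm, h.2.imp Eq.symm fun h => h.symm⟩⟩
  loopless := ⟨fun _ h => h.1 rfl⟩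

variable {H : SimpleGraph γ} {p : V → γ}

lemma blowup_adj_of_adj_of_eq {x y z : V} (h : (H.blowup p).Adj x y) (hyz : p y = p z)
    (hxz : x ≠ z) : (H.blowup p).Adj x z :=
  ⟨hxz, hyz ▸ h.2⟩

lemma map_ne_of_fibre (hfib : ∀ x y z, p x = p y → p x = p z → x = y ∨ x = z ∨ y = z)
    {x y y' : V} (hyy' : y ≠ y') (hpy : p y = p y') (hxy : x ≠ y) (hxy' : x ≠ y') :
    p x ≠ p y := fun h => by
  rcases hfib x y y' h (h.trans hpy) with h | h | h <;> contradiction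

lemma not_blowup_adj (hind : H.IsIndepSet {u | (p ⁻¹' {u}).Nontrivial}) {x x' y y' : V}
    (hxx' : x ≠ x') (hpx : p x = p x') (hyy' : y ≠ y') (hpy : p y = p y') (hxy : p x ≠ p y) :
    ¬ (H.blowup p).Adj x y := fun h =>
  hind ⟨x, rfl, x', hpx.symm, hxx'⟩ ⟨y, rfl, y', hpy.symm, hyy'⟩ hxy (h.2.resolve_left hxy)

namespace IsCycleSeq

variable {g m a b : ℕ} {c : ℕ → V}

lemma map_blowup (hc : IsCycleSeq (H.blowup p) m c) (hp : InjOn (p ∘ c) (Iio m)) :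
    IsCycleSeq H m (p ∘ c) where
  three_le := hc.three_le
  injOn := hp
  adj i hi := by
    refine (hc.adj i hi).2.resolve_left fun h => (hc.adj i hi).1 ?_
    by_cases hi' : i + 1 < m
    · exact absurd (hp hi hi' h) (Nat.succ_ne_self i).symm
    · rw [show i + 1 = m by omega, hc.closed] at h ⊢
      have := hc.three_le
      exact absurd (hp hi (by simp only [mem_Iio]; omega) h) (by omega)
  closed := by simp only [Function.comp_apply, hc.closed]

lemma exists_truncate (hc : IsCycleSeq (H.blowup p) m c) (hab : a < b) (hbm : b < m)
    (hp : p (c a) = p (c b)) (h3 : 3 ≤ b - a) :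
    ∃ d, IsCycleSeq (H.blowup p) (b - a) d ∧ d '' Iio (b - a) = c '' Ico a b := by
  refine ⟨fun i => if i = b - a then c a else c (a + i), ⟨h3, ?_, fun i hi => ?_, by simp⟩, ?_⟩
  · intro i hi j hj h
    simp only [mem_Iio] at hi hj
    simp only [hi.ne, hj.ne, if_false] at h
    have := hc.injOn (by simp only [mem_Iio]; omega) (by simp only [mem_Iio]; omega) h
    omega
  · simp only [hi.ne, if_false]
    have hadj := hc.adj (a + i) (by omega)
    split_ifs with hi'
    · refine blowup_adj_of_adj_of_eq hadj (by rw [hp, show a + i + 1 = b by omega]) fun h => ?_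
      have := hc.injOn (by simp only [mem_Iio]; omega) (by simp only [mem_Iio]; omega) h
      omega
    · rwa [← add_assoc]
  · ext x
    simp only [mem_image, mem_Iio, mem_Ico]
    constructor
    · rintro ⟨i, hi, rfl⟩
      exact ⟨a + i, ⟨by omega, by omega⟩, by simp [hi.ne]⟩
    · rintro ⟨j, hj, rfl⟩
      exact ⟨j - a, by omega, by simp [show j - a ≠ b - a by omega, show a + (j - a) = j by omega]⟩

lemma exists_excise (hc : IsCycleSeq (H.blowup p) m c) (hab : a < b) (hbm : b < m)
    (hp : p (c a) = p (c b)) (h3 : 3 ≤ m - (b - a)) :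
    ∃ d, IsCycleSeq (H.blowup p) (m - (b - a)) d ∧
      d '' Iio (m - (b - a)) = c '' (Iic a ∪ Ioo b m) := by
  set f : ℕ → ℕ := fun i => if i ≤ a then i else i + (b - a) with hf
  have hfm : ∀ i < m - (b - a), f i < m := fun i hi => by simp only [hf]; split_ifs <;> omega
  refine ⟨c ∘ f, ⟨h3, ?_, fun i hi => ?_, ?_⟩, ?_⟩
  · intro i hi j hj h
    have := hc.injOn (hfm i hi) (hfm j hj) h
    simp only [hf] at this
    split_ifs at this <;> omega
  · simp only [Function.comp_apply, hf]
    rcases lt_trichotomy i a with hia | rfl | hia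
    · simpa [hia.le, Nat.succ_le_of_lt hia] using hc.adj i (by omega)
    · simp only [le_refl, if_true, show ¬ i + 1 ≤ i by omega, if_false,
        show i + 1 + (b - i) = b + 1 by omega]
      refine (blowup_adj_of_adj_of_eq (hc.adj b hbm).symm hp.symm fun h => ?_).symm
      by_cases hb : b + 1 < m
      · have := hc.injOn hb (by simp only [mem_Iio]; omega) h
        omega
      · rw [show b + 1 = m by omega, hc.closed] at h
        have := hc.injOn (by simp only [mem_Iio]; omega) (by simp only [mem_Iio]; omega) h
        omega
    · simpa [show ¬ i ≤ a by omega, show ¬ i + 1 ≤ a by omega, add_right_comm i 1]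
        using hc.adj (i + (b - a)) (by omega)
  · simp only [Function.comp_apply, hf, show ¬ m - (b - a) ≤ a by omega, if_false,
      show m - (b - a) + (b - a) = m by omega, hc.closed, zero_le, if_true]
  · ext x
    simp only [mem_image, mem_Iio, mem_union, mem_Iic, mem_Ioo, Function.comp_apply, hf]
    constructor
    · rintro ⟨i, hi, rfl⟩
      split_ifs with hia
      · exact ⟨i, Or.inl hia, rfl⟩
      · exact ⟨i + (b - a), Or.inr ⟨by omega, by omega⟩, rfl⟩
    · rintro ⟨j, hj | hj, rfl⟩
      · exact ⟨j, by omega, by simp [hj]⟩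
      · exact ⟨j - (b - a), by omega, by
          simp [show ¬ j - (b - a) ≤ a by omega, show j - (b - a) + (b - a) = j by omega]⟩

lemma exists_fibre_pair (hgirth : ∀ m c, IsCycleSeq H m c → g < m)
    (hc : IsCycleSeq (H.blowup p) m c) (hmg : m ≤ g) :
    ∃ a b, a < b ∧ b < m ∧ p (c a) = p (c b) := by
  by_contra! h
  refine (hgirth m _ (hc.map_blowup fun i hi j hj hij => ?_)).not_ge hmg
  rcases lt_trichotomy i j with hij' | rfl | hij'
  · exact absurd hij (h i j hij' hj)
  · rfl
  · exact absurd hij.symm (h j i hij' hi)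

theorem preimage_image_subset
    (hfib : ∀ x y z, p x = p y → p x = p z → x = y ∨ x = z ∨ y = z)
    (hind : H.IsIndepSet {u | (p ⁻¹' {u}).Nontrivial})
    (hgirth : ∀ m c, IsCycleSeq H m c → g < m)
    (hc : IsCycleSeq (H.blowup p) m c) (hmg : m ≤ g) :
    p ⁻¹' (p '' (c '' Iio m)) ⊆ c '' Iio m := by
  induction m using Nat.strong_induction_on generalizing c with
  | _ m ih =>
  rintro x' ⟨_, ⟨i, hi, rfl⟩, hx'⟩
  by_contra hx'c
  rw [mem_Iio] at hi
  have hne : ∀ j < m, x' ≠ c j := fun j hj h => hx'c ⟨j, hj, h.symm⟩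
  have hsub : ∀ m' d, m' < m → IsCycleSeq (H.blowup p) m' d → c i ∈ d '' Iio m' →
      d '' Iio m' ⊆ c '' Iio m → False := fun m' d hm' hd hid hdc =>
    hx'c (hdc (ih m' hm' hd (by omega) ⟨c i, hid, hx'⟩))
  obtain ⟨a, b, hab, hbm, hpab⟩ := hc.exists_fibre_pair hgirth hmg
  have hcab : c a ≠ c b := hc.injOn.ne (hab.trans hbm) hbm hab.ne
  have hpi : p (c i) ≠ p (c a) := by
    rw [hx']
    exact map_ne_of_fibre hfib hcab hpab (hne a (hab.trans hbm)) (hne b hbm)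
  have hfar : ∀ j < m, ¬ (H.blowup p).Adj (c i) (c j) → j ≠ i + 1 ∧ i ≠ j + 1 := fun j hj hij =>
    ⟨fun h => hij (h ▸ hc.adj i hi), fun h => hij (h ▸ hc.adj j hj).symm⟩
  have ha := hfar a (hab.trans hbm) (not_blowup_adj hind (hne i hi).symm hx' hcab hpab hpi)
  have hb := hfar b hbm
    (not_blowup_adj hind (hne i hi).symm hx' hcab.symm hpab.symm (hpab ▸ hpi))
  have hia : i ≠ a := fun h => hpi (h ▸ rfl)
  have hib : i ≠ b := fun h => hpi (h ▸ hpab.symm)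
  -- `c i` is adjacent to neither twin, so the arc through `c i` has length at least `3`.
  rcases lt_or_gt_of_ne hia with hia | hia
  · obtain ⟨d, hd, hdim⟩ := hc.exists_excise hab hbm hpab (by omega)
    refine hsub _ d (by omega) hd ?_ ?_ <;> rw [hdim]
    · exact ⟨i, Or.inl hia.le, rfl⟩
    · exact image_mono fun j hj => by simp only [mem_union, mem_Iic, mem_Ioo] at hj; simp; omega
  rcases lt_or_gt_of_ne hib with hib | hib
  · obtain ⟨d, hd, hdim⟩ := hc.exists_truncate hab hbm hpab (by omega)
    refine hsub _ d (by omega) hd ?_ ?_ <;> rw [hdim]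
    · exact ⟨i, ⟨hia.le, hib⟩, rfl⟩
    · exact image_mono fun j hj => by simp only [mem_Ico] at hj; simp; omega
  · obtain ⟨d, hd, hdim⟩ := hc.exists_excise hab hbm hpab (by omega)
    refine hsub _ d (by omega) hd ?_ ?_ <;> rw [hdim]
    · exact ⟨i, Or.inr ⟨hib, hi⟩, rfl⟩
    · exact image_mono fun j hj => by simp only [mem_union, mem_Iic, mem_Ioo] at hj; simp; omega

theorem length_le_four
    (hfib : ∀ x y z, p x = p y → p x = p z → x = y ∨ x = z ∨ y = z)
    (hind : H.IsIndepSet {u | (p ⁻¹' {u}).Nontrivial})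
    (hgirth : ∀ m c, IsCycleSeq H m c → g < m)
    (hc : IsCycleSeq (H.blowup p) m c) (hmg : m ≤ g) : m ≤ 4 := by
  by_contra! h5
  obtain ⟨a, b, hab, hbm, hpab⟩ := hc.exists_fibre_pair hgirth hmg
  have hsplit : ∀ m' d s, m' < m → IsCycleSeq (H.blowup p) m' d → d '' Iio m' = c '' s →
      s ⊆ Iio m → a ∈ s → b ∉ s → False := fun m' d s hm' hd hds hs has hbs => by
    have := hd.preimage_image_subset hfib hind hgirth (by omega)
      (show c b ∈ p ⁻¹' (p '' (d '' Iio m')) by rw [hds]; exact ⟨c a, mem_image_of_mem c has, hpab⟩)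
    rw [hds, hc.injOn.mem_image_iff hs hbm] at this
    exact hbs this
  by_cases h3 : 3 ≤ b - a
  · obtain ⟨d, hd, hdim⟩ := hc.exists_truncate hab hbm hpab h3
    exact hsplit _ d _ (by omega) hd hdim (fun j hj => by simp only [mem_Ico] at hj; simp; omega)
      (by simp [hab]) (by simp)
  · obtain ⟨d, hd, hdim⟩ := hc.exists_excise hab hbm hpab (by omega)
    exact hsplit _ d _ (by omega) hd hdim
      (fun j hj => by simp only [mem_union, mem_Iic, mem_Ioo] at hj; simp; omega)
      (by simp) (by simp [hab])

end IsCycleSeq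

theorem blowup_cycleFree {g m : ℕ}
    (hfib : ∀ x y z, p x = p y → p x = p z → x = y ∨ x = z ∨ y = z)
    (hind : H.IsIndepSet {u | (p ⁻¹' {u}).Nontrivial})
    (hgirth : ∀ m c, IsCycleSeq H m c → g < m) (h5 : 5 ≤ m) (hmg : m ≤ g) :
    CycleFree (H.blowup p) m := fun _ _ hw hlen =>
  absurd (hw.isCycleSeq.length_le_four hfib hind hgirth (hlen ▸ hmg)) (by omega)

lemma exists_triangle_blowup {x x' y : V} (hxx' : x ≠ x') (hp : p x = p x')
    (hxy : H.Adj (p x) (p y)) :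
    ∃ T : (H.blowup p).Subgraph, Nonempty (cycleGraph 3 ≃g T.coe) ∧ p '' T.verts = {p x, p y} := by
  have hxy' : (H.blowup p).Adj x y := ⟨fun h => hxy.ne (h ▸ rfl), Or.inr hxy⟩
  have hx'y : (H.blowup p).Adj x' y := ⟨fun h => hxy.ne (h ▸ hp), Or.inr (hp ▸ hxy)⟩
  have hadj : ∀ i j : Fin 3, i ≠ j → (H.blowup p).Adj (![x, x', y] i) (![x, x', y] j) := by
    have hxx'' : (H.blowup p).Adj x x' := ⟨hxx', Or.inl hp⟩
    intro i j hij
    fin_cases i <;> fin_cases j <;> simp_all [Adj.symm]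
  let f : Copy (cycleGraph 3) (H.blowup p) :=
    ⟨⟨![x, x', y], fun h => hadj _ _ h.ne⟩, fun i j h => by_contra fun hij => (hadj i j hij).ne h⟩
  refine ⟨f.toSubgraph, ⟨f.isoToSubgraph⟩, ?_⟩
  ext u
  simp only [Copy.toSubgraph, Subgraph.map_verts, Subgraph.verts_top, image_univ, mem_image,
    mem_range, mem_insert_iff, mem_singleton_iff]
  constructor
  · rintro ⟨_, ⟨i, rfl⟩, rfl⟩
    fin_cases i <;> simp [f, hp]
  · rintro (rfl | rfl)
    exacts [⟨x, ⟨0, rfl⟩, rfl⟩, ⟨y, ⟨2, rfl⟩, rfl⟩]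

theorem card_edgeSet_le_copyCount_blowup [Finite V]
    (hedge : ∀ e ∈ H.edgeSet, ∃ x x' y, x ≠ x' ∧ p x = p x' ∧ e = s(p x, p y)) :
    Nat.card H.edgeSet ≤ _root_.copyCount (cycleGraph 3) (H.blowup p) := by
  have hT : ∀ e : H.edgeSet, ∃ T : {T : (H.blowup p).Subgraph // Nonempty (cycleGraph 3 ≃g T.coe)},
      ∀ u, u ∈ p '' T.1.verts ↔ u ∈ (e : Sym2 γ) := by
    rintro ⟨e, he⟩
    obtain ⟨x, x', y, hxx', hp, rfl⟩ := hedge e he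
    obtain ⟨T, hT, hTv⟩ := exists_triangle_blowup hxx' hp he
    exact ⟨⟨T, hT⟩, fun u => by simp [hTv]⟩
  choose T hT using hT
  exact Nat.card_le_card_of_injective T fun e₁ e₂ h =>
    Subtype.ext (Sym2.ext fun u => by rw [← hT, ← hT, h])

section Bipartite

variable {α β : Type*}

theorem IsCycleSeq.lt_length_of_bipartite {l m : ℕ} {H : SimpleGraph (α ⊕ β)} {c : ℕ → α ⊕ β}
    (hα : ∀ a b, ¬ H.Adj (.inl a) (.inl b)) (hβ : ∀ a b, ¬ H.Adj (.inr a) (.inr b))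
    (hcyc : ∀ t, 2 ≤ t → t ≤ l → CycleFree H (2 * t)) (hc : IsCycleSeq H m c) : 2 * l < m := by
  obtain ⟨u, w, hw, rfl⟩ := hc.exists_isCycle
  let col : H.Coloring Bool := Coloring.mk Sum.isLeft fun {u v} h => by
    rcases u with a | b <;> rcases v with a' | b' <;> simp_all
  obtain ⟨t, ht⟩ := (col.even_length_iff_congr w).2 Iff.rfl
  by_contra! hle
  exact hcyc t (by have := hw.three_le_length; omega) (by omega) w hw (by omega)

def forgetCopy : (Bool × α) ⊕ β → α ⊕ β := Sum.map Prod.snd id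

lemma forgetCopy_fibre (x y z : (Bool × α) ⊕ β) (hxy : forgetCopy x = forgetCopy y)
    (hxz : forgetCopy x = forgetCopy z) : x = y ∨ x = z ∨ y = z := by
  rcases x with ⟨_ | _, a⟩ | b <;> rcases y with ⟨_ | _, a'⟩ | b' <;>
    rcases z with ⟨_ | _, a''⟩ | b'' <;> simp_all [forgetCopy]

lemma isIndepSet_forgetCopy {H : SimpleGraph (α ⊕ β)} (hα : ∀ a b, ¬ H.Adj (.inl a) (.inl b)) :
    H.IsIndepSet {u | (forgetCopy ⁻¹' {u}).Nontrivial} := by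
  have hinl : ∀ u : α ⊕ β, (forgetCopy ⁻¹' {u}).Nontrivial → ∃ a, u = .inl a := by
    rintro _ ⟨⟨_, a⟩ | b, rfl, y, hy, hne⟩
    · exact ⟨a, rfl⟩
    · rcases y with ⟨_, a⟩ | b' <;> simp_all [forgetCopy]
  intro u hu v hv _
  obtain ⟨a, rfl⟩ := hinl u hu
  obtain ⟨b, rfl⟩ := hinl v hv
  exact hα a b

lemma exists_forgetCopy_of_mem_edgeSet {H : SimpleGraph (α ⊕ β)}
    (hα : ∀ a b, ¬ H.Adj (.inl a) (.inl b)) (hβ : ∀ a b, ¬ H.Adj (.inr a) (.inr b))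
    {e : Sym2 (α ⊕ β)} (he : e ∈ H.edgeSet) :
    ∃ x x' y, x ≠ x' ∧ forgetCopy x = forgetCopy x' ∧ e = s(forgetCopy x, forgetCopy y) := by
  induction e using Sym2.ind with | _ u v =>
  rcases u with a | b <;> rcases v with a' | b'
  · exact absurd he (hα a a')
  · exact ⟨.inl (false, a), .inl (true, a), .inr b', by simp, rfl, rfl⟩
  · exact ⟨.inl (false, a'), .inl (true, a'), .inr b, by simp, rfl, Sym2.eq_swap⟩
  · exact absurd he (hβ b b')

end Bipartite

end SimpleGraph

lemma exists_card_edgeSet_eq_zBip (n l : ℕ) :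
    ∃ H : SimpleGraph (Fin n ⊕ Fin n), (∀ a b, ¬ H.Adj (.inl a) (.inl b)) ∧
      (∀ a b, ¬ H.Adj (.inr a) (.inr b)) ∧ (∀ t, 2 ≤ t → t ≤ l → CycleFree H (2 * t)) ∧
      zBip n l = Nat.card H.edgeSet := by
  have h : zBip n l ∈ _ := Nat.sSup_mem ⟨0, ⊥, by simp, by simp, fun _ _ _ _ w hw => ?_, by simp⟩
    ⟨Nat.card (Sym2 (Fin n ⊕ Fin n)), ?_⟩
  · exact h
  · cases w with
    | nil => exact absurd hw Walk.not_isCycle_nil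
    | cons h _ => exact absurd h (by simp)
  · rintro _ ⟨H, -, -, -, rfl⟩
    exact Nat.card_le_card_of_injective _ Subtype.val_injective

theorem stmt15 (l : ℕ) (hl : 3 ≤ l) (n : ℕ) :
    ∃ G : SimpleGraph (Fin (3 * n)),
      CycleFree G (2 * l) ∧ zBip n l ≤ 2 * _root_.copyCount (cycleGraph 3) G := by
  obtain ⟨H, hα, hβ, hcyc, hz⟩ := exists_card_edgeSet_eq_zBip n l
  let e : (Bool × Fin n) ⊕ Fin n ≃ Fin (3 * n) := Fintype.equivFinOfCardEq (by simp; ring)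
  refine ⟨H.blowup (forgetCopy ∘ e.symm), blowup_cycleFree ?_ ?_
    (fun _ _ hc => hc.lt_length_of_bipartite hα hβ hcyc) (by omega) le_rfl, ?_⟩
  · intro x y z
    simpa using forgetCopy_fibre (e.symm x) (e.symm y) (e.symm z)
  · refine (isIndepSet_forgetCopy hα).mono ?_
    rintro _ ⟨x, rfl, y, hy, hne⟩
    exact ⟨e.symm x, rfl, e.symm y, hy, e.symm.injective.ne hne⟩
  · rw [hz]
    refine (card_edgeSet_le_copyCount_blowup fun E hE => ?_).trans
      (Nat.le_mul_of_pos_left _ two_pos)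
    obtain ⟨x, x', y, hne, hx, rfl⟩ := exists_forgetCopy_of_mem_edgeSet hα hβ hE
    exact ⟨e x, e x', e y, e.injective.ne hne, by simpa, by simp⟩
end
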